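/- arXiv:1605.07814 — 13 statements merged into one kernel-verified Lean document; each statement's English description precedes it below -/
import Mathlib

section
/- Let φ, λ₁, λ₂ : Ω → ℝ be smooth, A = ∂_x + p∂_u + φ∂_p, and Xᵢ = ∂_u + λᵢ∂_p for i = 1,2. Assume [X₁,A] = λ₁·X₁, [X₂,A] = λ₂·X₂, λ₁(q) ≠ λ₂(q) for all q ∈ Ω, and [X₁,X₂] = 0. Then X₁(λ₂) = 0 and X₂(λ₁) = 0 identically on Ω. -/
/- Work on an open set Ω ⊆ ℝ³ with coordinates (x,u,p).  Vector fields are smooth maps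
V : Ω → ℝ³; the Lie bracket is [V,W](q) = DW(q)(V(q)) − DV(q)(W(q)), and V acts on a
smooth function f by V(f)(q) = ∇f(q)·V(q).  The vector field of the ODE u'' = φ(x,u,u')
is A = ∂_x + p∂_u + φ∂_p, i.e. A(q) = (1, p, φ(q)). -/

noncomputable section

/-- The action of a vector field `V` on a function `f`: `V(f)(q) = ∇f(q)·V(q)`. -/
def vact (V : (Fin 3 → ℝ) → (Fin 3 → ℝ)) (f : (Fin 3 → ℝ) → ℝ) (q : Fin 3 → ℝ) : ℝ :=
  fderiv ℝ f q (V q)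

/-- The Lie bracket of two vector fields: `[V,W](q) = DW(q)(V(q)) − DV(q)(W(q))`. -/
def lieB (V W : (Fin 3 → ℝ) → (Fin 3 → ℝ)) (q : Fin 3 → ℝ) : Fin 3 → ℝ :=
  fderiv ℝ W q (V q) - fderiv ℝ V q (W q)

lemma fd_expand (f : (Fin 3 → ℝ) → ℝ) (q : Fin 3 → ℝ) (a b c : ℝ) :
    fderiv ℝ f q ![a, b, c] =
      a * fderiv ℝ f q ![1,0,0] + b * fderiv ℝ f q ![0,1,0] + c * fderiv ℝ f q ![0,0,1] := by
  have h : (![a,b,c] : Fin 3 → ℝ) = a • ![1,0,0] + b • ![0,1,0] + c • ![0,0,1] := by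
    funext i; fin_cases i <;> simp
  rw [h, map_add, map_add, map_smul, map_smul, map_smul, smul_eq_mul, smul_eq_mul, smul_eq_mul]

lemma pd_hasFDerivAt {f : (Fin 3 → ℝ) → ℝ} {q : Fin 3 → ℝ}
    (hf : DifferentiableAt ℝ (fderiv ℝ f) q) (v : Fin 3 → ℝ) :
    HasFDerivAt (fun x => fderiv ℝ f x v)
      ((ContinuousLinearMap.apply ℝ ℝ v).comp (fderiv ℝ (fderiv ℝ f) q)) q :=
  (ContinuousLinearMap.apply ℝ ℝ v).hasFDerivAt.comp q hf.hasFDerivAt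

lemma hasFDerivAt_vfX (g : (Fin 3 → ℝ) → ℝ) {q : Fin 3 → ℝ} (hg : DifferentiableAt ℝ g q) :
    HasFDerivAt (fun q : Fin 3 → ℝ => ![(0:ℝ), 1, g q])
      (ContinuousLinearMap.pi ![0, 0, fderiv ℝ g q]) q := by
  apply hasFDerivAt_pi''
  intro i
  fin_cases i <;> simp [ContinuousLinearMap.proj_pi]
  · exact hasFDerivAt_const _ _
  · exact hasFDerivAt_const _ _
  · exact hg.hasFDerivAt

lemma hasFDerivAt_vfA (g : (Fin 3 → ℝ) → ℝ) {q : Fin 3 → ℝ} (hg : DifferentiableAt ℝ g q) :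
    HasFDerivAt (fun q : Fin 3 → ℝ => ![(1:ℝ), q 2, g q])
      (ContinuousLinearMap.pi ![0, ContinuousLinearMap.proj 2, fderiv ℝ g q]) q := by
  apply hasFDerivAt_pi''
  intro i
  fin_cases i <;> simp [ContinuousLinearMap.proj_pi]
  · exact hasFDerivAt_const _ _
  · exact hasFDerivAt_apply 2 q
  · exact hg.hasFDerivAt

/-- if `(∂_u,λ₁)` and `(∂_u,λ₂)` are λ-symmetries (`[Xᵢ,A] = λᵢ·Xᵢ`),
`λ₁ ≠ λ₂` pointwise on `Ω`, and `[X₁,X₂] = 0`, then `X₁(λ₂) = 0` and `X₂(λ₁) = 0` on `Ω`. -/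
theorem statement1 (Ω : Set (Fin 3 → ℝ)) (hΩ : IsOpen Ω)
    (φ lam₁ lam₂ : (Fin 3 → ℝ) → ℝ)
    (hφ : ContDiffOn ℝ (⊤ : ℕ∞) φ Ω) (hlam₁ : ContDiffOn ℝ (⊤ : ℕ∞) lam₁ Ω)
    (hlam₂ : ContDiffOn ℝ (⊤ : ℕ∞) lam₂ Ω)
    (A X₁ X₂ : (Fin 3 → ℝ) → (Fin 3 → ℝ))
    (hA : A = fun q => ![1, q 2, φ q])
    (hX₁ : X₁ = fun q => ![0, 1, lam₁ q])
    (hX₂ : X₂ = fun q => ![0, 1, lam₂ q])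
    (hsym₁ : ∀ q ∈ Ω, lieB X₁ A q = lam₁ q • X₁ q)
    (hsym₂ : ∀ q ∈ Ω, lieB X₂ A q = lam₂ q • X₂ q)
    (hne : ∀ q ∈ Ω, lam₁ q ≠ lam₂ q)
    (hcomm : ∀ q ∈ Ω, lieB X₁ X₂ q = 0) :
    ∀ q ∈ Ω, vact X₁ lam₂ q = 0 ∧ vact X₂ lam₁ q = 0 := by
  subst hA hX₁ hX₂
  -- basic regularity
  have hct : ∀ {f : (Fin 3 → ℝ) → ℝ}, ContDiffOn ℝ (⊤ : ℕ∞) f Ω → ∀ q ∈ Ω, ContDiffAt ℝ 2 f q :=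
    fun hf q hq => (hf.contDiffAt (hΩ.mem_nhds hq)).of_le (WithTop.coe_le_coe.mpr (le_top : (2 : ℕ∞) ≤ ⊤))
  have hd1 : ∀ {f : (Fin 3 → ℝ) → ℝ}, ContDiffOn ℝ (⊤ : ℕ∞) f Ω → ∀ q ∈ Ω, DifferentiableAt ℝ f q :=
    fun hf q hq => (hct hf q hq).differentiableAt two_ne_zero
  have hd2 : ∀ {f : (Fin 3 → ℝ) → ℝ}, ContDiffOn ℝ (⊤ : ℕ∞) f Ω → ∀ q ∈ Ω,
      DifferentiableAt ℝ (fderiv ℝ f) q :=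
    fun hf q hq => ((hct hf q hq).fderiv_right (m := 1) (by norm_num)).differentiableAt one_ne_zero
  -- the scalar symmetry equation for lam₂  (third component of hsym₂)
  have E2 : ∀ q ∈ Ω, fderiv ℝ φ q ![0,1,0] + lam₂ q * fderiv ℝ φ q ![0,0,1]
      - (fderiv ℝ lam₂ q ![1,0,0] + q 2 * fderiv ℝ lam₂ q ![0,1,0]
          + φ q * fderiv ℝ lam₂ q ![0,0,1])
      - lam₂ q * lam₂ q = 0 := by
    intro q hq
    have h := congrFun (hsym₂ q hq) 2
    simp only [lieB, (hasFDerivAt_vfA φ (hd1 hφ q hq)).fderiv,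
      (hasFDerivAt_vfX lam₂ (hd1 hlam₂ q hq)).fderiv, Pi.sub_apply,
      ContinuousLinearMap.pi_apply, Pi.smul_apply, smul_eq_mul] at h
    simp only [Matrix.cons_val_two, Matrix.tail_cons, Matrix.head_cons] at h
    rw [fd_expand φ q 0 1 (lam₂ q), fd_expand lam₂ q 1 (q 2) (φ q)] at h
    linear_combination h
  have E1 : ∀ q ∈ Ω, fderiv ℝ φ q ![0,1,0] + lam₁ q * fderiv ℝ φ q ![0,0,1]
      - (fderiv ℝ lam₁ q ![1,0,0] + q 2 * fderiv ℝ lam₁ q ![0,1,0]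
          + φ q * fderiv ℝ lam₁ q ![0,0,1])
      - lam₁ q * lam₁ q = 0 := by
    intro q hq
    have h := congrFun (hsym₁ q hq) 2
    simp only [lieB, (hasFDerivAt_vfA φ (hd1 hφ q hq)).fderiv,
      (hasFDerivAt_vfX lam₁ (hd1 hlam₁ q hq)).fderiv, Pi.sub_apply,
      ContinuousLinearMap.pi_apply, Pi.smul_apply, smul_eq_mul] at h
    simp only [Matrix.cons_val_two, Matrix.tail_cons, Matrix.head_cons] at h
    rw [fd_expand φ q 0 1 (lam₁ q), fd_expand lam₁ q 1 (q 2) (φ q)] at h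
    linear_combination h
  -- the scalar commutator equation (third component of hcomm)
  have C0 : ∀ q ∈ Ω, fderiv ℝ lam₂ q ![0,1,0] + lam₁ q * fderiv ℝ lam₂ q ![0,0,1]
      - (fderiv ℝ lam₁ q ![0,1,0] + lam₂ q * fderiv ℝ lam₁ q ![0,0,1]) = 0 := by
    intro q hq
    have h := congrFun (hcomm q hq) 2
    simp only [lieB, (hasFDerivAt_vfX lam₂ (hd1 hlam₂ q hq)).fderiv,
      (hasFDerivAt_vfX lam₁ (hd1 hlam₁ q hq)).fderiv, Pi.sub_apply,
      ContinuousLinearMap.pi_apply, Pi.zero_apply] at h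
    simp only [Matrix.cons_val_two, Matrix.tail_cons, Matrix.head_cons] at h
    rw [fd_expand lam₂ q 0 1 (lam₁ q), fd_expand lam₁ q 0 1 (lam₂ q)] at h
    linear_combination h
  -- now work at a fixed point
  intro q hq
  have hdfp := hd2 hφ q hq
  have hdfm := hd2 hlam₁ q hq
  have hdfn := hd2 hlam₂ q hq
  have hp := (hd1 hφ q hq).hasFDerivAt
  have hm := (hd1 hlam₁ q hq).hasFDerivAt
  have hn := (hd1 hlam₂ q hq).hasFDerivAt
  have hq2 : HasFDerivAt (fun q : Fin 3 → ℝ => q 2)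
      (ContinuousLinearMap.proj (R := ℝ) (φ := fun _ : Fin 3 => ℝ) 2) q :=
    hasFDerivAt_apply 2 q
  -- derivative of the F₂ equation
  have hF2 := (((pd_hasFDerivAt hdfp ![0,1,0]).add
      (hn.mul (pd_hasFDerivAt hdfp ![0,0,1]))).sub
      (((pd_hasFDerivAt hdfn ![1,0,0]).add
        (hq2.mul (pd_hasFDerivAt hdfn ![0,1,0]))).add
        (hp.mul (pd_hasFDerivAt hdfn ![0,0,1])))).sub (hn.mul hn)
  have h20 : fderiv ℝ (fun x => fderiv ℝ φ x ![0,1,0] + lam₂ x * fderiv ℝ φ x ![0,0,1]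
      - (fderiv ℝ lam₂ x ![1,0,0] + x 2 * fderiv ℝ lam₂ x ![0,1,0]
          + φ x * fderiv ℝ lam₂ x ![0,0,1])
      - lam₂ x * lam₂ x) q = 0 := by
    have hev : (fun x => fderiv ℝ φ x ![0,1,0] + lam₂ x * fderiv ℝ φ x ![0,0,1]
        - (fderiv ℝ lam₂ x ![1,0,0] + x 2 * fderiv ℝ lam₂ x ![0,1,0]
            + φ x * fderiv ℝ lam₂ x ![0,0,1])
        - lam₂ x * lam₂ x) =ᶠ[nhds q] (fun _ => (0:ℝ)) :=
      Filter.eventuallyEq_of_mem (hΩ.mem_nhds hq) (fun x hx => E2 x hx)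
    rw [hev.fderiv_eq]; exact fderiv_const_apply 0
  have hL2 := hF2.fderiv.symm.trans h20
  have e2u := ContinuousLinearMap.ext_iff.mp hL2 ![0,1,0]
  have e2p := ContinuousLinearMap.ext_iff.mp hL2 ![0,0,1]
  simp only [ContinuousLinearMap.add_apply, ContinuousLinearMap.sub_apply,
    ContinuousLinearMap.smul_apply, ContinuousLinearMap.comp_apply,
    ContinuousLinearMap.apply_apply, ContinuousLinearMap.proj_apply,
    ContinuousLinearMap.zero_apply, smul_eq_mul,
    Matrix.cons_val_zero, Matrix.cons_val_one, Matrix.head_cons,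
    Matrix.cons_val_two, Matrix.tail_cons] at e2u e2p
  -- derivative of the F₁ equation
  have hF1 := (((pd_hasFDerivAt hdfp ![0,1,0]).add
      (hm.mul (pd_hasFDerivAt hdfp ![0,0,1]))).sub
      (((pd_hasFDerivAt hdfm ![1,0,0]).add
        (hq2.mul (pd_hasFDerivAt hdfm ![0,1,0]))).add
        (hp.mul (pd_hasFDerivAt hdfm ![0,0,1])))).sub (hm.mul hm)
  have h10 : fderiv ℝ (fun x => fderiv ℝ φ x ![0,1,0] + lam₁ x * fderiv ℝ φ x ![0,0,1]
      - (fderiv ℝ lam₁ x ![1,0,0] + x 2 * fderiv ℝ lam₁ x ![0,1,0]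
          + φ x * fderiv ℝ lam₁ x ![0,0,1])
      - lam₁ x * lam₁ x) q = 0 := by
    have hev : (fun x => fderiv ℝ φ x ![0,1,0] + lam₁ x * fderiv ℝ φ x ![0,0,1]
        - (fderiv ℝ lam₁ x ![1,0,0] + x 2 * fderiv ℝ lam₁ x ![0,1,0]
            + φ x * fderiv ℝ lam₁ x ![0,0,1])
        - lam₁ x * lam₁ x) =ᶠ[nhds q] (fun _ => (0:ℝ)) :=
      Filter.eventuallyEq_of_mem (hΩ.mem_nhds hq) (fun x hx => E1 x hx)
    rw [hev.fderiv_eq]; exact fderiv_const_apply 0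
  have hL1 := hF1.fderiv.symm.trans h10
  have e1u := ContinuousLinearMap.ext_iff.mp hL1 ![0,1,0]
  have e1p := ContinuousLinearMap.ext_iff.mp hL1 ![0,0,1]
  simp only [ContinuousLinearMap.add_apply, ContinuousLinearMap.sub_apply,
    ContinuousLinearMap.smul_apply, ContinuousLinearMap.comp_apply,
    ContinuousLinearMap.apply_apply, ContinuousLinearMap.proj_apply,
    ContinuousLinearMap.zero_apply, smul_eq_mul,
    Matrix.cons_val_zero, Matrix.cons_val_one, Matrix.head_cons,
    Matrix.cons_val_two, Matrix.tail_cons] at e1u e1p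
  -- derivative of the commutator equation
  have hG := ((pd_hasFDerivAt hdfn ![0,1,0]).add
      (hm.mul (pd_hasFDerivAt hdfn ![0,0,1]))).sub
      ((pd_hasFDerivAt hdfm ![0,1,0]).add
      (hn.mul (pd_hasFDerivAt hdfm ![0,0,1])))
  have h30 : fderiv ℝ (fun x => fderiv ℝ lam₂ x ![0,1,0] + lam₁ x * fderiv ℝ lam₂ x ![0,0,1]
      - (fderiv ℝ lam₁ x ![0,1,0] + lam₂ x * fderiv ℝ lam₁ x ![0,0,1])) q = 0 := by
    have hev : (fun x => fderiv ℝ lam₂ x ![0,1,0] + lam₁ x * fderiv ℝ lam₂ x ![0,0,1]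
        - (fderiv ℝ lam₁ x ![0,1,0] + lam₂ x * fderiv ℝ lam₁ x ![0,0,1]))
        =ᶠ[nhds q] (fun _ => (0:ℝ)) :=
      Filter.eventuallyEq_of_mem (hΩ.mem_nhds hq) (fun x hx => C0 x hx)
    rw [hev.fderiv_eq]; exact fderiv_const_apply 0
  have hL3 := hG.fderiv.symm.trans h30
  have e3x := ContinuousLinearMap.ext_iff.mp hL3 ![1,0,0]
  have e3u := ContinuousLinearMap.ext_iff.mp hL3 ![0,1,0]
  have e3p := ContinuousLinearMap.ext_iff.mp hL3 ![0,0,1]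
  simp only [ContinuousLinearMap.add_apply, ContinuousLinearMap.sub_apply,
    ContinuousLinearMap.smul_apply, ContinuousLinearMap.comp_apply,
    ContinuousLinearMap.apply_apply, ContinuousLinearMap.proj_apply,
    ContinuousLinearMap.zero_apply, smul_eq_mul,
    Matrix.cons_val_zero, Matrix.cons_val_one, Matrix.head_cons,
    Matrix.cons_val_two, Matrix.tail_cons] at e3x e3u e3p
  -- symmetry of second derivatives
  have symp := (hct hφ q hq).isSymmSndFDerivAt minSmoothness_of_isRCLikeNormedField.le
  have symm' := (hct hlam₁ q hq).isSymmSndFDerivAt minSmoothness_of_isRCLikeNormedField.le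
  have symn := (hct hlam₂ q hq).isSymmSndFDerivAt minSmoothness_of_isRCLikeNormedField.le
  have sn_xu := symn.eq ![1,0,0] ![0,1,0]
  have sn_xp := symn.eq ![1,0,0] ![0,0,1]
  have sn_pu := symn.eq ![0,0,1] ![0,1,0]
  have sm_xu := symm'.eq ![1,0,0] ![0,1,0]
  have sm_xp := symm'.eq ![1,0,0] ![0,0,1]
  have sm_pu := symm'.eq ![0,0,1] ![0,1,0]
  have sp_pu := symp.eq ![0,0,1] ![0,1,0]
  -- the key algebraic identity
  have key : (lam₁ q - lam₂ q) *
      (fderiv ℝ lam₂ q ![0,1,0] + lam₁ q * fderiv ℝ lam₂ q ![0,0,1]) = 0 := by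
    linear_combination (e2u + lam₁ q * e2p) - (e1u + lam₂ q * e1p)
      + (e3x + q 2 * e3u + φ q * e3p)
      + (fderiv ℝ lam₂ q ![0,0,1]) * E1 q hq - (fderiv ℝ lam₁ q ![0,0,1]) * E2 q hq
      - (fderiv ℝ φ q ![0,0,1] - 2 * lam₁ q - lam₂ q) * C0 q hq
      - sn_xu - lam₁ q * sn_xp - (φ q - q 2 * lam₁ q) * sn_pu
      + sm_xu + lam₂ q * sm_xp + (φ q - q 2 * lam₂ q) * sm_pu
      - (lam₁ q - lam₂ q) * sp_pu
  have ha : fderiv ℝ lam₂ q ![0,1,0] + lam₁ q * fderiv ℝ lam₂ q ![0,0,1] = 0 := by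
    rcases mul_eq_zero.mp key with h | h
    · exact absurd (sub_eq_zero.mp h) (hne q hq)
    · exact h
  constructor
  · simp only [vact]
    rw [fd_expand lam₂ q 0 1 (lam₁ q)]
    linear_combination ha
  · simp only [vact]
    rw [fd_expand lam₁ q 0 1 (lam₂ q)]
    linear_combination ha - C0 q hq
end
end

section
/- Let λ₁, λ₂ : Ω → ℝ be smooth with λ₁(q) ≠ λ₂(q) for all q ∈ Ω, set Xᵢ = ∂_u + λᵢ∂_p and ρ = (X₁(λ₂) − X₂(λ₁))/(λ₁ − λ₂), and let f₁ : Ω → ℝ be smooth, nowhere vanishing, with X₂(f₁) = ρ·f₁. Then the mixed-partials compatibility condition ∂_p( λ₂/(f₁(λ₂ − λ₁)) ) = −∂_u( 1/(f₁(λ₂ − λ₁)) ) holds on Ω; consequently the system (w₂)_u = λ₂/(f₁(λ₂−λ₁)), (w₂)_p = −1/(f₁(λ₂−λ₁)) is locally solvable for w₂ by quadratures. -/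
/- Work on an open set Ω ⊆ ℝ³ with coordinates (x,u,p) (indices 0,1,2).  A vector field
V acts on a function f by V(f)(q) = ∇f(q)·V(q); for smooth λ, X_λ = ∂_u + λ∂_p is the
vector field q ↦ (0,1,λ(q)). -/

noncomputable section

/-- Partial derivative in the `i`-th coordinate direction (0 = x, 1 = u, 2 = p). -/
def pd (i : Fin 3) (f : (Fin 3 → ℝ) → ℝ) (q : Fin 3 → ℝ) : ℝ :=
  fderiv ℝ f q (Pi.single i 1)

open Metric Set Function intervalIntegral MeasureTheory Filter Asymptotics
open scoped Manifold

namespace S4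

abbrev E3 := Fin 3 → ℝ

/-- The continuous linear map `h ↦ update h i 0`. -/
def updL (i : Fin 3) : E3 →L[ℝ] E3 :=
  ContinuousLinearMap.id ℝ E3 - (ContinuousLinearMap.proj i).smulRight (Pi.single i 1)

lemma updL_apply (i : Fin 3) (h : E3) : updL i h = Function.update h i 0 := by
  funext j
  by_cases hj : j = i
  · subst hj
    simp [updL, ContinuousLinearMap.smulRight_apply]
  · simp [updL, ContinuousLinearMap.smulRight_apply, Function.update_of_ne hj,
      Pi.single_eq_of_ne hj]

lemma update_eq_lin (y : E3) (i : Fin 3) (s : ℝ) :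
    Function.update y i s = updL i y + Pi.single i s := by
  funext j
  by_cases hj : j = i
  · subst hj; simp [updL_apply]
  · simp [updL_apply, Function.update_of_ne hj, Pi.single_eq_of_ne hj]

lemma hasFDerivAt_update (i : Fin 3) (s : ℝ) (y : E3) :
    HasFDerivAt (fun x : E3 => Function.update x i s) (updL i) y := by
  have : (fun x : E3 => Function.update x i s) = fun x => updL i x + Pi.single i s := by
    funext x; exact update_eq_lin x i s
  rw [this]
  exact (updL i).hasFDerivAt.add_const _

lemma contDiff_update (n : WithTop ℕ∞) (i : Fin 3) (s : ℝ) :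
    ContDiff ℝ n (fun x : E3 => Function.update x i s) := by
  have : (fun x : E3 => Function.update x i s) = fun x => updL i x + Pi.single i s := by
    funext x; exact update_eq_lin x i s
  rw [this]
  exact (updL i).contDiff.add contDiff_const

lemma lipschitzWith_update (i : Fin 3) (s : ℝ) :
    LipschitzWith 1 (fun x : E3 => Function.update x i s) := by
  refine LipschitzWith.of_dist_le_mul fun x y => ?_
  rw [NNReal.coe_one, one_mul]
  refine (dist_pi_le_iff dist_nonneg).2 fun j => ?_
  by_cases hj : j = i
  · subst hj; simpa using dist_nonneg
  · simp only [Function.update_of_ne hj]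
    exact dist_le_pi_dist x y j

lemma hasDerivAt_update (q : E3) (i : Fin 3) (s : ℝ) :
    HasDerivAt (fun t : ℝ => Function.update q i t) (Pi.single i 1) s := by
  have : (fun t : ℝ => Function.update q i t) = fun t => updL i q + t • Pi.single i 1 := by
    funext t
    rw [update_eq_lin]
    congr 1
    funext j
    by_cases hj : j = i
    · subst hj; simp
    · simp [Pi.single_eq_of_ne hj]
  rw [this]
  simpa using ((hasDerivAt_id s).smul_const (Pi.single i 1 : E3)).const_add (updL i q)

lemma continuous_update_right (y : E3) (i : Fin 3) :
    Continuous (fun s : ℝ => Function.update y i s) :=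
  continuous_iff_continuousAt.2 fun s => (hasDerivAt_update y i s).continuousAt

lemma updL_single_self (i : Fin 3) : updL i (Pi.single i (1 : ℝ)) = 0 := by
  rw [updL_apply]
  funext j
  by_cases hj : j = i
  · subst hj; simp
  · simp [Function.update_of_ne hj, Pi.single_eq_of_ne hj]

lemma updL_single_ne {i j : Fin 3} (h : i ≠ j) : updL i (Pi.single j (1 : ℝ)) = Pi.single j 1 := by
  rw [updL_apply]
  funext k
  by_cases hk : k = i
  · subst hk
    rw [Function.update_self, Pi.single_eq_of_ne h]
  · rw [Function.update_of_ne hk]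

lemma abs_sub_le_of_uIoc {a b s : ℝ} (hs : s ∈ Set.uIoc a (a + b)) : |s - a| ≤ |b| := by
  rw [Set.uIoc] at hs
  obtain ⟨h1, h2⟩ := hs
  have hmin : a - |b| ≤ min a (a + b) :=
    le_min (by nlinarith [abs_nonneg b]) (by nlinarith [neg_abs_le b])
  have hmax : max a (a + b) ≤ a + |b| :=
    max_le (by nlinarith [abs_nonneg b]) (by nlinarith [le_abs_self b])
  rw [abs_sub_le_iff]
  constructor <;> nlinarith

lemma abs_sub_le_of_uIcc {a b s : ℝ} (hs : s ∈ Set.uIcc a b) : |s - a| ≤ |b - a| := by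
  rw [Set.uIcc] at hs
  obtain ⟨h1, h2⟩ := hs
  have hmin : a - |b - a| ≤ min a b :=
    le_min (by nlinarith [abs_nonneg (b - a)]) (by nlinarith [neg_abs_le (b - a)])
  have hmax : max a b ≤ a + |b - a| :=
    max_le (by nlinarith [abs_nonneg (b - a)]) (by nlinarith [le_abs_self (b - a)])
  rw [abs_sub_le_iff]
  constructor <;> nlinarith

lemma vec3_decomp (a : ℝ) : (![0, 1, a] : Fin 3 → ℝ) = (Pi.single 1 1 : Fin 3 → ℝ) + a • (Pi.single 2 1 : Fin 3 → ℝ) := by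
  funext j
  fin_cases j <;> simp [Pi.single_apply]

/-- Key lemma: derivative of `y ↦ ∫ s in c..y i, φ(update y i s)` for globally
Lipschitz C¹ `φ`. -/
lemma key (φ : E3 → ℝ) (hφ : ContDiff ℝ 1 φ) (K : NNReal) (hLip : LipschitzWith K φ)
    (i : Fin 3) (c : ℝ) (q : E3) :
    HasFDerivAt (fun y : E3 => ∫ s in c..(y i), φ (Function.update y i s))
      ((∫ s in c..(q i), (fderiv ℝ φ (Function.update q i s)).comp (updL i)) +
        φ q • (ContinuousLinearMap.proj i : E3 →L[ℝ] ℝ)) q := by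
  have hφc : Continuous φ := hφ.continuous
  have hcont : ∀ y : E3, Continuous fun s : ℝ => φ (Function.update y i s) :=
    fun y => hφc.comp (continuous_update_right y i)
  have hlipy : ∀ t : ℝ, LipschitzWith K (fun x : E3 => φ (Function.update x i t)) := by
    intro t
    simpa [Function.comp_def] using hLip.comp (lipschitzWith_update i t)
  have hdiffy : ∀ (t : ℝ) (y : E3), HasFDerivAt (fun x : E3 => φ (Function.update x i t))
      ((fderiv ℝ φ (Function.update y i t)).comp (updL i)) y := by
    intro t y
    exact ((hφ.differentiable one_ne_zero _).hasFDerivAt).comp y (hasFDerivAt_update i t y)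
  have hpar : HasFDerivAt (fun y : E3 => ∫ s in c..(q i), φ (Function.update y i s))
      (∫ s in c..(q i), (fderiv ℝ φ (Function.update q i s)).comp (updL i)) q := by
    refine (intervalIntegral.hasFDerivAt_integral_of_dominated_loc_of_lip
      (μ := volume) (s := ball q 1) (bound := fun _ => (K : ℝ)) (ball_mem_nhds q one_pos) ?_ ?_ ?_ ?_ ?_ ?_).2
    · exact Filter.Eventually.of_forall fun y => (hcont y).aestronglyMeasurable
    · exact (hcont q).intervalIntegrable _ _
    · refine Continuous.aestronglyMeasurable ?_
      exact Continuous.clm_comp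
        ((hφ.continuous_fderiv one_ne_zero).comp (continuous_update_right q i)) continuous_const
    · refine Filter.Eventually.of_forall fun t _ => ?_
      have := (hlipy t).lipschitzOnWith (s := ball q 1)
      simpa using this
    · exact intervalIntegrable_const
    · exact Filter.Eventually.of_forall fun t _ => hdiffy t q
  rw [hasFDerivAt_iff_isLittleO_nhds_zero] at hpar ⊢
  set DΦ := ∫ s in c..(q i), (fderiv ℝ φ (Function.update q i s)).comp (updL i) with hDΦ
  have hsplit : ∀ h : E3,
      (∫ s in c..((q + h) i), φ (Function.update (q + h) i s)) -
        (∫ s in c..(q i), φ (Function.update q i s)) -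
        (DΦ + φ q • (ContinuousLinearMap.proj i : E3 →L[ℝ] ℝ)) h =
      ((∫ s in c..(q i), φ (Function.update (q + h) i s)) -
        (∫ s in c..(q i), φ (Function.update q i s)) - DΦ h) +
      (∫ s in (q i)..(q i + h i), (φ (Function.update (q + h) i s) - φ q)) := by
    intro h
    have hint1 : IntervalIntegrable (fun s => φ (Function.update (q + h) i s)) volume c (q i) :=
      (hcont _).intervalIntegrable _ _
    have hint2 : IntervalIntegrable (fun s => φ (Function.update (q + h) i s)) volume
        (q i) (q i + h i) := (hcont _).intervalIntegrable _ _
    have hadd : (∫ s in c..(q i), φ (Function.update (q + h) i s)) +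
        (∫ s in (q i)..(q i + h i), φ (Function.update (q + h) i s)) =
        ∫ s in c..((q + h) i), φ (Function.update (q + h) i s) := by
      rw [show (q + h) i = q i + h i from rfl]
      exact intervalIntegral.integral_add_adjacent_intervals hint1 hint2
    have hsub : (∫ s in (q i)..(q i + h i), (φ (Function.update (q + h) i s) - φ q)) =
        (∫ s in (q i)..(q i + h i), φ (Function.update (q + h) i s)) - h i * φ q := by
      rw [intervalIntegral.integral_sub hint2 intervalIntegrable_const,
        intervalIntegral.integral_const]
      simp [smul_eq_mul]
    rw [hsub, ← hadd]
    simp only [ContinuousLinearMap.add_apply, ContinuousLinearMap.smul_apply,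
      ContinuousLinearMap.proj_apply, smul_eq_mul]
    ring
  have h2 : (fun h : E3 => ∫ s in (q i)..(q i + h i), (φ (Function.update (q + h) i s) - φ q))
      =o[nhds (0 : E3)] (fun h => h) := by
    rw [Asymptotics.isLittleO_iff]
    intro ε hε
    have hK1 : (0:ℝ) < (K : ℝ) + 1 := by positivity
    have hball : Metric.ball (0 : E3) (ε / ((K:ℝ) + 1)) ∈ nhds (0 : E3) :=
      Metric.ball_mem_nhds _ (by positivity)
    filter_upwards [hball] with h hh
    have hnorm : ‖h‖ < ε / ((K:ℝ) + 1) := by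
      simpa [dist_eq_norm] using hh
    have hbd : ∀ s ∈ Set.uIoc (q i) (q i + h i),
        ‖φ (Function.update (q + h) i s) - φ q‖ ≤ (K : ℝ) * ‖h‖ := by
      intro s hs
      have hdist : dist (Function.update (q + h) i s) q ≤ ‖h‖ := by
        refine (dist_pi_le_iff (norm_nonneg h)).2 fun j => ?_
        by_cases hj : j = i
        · subst hj
          simp only [Function.update_self]
          rw [Real.dist_eq]
          exact le_trans (abs_sub_le_of_uIoc hs) (norm_le_pi_norm h j)
        · simp only [Function.update_of_ne hj]
          have : dist ((q + h) j) (q j) = ‖h j‖ := by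
            simp [dist_eq_norm]
          rw [this]
          exact norm_le_pi_norm h j
      calc ‖φ (Function.update (q + h) i s) - φ q‖
          = dist (φ (Function.update (q + h) i s)) (φ q) := by rw [dist_eq_norm]
        _ ≤ (K : ℝ) * dist (Function.update (q + h) i s) q := hLip.dist_le_mul _ _
        _ ≤ (K : ℝ) * ‖h‖ := mul_le_mul_of_nonneg_left hdist K.coe_nonneg
    calc ‖∫ s in (q i)..(q i + h i), (φ (Function.update (q + h) i s) - φ q)‖
        ≤ ((K : ℝ) * ‖h‖) * |(q i + h i) - q i| :=
          intervalIntegral.norm_integral_le_of_norm_le_const hbd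
      _ = ((K : ℝ) * ‖h‖) * |h i| := by ring_nf
      _ ≤ ((K : ℝ) * ‖h‖) * ‖h‖ := by
          refine mul_le_mul_of_nonneg_left ?_ (by positivity)
          simpa [Real.norm_eq_abs] using norm_le_pi_norm h i
      _ ≤ ε * ‖h‖ := by
          refine mul_le_mul_of_nonneg_right ?_ (norm_nonneg h)
          have h4 := (lt_div_iff₀ hK1).1 hnorm
          nlinarith [norm_nonneg h, K.coe_nonneg]
  have h3 := hpar.add h2
  refine h3.congr' (Filter.Eventually.of_forall fun h => (hsplit h).symm)
    (Filter.Eventually.of_forall fun _ => rfl)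

end S4

open S4

/-- with `ρ = (X₁(λ₂) − X₂(λ₁))/(λ₁ − λ₂)` and `f₁` nowhere vanishing with
`X₂(f₁) = ρ·f₁`, the mixed-partials compatibility condition
`∂_p(λ₂/(f₁(λ₂ − λ₁))) = −∂_u(1/(f₁(λ₂ − λ₁)))` holds on `Ω`; consequently the system
`(w₂)_u = λ₂/(f₁(λ₂−λ₁))`, `(w₂)_p = −1/(f₁(λ₂−λ₁))` is locally solvable for `w₂`. -/
theorem statement4 (Ω : Set (Fin 3 → ℝ)) (hΩ : IsOpen Ω)
    (lam₁ lam₂ ρ : (Fin 3 → ℝ) → ℝ)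
    (hlam₁ : ContDiffOn ℝ (⊤ : ℕ∞) lam₁ Ω) (hlam₂ : ContDiffOn ℝ (⊤ : ℕ∞) lam₂ Ω)
    (hne : ∀ q ∈ Ω, lam₁ q ≠ lam₂ q)
    (X₁ X₂ : (Fin 3 → ℝ) → (Fin 3 → ℝ))
    (hX₁ : X₁ = fun q => ![0, 1, lam₁ q])
    (hX₂ : X₂ = fun q => ![0, 1, lam₂ q])
    (hρ : ρ = fun q => (vact X₁ lam₂ q - vact X₂ lam₁ q) / (lam₁ q - lam₂ q))
    (f₁ : (Fin 3 → ℝ) → ℝ) (hf₁ : ContDiffOn ℝ (⊤ : ℕ∞) f₁ Ω)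
    (hf₁0 : ∀ q ∈ Ω, f₁ q ≠ 0)
    (hf₁ρ : ∀ q ∈ Ω, vact X₂ f₁ q = ρ q * f₁ q) :
    (∀ q ∈ Ω,
      pd 2 (fun q' => lam₂ q' / (f₁ q' * (lam₂ q' - lam₁ q'))) q =
        - pd 1 (fun q' => 1 / (f₁ q' * (lam₂ q' - lam₁ q'))) q) ∧
    (∀ q₀ ∈ Ω, ∃ U : Set (Fin 3 → ℝ), IsOpen U ∧ q₀ ∈ U ∧ U ⊆ Ω ∧
      ∃ w₂ : (Fin 3 → ℝ) → ℝ, ∀ q ∈ U,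
        pd 1 w₂ q = lam₂ q / (f₁ q * (lam₂ q - lam₁ q)) ∧
        pd 2 w₂ q = -(1 / (f₁ q * (lam₂ q - lam₁ q)))) := by
  -- notation
  set g : E3 → ℝ := fun q' => f₁ q' * (lam₂ q' - lam₁ q') with hg
  set A : E3 → ℝ := fun q' => lam₂ q' / g q' with hA
  set B : E3 → ℝ := fun q' => -(1 / g q') with hB
  have hg0 : ∀ y ∈ Ω, g y ≠ 0 := fun y hy =>
    mul_ne_zero (hf₁0 y hy) (sub_ne_zero.2 (Ne.symm (hne y hy)))
  -- Part 1
  have part1 : ∀ y ∈ Ω, pd 2 A y = - pd 1 (fun q' => 1 / g q') y := by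
    intro y hy
    have hmem : Ω ∈ nhds y := hΩ.mem_nhds hy
    have h1 : DifferentiableAt ℝ lam₁ y := (hlam₁.contDiffAt hmem).differentiableAt (by simp)
    have h2 : DifferentiableAt ℝ lam₂ y := (hlam₂.contDiffAt hmem).differentiableAt (by simp)
    have hf : DifferentiableAt ℝ f₁ y := (hf₁.contDiffAt hmem).differentiableAt (by simp)
    have hgd : HasFDerivAt g
        (f₁ y • (fderiv ℝ lam₂ y - fderiv ℝ lam₁ y) + (lam₂ y - lam₁ y) • fderiv ℝ f₁ y) y :=
      hf.hasFDerivAt.mul (h2.hasFDerivAt.sub h1.hasFDerivAt)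
    have hgy : g y ≠ 0 := hg0 y hy
    have hinv : HasFDerivAt (fun z => (g z)⁻¹)
        ((-((g y) ^ 2)⁻¹) •
          (f₁ y • (fderiv ℝ lam₂ y - fderiv ℝ lam₁ y) + (lam₂ y - lam₁ y) • fderiv ℝ f₁ y)) y :=
      (hasDerivAt_inv hgy).comp_hasFDerivAt y hgd
    have hA' : HasFDerivAt A
        (lam₂ y • ((-((g y) ^ 2)⁻¹) •
          (f₁ y • (fderiv ℝ lam₂ y - fderiv ℝ lam₁ y) + (lam₂ y - lam₁ y) • fderiv ℝ f₁ y)) +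
          (g y)⁻¹ • fderiv ℝ lam₂ y) y := by
      have heq : A = fun z => lam₂ z * (g z)⁻¹ := by
        funext z; exact div_eq_mul_inv _ _
      rw [heq]
      exact h2.hasFDerivAt.mul hinv
    have hB' : HasFDerivAt (fun q' => 1 / g q')
        ((-((g y) ^ 2)⁻¹) •
          (f₁ y • (fderiv ℝ lam₂ y - fderiv ℝ lam₁ y) + (lam₂ y - lam₁ y) • fderiv ℝ f₁ y)) y := by
      have heq : (fun q' => 1 / g q') = fun z => (g z)⁻¹ := by
        funext z; exact one_div _
      rw [heq]; exact hinv
    rw [pd, pd, hA'.fderiv, hB'.fderiv]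
    simp only [ContinuousLinearMap.add_apply, ContinuousLinearMap.smul_apply,
      ContinuousLinearMap.sub_apply, smul_eq_mul]
    -- scalar identities
    have hfρ' : fderiv ℝ f₁ y (Pi.single 1 1) + lam₂ y * fderiv ℝ f₁ y (Pi.single 2 1) =
        ρ y * f₁ y := by
      have h := hf₁ρ y hy
      simp only [vact, hX₂] at h
      rw [vec3_decomp, map_add, ContinuousLinearMap.map_smul, smul_eq_mul] at h
      exact h
    have hρ' : ρ y * (lam₁ y - lam₂ y) =
        (fderiv ℝ lam₂ y (Pi.single 1 1) + lam₁ y * fderiv ℝ lam₂ y (Pi.single 2 1)) -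
        (fderiv ℝ lam₁ y (Pi.single 1 1) + lam₂ y * fderiv ℝ lam₁ y (Pi.single 2 1)) := by
      have hl : lam₁ y - lam₂ y ≠ 0 := sub_ne_zero.2 (hne y hy)
      rw [hρ]
      simp only [vact, hX₁, hX₂, vec3_decomp, map_add, ContinuousLinearMap.map_smul, smul_eq_mul]
      field_simp
    have hGy : g y = f₁ y * (lam₂ y - lam₁ y) := rfl
    set u1 := fderiv ℝ lam₁ y (Pi.single 1 1)
    set v1 := fderiv ℝ lam₁ y (Pi.single 2 1)
    set u2 := fderiv ℝ lam₂ y (Pi.single 1 1)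
    set v2 := fderiv ℝ lam₂ y (Pi.single 2 1)
    set uf := fderiv ℝ f₁ y (Pi.single 1 1)
    set vf := fderiv ℝ f₁ y (Pi.single 2 1)
    have hfy : f₁ y ≠ 0 := hf₁0 y hy
    have hl : lam₂ y - lam₁ y ≠ 0 := sub_ne_zero.2 (Ne.symm (hne y hy))
    have hN : f₁ y * (u1 - u2 + lam₂ y * v1 - lam₁ y * v2) -
        (lam₂ y - lam₁ y) * (uf + lam₂ y * vf) = 0 := by
      linear_combination (f₁ y) * hρ' - (lam₂ y - lam₁ y) * hfρ'
    show lam₂ y * (-(g y ^ 2)⁻¹ * (f₁ y * (v2 - v1) + (lam₂ y - lam₁ y) * vf)) +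
        (g y)⁻¹ * v2 = -(-(g y ^ 2)⁻¹ * (f₁ y * (u2 - u1) + (lam₂ y - lam₁ y) * uf))
    have hinv2 : (g y)⁻¹ = g y * (g y ^ 2)⁻¹ := by
      rw [pow_two, mul_inv (g y) (g y), ← mul_assoc, mul_inv_cancel₀ hgy, one_mul]
    rw [hinv2, hGy]
    linear_combination ((f₁ y * (lam₂ y - lam₁ y)) ^ 2)⁻¹ * hN
  refine ⟨part1, ?_⟩
  -- Part 2
  intro q₀ hq₀
  obtain ⟨ε, hε, hball⟩ := Metric.nhds_basis_closedBall.mem_iff.1 (hΩ.mem_nhds hq₀)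
  set r : ℝ := ε / 2 with hr
  have hrpos : 0 < r := by positivity
  have hUsub : Metric.ball q₀ r ⊆ Ω := fun y hy =>
    hball (le_of_lt (lt_of_lt_of_le (mem_ball.1 hy) (le_of_lt (half_lt_self hε))))
  -- bump function
  obtain ⟨χ₀, hχ₀0, hχ₀1, -⟩ := exists_contMDiffMap_zero_one_of_isClosed (n := (⊤ : ℕ∞)) (𝓘(ℝ, E3))
    (isOpen_ball (x := q₀) (ε := ε)).isClosed_compl isClosed_closedBall
    (disjoint_compl_left.mono_right (closedBall_subset_ball (half_lt_self hε)))
  set χ : E3 → ℝ := ⇑χ₀ with hχ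
  have hχsm : ContDiff ℝ 1 χ := by
    have := contMDiff_iff_contDiff.1 χ₀.contMDiff
    exact this.of_le (by exact_mod_cast le_top)
  have hχsupp : tsupport χ ⊆ closedBall q₀ ε := by
    refine closure_minimal ?_ isClosed_closedBall
    intro x hx
    by_contra hxb
    have hxball : x ∉ ball q₀ ε := fun hxm => hxb (ball_subset_closedBall hxm)
    exact hx (hχ₀0 hxball)
  have hχ1 : ∀ x ∈ closedBall q₀ r, χ x = 1 := fun x hx => hχ₀1 hx
  -- global smooth compactly supported versions of A and B
  have hAΩ : ContDiffOn ℝ 1 A Ω := by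
    refine ContDiffOn.div (hlam₂.of_le (by simp)) ?_ hg0
    exact (hf₁.of_le (by simp)).mul ((hlam₂.of_le (by simp)).sub (hlam₁.of_le (by simp)))
  have hBΩ : ContDiffOn ℝ 1 B Ω := by
    refine ContDiffOn.neg ?_
    refine ContDiffOn.div contDiffOn_const ?_ hg0
    exact (hf₁.of_le (by simp)).mul ((hlam₂.of_le (by simp)).sub (hlam₁.of_le (by simp)))
  have hbar : ∀ F : E3 → ℝ, ContDiffOn ℝ 1 F Ω → ContDiff ℝ 1 (fun y => χ y * F y) := by
    intro F hF
    rw [contDiff_iff_contDiffAt]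
    intro y
    by_cases hy : y ∈ Ω
    · exact hχsm.contDiffAt.mul (hF.contDiffAt (hΩ.mem_nhds hy))
    · have hyn : y ∉ tsupport χ := fun hmem => hy (hball (hχsupp hmem))
      refine ContDiffAt.congr_of_eventuallyEq (contDiffAt_const (c := 0)) ?_
      filter_upwards [(isClosed_tsupport χ).isOpen_compl.mem_nhds hyn] with z hz
      rw [image_eq_zero_of_notMem_tsupport hz, zero_mul]
  set Abar : E3 → ℝ := fun y => χ y * A y with hAbarDef
  set Bbar : E3 → ℝ := fun y => χ y * B y with hBbarDef
  have hAbar : ContDiff ℝ 1 Abar := hbar A hAΩ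
  have hBbar : ContDiff ℝ 1 Bbar := hbar B hBΩ
  have hsupp : ∀ F : E3 → ℝ, HasCompactSupport (fun y => χ y * F y) := by
    intro F
    refine HasCompactSupport.intro (isCompact_closedBall q₀ ε) fun x hx => ?_
    rw [image_eq_zero_of_notMem_tsupport (fun hmem => hx (hχsupp hmem)), zero_mul]
  obtain ⟨KA, hKA⟩ := hAbar.lipschitzWith_of_hasCompactSupport (hsupp A) one_ne_zero
  obtain ⟨KB, hKB⟩ := hBbar.lipschitzWith_of_hasCompactSupport (hsupp B) one_ne_zero
  -- the potential
  set c₁ : ℝ := q₀ 1 with hc₁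
  set c₂ : ℝ := q₀ 2 with hc₂
  set Abar₀ : E3 → ℝ := fun y => Abar (Function.update y 2 c₂) with hAbar₀Def
  have hAbar₀ : ContDiff ℝ 1 Abar₀ := hAbar.comp (contDiff_update 1 2 c₂)
  have hLipA₀ : LipschitzWith (KA * 1) Abar₀ := hKA.comp (lipschitzWith_update 2 c₂)
  set P : E3 → ℝ := fun y => ∫ t in c₁..(y 1), Abar₀ (Function.update y 1 t) with hPdef
  set G : E3 → ℝ := fun y => ∫ s in c₂..(y 2), Bbar (Function.update y 2 s) with hGdef
  refine ⟨Metric.ball q₀ r, isOpen_ball, mem_ball_self hrpos, hUsub, fun y => P y + G y, ?_⟩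
  intro q hq
  have hqΩ : q ∈ Ω := hUsub hq
  -- derivatives of P and G at q
  have hP := key Abar₀ hAbar₀ (KA * 1) hLipA₀ 1 c₁ q
  have hG := key Bbar hBbar KB hKB 2 c₂ q
  have hw : HasFDerivAt (fun y => P y + G y) _ q := hP.add hG
  -- derivative of Abar₀
  have hAbar₀deriv : ∀ y : E3, fderiv ℝ Abar₀ y =
      (fderiv ℝ Abar (Function.update y 2 c₂)).comp (updL 2) := by
    intro y
    exact (((hAbar.differentiable one_ne_zero _).hasFDerivAt).comp y
      (hasFDerivAt_update 2 c₂ y)).fderiv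
  -- integrability of CLM-valued integrands
  have hintA : IntervalIntegrable
      (fun t => (fderiv ℝ Abar₀ (Function.update q 1 t)).comp (updL 1)) volume c₁ (q 1) := by
    refine Continuous.intervalIntegrable ?_ _ _
    exact Continuous.clm_comp
      ((hAbar₀.continuous_fderiv one_ne_zero).comp (continuous_update_right q 1)) continuous_const
  have hintB : IntervalIntegrable
      (fun s => (fderiv ℝ Bbar (Function.update q 2 s)).comp (updL 2)) volume c₂ (q 2) := by
    refine Continuous.intervalIntegrable ?_ _ _
    exact Continuous.clm_comp
      ((hBbar.continuous_fderiv one_ne_zero).comp (continuous_update_right q 2)) continuous_const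
  -- χ = 1 near points of the ball
  have hχball : ∀ y ∈ Metric.ball q₀ r, ∀ F : E3 → ℝ, (fun z => χ z * F z) =ᶠ[nhds y] F := by
    intro y hy F
    filter_upwards [isOpen_ball.mem_nhds hy] with z hz
    rw [hχ1 z (ball_subset_closedBall hz), one_mul]
  have hAq : Abar q = A q := by
    show χ q * A q = A q
    rw [hχ1 q (ball_subset_closedBall hq), one_mul]
  have hBq : Bbar q = B q := by
    show χ q * B q = B q
    rw [hχ1 q (ball_subset_closedBall hq), one_mul]
  -- membership of the segment
  have hmemseg : ∀ s ∈ Set.uIcc c₂ (q 2), Function.update q 2 s ∈ Metric.ball q₀ r := by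
    intro s hs
    rw [mem_ball]
    refine (dist_pi_lt_iff hrpos).2 fun j => ?_
    by_cases hj : j = 2
    · subst hj
      simp only [Function.update_self]
      rw [Real.dist_eq]
      calc |s - q₀ 2| ≤ |q 2 - q₀ 2| := abs_sub_le_of_uIcc (by rwa [hc₂] at hs)
        _ = dist (q 2) (q₀ 2) := (Real.dist_eq _ _).symm
        _ ≤ dist q q₀ := dist_le_pi_dist q q₀ 2
        _ < r := mem_ball.1 hq
    · simp only [Function.update_of_ne hj]
      exact lt_of_le_of_lt (dist_le_pi_dist q q₀ j) (mem_ball.1 hq)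
  -- compatibility on the ball
  have hcompat : ∀ y ∈ Metric.ball q₀ r,
      fderiv ℝ Bbar y (Pi.single 1 1) = fderiv ℝ Abar y (Pi.single 2 1) := by
    intro y hy
    have hyΩ : y ∈ Ω := hUsub hy
    have h1 : fderiv ℝ Bbar y = fderiv ℝ B y := (hχball y hy B).fderiv_eq
    have h2 : fderiv ℝ Abar y = fderiv ℝ A y := (hχball y hy A).fderiv_eq
    rw [h1, h2]
    have h3 : fderiv ℝ B y = -fderiv ℝ (fun q' => 1 / g q') y := by
      rw [hB]
      exact fderiv_neg
    rw [h3]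
    have := part1 y hyΩ
    rw [pd, pd] at this
    simp only [ContinuousLinearMap.neg_apply]
    linarith [this]
  -- FTC computation
  have hftc : (∫ s in c₂..(q 2), fderiv ℝ Bbar (Function.update q 2 s) (Pi.single 1 1)) =
      Abar q - Abar₀ q := by
    rw [intervalIntegral.integral_congr
      (g := fun s => fderiv ℝ Abar (Function.update q 2 s) (Pi.single 2 1))
      (fun s hs => hcompat _ (hmemseg s hs))]
    have hder : ∀ s ∈ Set.uIcc c₂ (q 2),
        HasDerivAt (fun t => Abar (Function.update q 2 t))
          (fderiv ℝ Abar (Function.update q 2 s) (Pi.single 2 1)) s := fun s _ =>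
      ((hAbar.differentiable one_ne_zero _).hasFDerivAt).comp_hasDerivAt s (S4.hasDerivAt_update q 2 s)
    have hint : IntervalIntegrable
        (fun s => fderiv ℝ Abar (Function.update q 2 s) (Pi.single 2 1)) volume c₂ (q 2) := by
      refine Continuous.intervalIntegrable ?_ _ _
      exact ((hAbar.continuous_fderiv one_ne_zero).comp
        (continuous_update_right q 2)).clm_apply continuous_const
    rw [intervalIntegral.integral_eq_sub_of_hasDerivAt hder hint]
    rw [Function.update_eq_self]
  -- conclude
  constructor
  · -- pd 1
    have : pd 1 (fun y => P y + G y) q = Abar₀ q + (Abar q - Abar₀ q) := by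
      rw [pd, hw.fderiv]
      rw [ContinuousLinearMap.add_apply, ContinuousLinearMap.add_apply,
        ContinuousLinearMap.add_apply]
      rw [ContinuousLinearMap.intervalIntegral_apply hintA _,
        ContinuousLinearMap.intervalIntegral_apply hintB _]
      simp only [ContinuousLinearMap.comp_apply, ContinuousLinearMap.smul_apply,
        ContinuousLinearMap.proj_apply, smul_eq_mul]
      rw [updL_single_self 1, updL_single_ne (show (2:Fin 3) ≠ 1 by decide)]
      simp only [map_zero, intervalIntegral.integral_zero]
      rw [hftc]
      simp [Pi.single_apply]
    rw [this, hAq]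
    show Abar₀ q + (lam₂ q / g q - Abar₀ q) = _
    ring
  · -- pd 2
    have : pd 2 (fun y => P y + G y) q = 0 + Bbar q := by
      rw [pd, hw.fderiv]
      rw [ContinuousLinearMap.add_apply, ContinuousLinearMap.add_apply,
        ContinuousLinearMap.add_apply]
      rw [ContinuousLinearMap.intervalIntegral_apply hintA _,
        ContinuousLinearMap.intervalIntegral_apply hintB _]
      simp only [ContinuousLinearMap.comp_apply, ContinuousLinearMap.smul_apply,
        ContinuousLinearMap.proj_apply, smul_eq_mul]
      rw [updL_single_self 2, updL_single_ne (show (1:Fin 3) ≠ 2 by decide)]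
      simp only [map_zero, intervalIntegral.integral_zero]
      have hz : ∀ t : ℝ, fderiv ℝ Abar₀ (Function.update q 1 t) (Pi.single 2 1) = 0 := by
        intro t
        rw [hAbar₀deriv]
        simp [ContinuousLinearMap.comp_apply, updL_single_self 2]
      simp only [hz, intervalIntegral.integral_zero]
      simp [Pi.single_apply]
    rw [this, hBq]
    rw [zero_add]
end
end

section
/- Let φ, λ₁, λ₂, ρ₁ : Ω → ℝ be smooth, A = ∂_x + p∂_u + φ∂_p, and let Y₁ = f₁·(∂_u + λ₁∂_p) and Y₂ = f₂·(∂_u + λ₂∂_p) for smooth nowhere-vanishing f₁, f₂ (so Y₁ and Y₂ have zero ∂_x-component). Assume [Y₁,A] = ρ₁·Y₁, and let w₂ : Ω → ℝ and φ₂ : Ω' → ℝ (Ω' ⊆ ℝ² open) be smooth with A(w₂)(q) = φ₂(x, w₂(q)), Y₁(w₂) = 1 and Y₂(w₂) = 0 on Ω. If ḡ₁ : Ω' → ℝ is a smooth solution of (ḡ₁)_x + (ḡ₁)_{w₂}·φ₂ = ḡ₁·(φ₂)_{w₂}, then g₁(q) := ḡ₁(x, w₂(q)) satisfies A(g₁)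 = ρ₁·g₁ and Y₂(g₁) = 0 on Ω. -/
/- Work on an open set Ω ⊆ ℝ³ with coordinates (x,u,p) (indices 0,1,2).  Vector fields
are smooth maps V : Ω → ℝ³; the Lie bracket is [V,W](q) = DW(q)(V(q)) − DV(q)(W(q)),
and V acts on f by V(f)(q) = ∇f(q)·V(q).  The vector field of the ODE u'' = φ(x,u,u')
is A(q) = (1, p, φ(q)).  The reduced-space Ω' ⊆ ℝ² has coordinates (x,w₂). -/

noncomputable section

/-- Partial derivative of a function on ℝ² with respect to the first variable (x). -/
def pdx (f : ℝ × ℝ → ℝ) (z : ℝ × ℝ) : ℝ := fderiv ℝ f z (1, 0)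

/-- Partial derivative of a function on ℝ² with respect to the second variable (w₂). -/
def pdw (f : ℝ × ℝ → ℝ) (z : ℝ × ℝ) : ℝ := fderiv ℝ f z (0, 1)

/-- Commutator identity: for a C² function `f` and differentiable vector fields `V, W`,
`V(W(f)) - W(V(f)) = [V,W](f)` at a point. -/
lemma comm_lemma {f : (Fin 3 → ℝ) → ℝ} {V W : (Fin 3 → ℝ) → (Fin 3 → ℝ)} {q : Fin 3 → ℝ}
    (hf : ContDiffAt ℝ 2 f q) (hV : DifferentiableAt ℝ V q) (hW : DifferentiableAt ℝ W q) :
    fderiv ℝ (fun x => fderiv ℝ f x (W x)) q (V q)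
      - fderiv ℝ (fun x => fderiv ℝ f x (V x)) q (W q)
      = fderiv ℝ f q (lieB V W q) := by
  have hDf : DifferentiableAt ℝ (fderiv ℝ f) q :=
    (hf.fderiv_right (m := 1) le_rfl).differentiableAt one_ne_zero
  have h1 := (hDf.hasFDerivAt.clm_apply hW.hasFDerivAt).fderiv
  have h2 := (hDf.hasFDerivAt.clm_apply hV.hasFDerivAt).fderiv
  have hsymm := hf.isSymmSndFDerivAt (by simp [minSmoothness_of_isRCLikeNormedField])
  rw [h1, h2]
  simp only [ContinuousLinearMap.add_apply, ContinuousLinearMap.coe_comp', Function.comp_apply,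
    ContinuousLinearMap.flip_apply]
  rw [hsymm (V q) (W q)]
  have : lieB V W q = fderiv ℝ W q (V q) - fderiv ℝ V q (W q) := rfl
  rw [this, map_sub]
  ring

/-- Differentiability of a vector field given componentwise. -/
lemma diffAt_vec3 {a b c : (Fin 3 → ℝ) → ℝ} {q : Fin 3 → ℝ}
    (ha : DifferentiableAt ℝ a q) (hb : DifferentiableAt ℝ b q)
    (hc : DifferentiableAt ℝ c q) :
    DifferentiableAt ℝ (fun x => ![a x, b x, c x]) q := by
  rw [differentiableAt_pi]
  intro i
  fin_cases i <;> simpa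

/-- if `[Y₁,A] = ρ₁·Y₁`, `A(w₂) = φ₂(x,w₂)`, `Y₁(w₂) = 1`, `Y₂(w₂) = 0`,
and `ḡ₁` solves `(ḡ₁)_x + (ḡ₁)_{w₂}·φ₂ = ḡ₁·(φ₂)_{w₂}` on `Ω'`, then
`g₁(q) = ḡ₁(x, w₂(q))` satisfies `A(g₁) = ρ₁·g₁` and `Y₂(g₁) = 0` on `Ω`. -/
theorem statement5 (Ω : Set (Fin 3 → ℝ)) (hΩ : IsOpen Ω)
    (Ω' : Set (ℝ × ℝ)) (hΩ' : IsOpen Ω')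
    (φ lam₁ lam₂ ρ₁ f₁ f₂ : (Fin 3 → ℝ) → ℝ)
    (hφ : ContDiffOn ℝ (⊤ : ℕ∞) φ Ω) (hlam₁ : ContDiffOn ℝ (⊤ : ℕ∞) lam₁ Ω)
    (hlam₂ : ContDiffOn ℝ (⊤ : ℕ∞) lam₂ Ω) (hρ₁ : ContDiffOn ℝ (⊤ : ℕ∞) ρ₁ Ω)
    (hf₁ : ContDiffOn ℝ (⊤ : ℕ∞) f₁ Ω) (hf₂ : ContDiffOn ℝ (⊤ : ℕ∞) f₂ Ω)
    (hf₁0 : ∀ q ∈ Ω, f₁ q ≠ 0) (hf₂0 : ∀ q ∈ Ω, f₂ q ≠ 0)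
    (A Y₁ Y₂ : (Fin 3 → ℝ) → (Fin 3 → ℝ))
    (hA : A = fun q => ![1, q 2, φ q])
    (hY₁ : Y₁ = fun q => f₁ q • ![0, 1, lam₁ q])
    (hY₂ : Y₂ = fun q => f₂ q • ![0, 1, lam₂ q])
    (hbr : ∀ q ∈ Ω, lieB Y₁ A q = ρ₁ q • Y₁ q)
    (w₂ : (Fin 3 → ℝ) → ℝ) (hw₂ : ContDiffOn ℝ (⊤ : ℕ∞) w₂ Ω)
    (φ₂ : ℝ × ℝ → ℝ) (hφ₂ : ContDiffOn ℝ (⊤ : ℕ∞) φ₂ Ω')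
    (hmem : ∀ q ∈ Ω, (q 0, w₂ q) ∈ Ω')
    (hAw₂ : ∀ q ∈ Ω, vact A w₂ q = φ₂ (q 0, w₂ q))
    (hY₁w₂ : ∀ q ∈ Ω, vact Y₁ w₂ q = 1)
    (hY₂w₂ : ∀ q ∈ Ω, vact Y₂ w₂ q = 0)
    (g₁bar : ℝ × ℝ → ℝ) (hg₁bar : ContDiffOn ℝ (⊤ : ℕ∞) g₁bar Ω')
    (hpde : ∀ z ∈ Ω', pdx g₁bar z + pdw g₁bar z * φ₂ z = g₁bar z * pdw φ₂ z) :
    (∀ q ∈ Ω, vact A (fun q' => g₁bar (q' 0, w₂ q')) q = ρ₁ q * g₁bar (q 0, w₂ q)) ∧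
    (∀ q ∈ Ω, vact Y₂ (fun q' => g₁bar (q' 0, w₂ q')) q = 0) := by
  -- Setup common facts at a point q ∈ Ω.
  have main : ∀ q ∈ Ω,
      (∀ v : Fin 3 → ℝ, fderiv ℝ (fun q' => g₁bar (q' 0, w₂ q')) q v
        = fderiv ℝ g₁bar (q 0, w₂ q) (v 0, fderiv ℝ w₂ q v)) := by
    intro q hq v
    have hΩq : Ω ∈ nhds q := hΩ.mem_nhds hq
    have hw₂d : DifferentiableAt ℝ w₂ q :=
      (hw₂.contDiffAt hΩq).differentiableAt (by simp)
    have hF : HasFDerivAt (fun q' : Fin 3 → ℝ => (q' 0, w₂ q'))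
        (((ContinuousLinearMap.proj 0 : (Fin 3 → ℝ) →L[ℝ] ℝ)).prod (fderiv ℝ w₂ q)) q :=
      HasFDerivAt.prodMk ((ContinuousLinearMap.proj 0 : (Fin 3 → ℝ) →L[ℝ] ℝ)).hasFDerivAt hw₂d.hasFDerivAt
    have hg : DifferentiableAt ℝ g₁bar (q 0, w₂ q) :=
      (hg₁bar.contDiffAt (hΩ'.mem_nhds (hmem q hq))).differentiableAt (by simp)
    have hcd := (hg.hasFDerivAt.comp q hF).fderiv
    show fderiv ℝ (g₁bar ∘ fun q' => (q' 0, w₂ q')) q v = _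
    rw [hcd]
    rfl
  constructor
  · intro q hq
    have hΩq : Ω ∈ nhds q := hΩ.mem_nhds hq
    set z := (q 0, w₂ q) with hz
    have hzΩ' : z ∈ Ω' := hmem q hq
    have hw₂d : DifferentiableAt ℝ w₂ q :=
      (hw₂.contDiffAt hΩq).differentiableAt (by simp)
    -- differentiability of A, Y₁ at q
    have hφd : DifferentiableAt ℝ φ q := (hφ.contDiffAt hΩq).differentiableAt (by simp)
    have hlam₁d : DifferentiableAt ℝ lam₁ q := (hlam₁.contDiffAt hΩq).differentiableAt (by simp)
    have hf₁d : DifferentiableAt ℝ f₁ q := (hf₁.contDiffAt hΩq).differentiableAt (by simp)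
    have hAd : DifferentiableAt ℝ A q := by
      rw [hA]
      exact diffAt_vec3 (differentiableAt_const 1)
        ((ContinuousLinearMap.proj 2 : (Fin 3 → ℝ) →L[ℝ] ℝ)).differentiableAt hφd
    have hY₁d : DifferentiableAt ℝ Y₁ q := by
      rw [hY₁]
      exact hf₁d.smul (diffAt_vec3 (differentiableAt_const 0) (differentiableAt_const 1) hlam₁d)
    -- step 1: ρ₁ q = pdw φ₂ z
    have hw₂2 : ContDiffAt ℝ 2 w₂ q := (hw₂.contDiffAt hΩq).of_le (by exact WithTop.coe_le_coe.mpr (le_top : (2 : ℕ∞) ≤ ⊤))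
    have hcomm := comm_lemma hw₂2 hY₁d hAd
    -- RHS of hcomm
    have hrhs : fderiv ℝ w₂ q (lieB Y₁ A q) = ρ₁ q := by
      rw [hbr q hq, map_smul]
      have : fderiv ℝ w₂ q (Y₁ q) = 1 := hY₁w₂ q hq
      rw [smul_eq_mul, this, mul_one]
    -- first LHS term: Y₁(A(w₂)) = pdw φ₂ z
    have heq1 : (fun x => fderiv ℝ w₂ x (A x)) =ᶠ[nhds q] (fun x => φ₂ (x 0, w₂ x)) := by
      filter_upwards [hΩq] with x hx
      exact hAw₂ x hx
    have hφ₂d : DifferentiableAt ℝ φ₂ z :=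
      (hφ₂.contDiffAt (hΩ'.mem_nhds hzΩ')).differentiableAt (by simp)
    have hF : HasFDerivAt (fun q' : Fin 3 → ℝ => (q' 0, w₂ q'))
        (((ContinuousLinearMap.proj 0 : (Fin 3 → ℝ) →L[ℝ] ℝ)).prod (fderiv ℝ w₂ q)) q :=
      HasFDerivAt.prodMk ((ContinuousLinearMap.proj 0 : (Fin 3 → ℝ) →L[ℝ] ℝ)).hasFDerivAt hw₂d.hasFDerivAt
    have hterm1 : fderiv ℝ (fun x => fderiv ℝ w₂ x (A x)) q (Y₁ q) = pdw φ₂ z := by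
      rw [heq1.fderiv_eq]
      have hcd := (hφ₂d.hasFDerivAt.comp q hF).fderiv
      show fderiv ℝ (φ₂ ∘ fun q' => (q' 0, w₂ q')) q (Y₁ q) = pdw φ₂ z
      rw [hcd]
      have hY₁0 : Y₁ q 0 = 0 := by rw [hY₁]; simp
      have hY₁w : fderiv ℝ w₂ q (Y₁ q) = 1 := hY₁w₂ q hq
      show fderiv ℝ φ₂ z (Y₁ q 0, fderiv ℝ w₂ q (Y₁ q)) = pdw φ₂ z
      rw [hY₁0, hY₁w]
      rfl
    -- second LHS term: A(Y₁(w₂)) = A(1) = 0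
    have heq2 : (fun x => fderiv ℝ w₂ x (Y₁ x)) =ᶠ[nhds q] (fun _ => (1 : ℝ)) := by
      filter_upwards [hΩq] with x hx
      exact hY₁w₂ x hx
    have hterm2 : fderiv ℝ (fun x => fderiv ℝ w₂ x (Y₁ x)) q (A q) = 0 := by
      rw [heq2.fderiv_eq, fderiv_fun_const]
      rfl
    have hρ : ρ₁ q = pdw φ₂ z := by
      rw [← hrhs, ← hcomm, hterm1, hterm2, sub_zero]
    -- step 2: compute A(g₁)
    have hAq0 : A q 0 = 1 := by rw [hA]; simp
    have hAw : fderiv ℝ w₂ q (A q) = φ₂ z := hAw₂ q hq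
    have := main q hq (A q)
    show fderiv ℝ (fun q' => g₁bar (q' 0, w₂ q')) q (A q) = ρ₁ q * g₁bar z
    rw [this, hAq0, hAw]
    have hsplit : ((1 : ℝ), φ₂ z) = (1, 0) + φ₂ z • ((0 : ℝ), (1 : ℝ)) := by
      simp [Prod.ext_iff]
    rw [hsplit, map_add, map_smul, smul_eq_mul]
    have : fderiv ℝ g₁bar z (1, 0) = pdx g₁bar z := rfl
    rw [this]
    have : fderiv ℝ g₁bar z (0, 1) = pdw g₁bar z := rfl
    rw [this, hρ]
    linear_combination hpde z hzΩ'
  · intro q hq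
    have hY₂0 : Y₂ q 0 = 0 := by rw [hY₂]; simp
    have hY₂w : fderiv ℝ w₂ q (Y₂ q) = 0 := hY₂w₂ q hq
    have := main q hq (Y₂ q)
    show fderiv ℝ (fun q' => g₁bar (q' 0, w₂ q')) q (Y₂ q) = 0
    rw [this, hY₂0, hY₂w]
    have : ((0 : ℝ), (0 : ℝ)) = (0 : ℝ × ℝ) := rfl
    rw [this, map_zero]

end
end

section
/- (Theorem 2) Let φ, λ₁, λ₂ : Ω → ℝ be smooth with λ₁(q) ≠ λ₂(q) for all q, A = ∂_x + p∂_u + φ∂_p, Xᵢ = ∂_u + λᵢ∂_p, and assume [X₁,A] = λ₁·X₁ and [X₂,A] = λ₂·X₂. Set ρ = (X₁(λ₂) − X₂(λ₁))/(λ₁ − λ₂). Let f₁, f₂ : Ω → ℝ be smooth, nowhere vanishing, with X₁(f₂) = ρ·f₂ and X₂(f₁) = ρ·f₁, set ρᵢ = λᵢ − A(fᵢ)/fᵢ, and let g₁, g₂ : Ω → ℝ be smooth, nowhere vanishing, with A(g₁) = ρ₁·g₁, X₂(g₁) = 0, A(g₂) = ρ₂·g₂ and X₁(g₂) = 0. Define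 hᵢ = fᵢ·gᵢ and Zᵢ = hᵢ·Xᵢ. Then: (1) A(hᵢ) = λᵢ·hᵢ, so that Zᵢ = hᵢ∂_u + A(hᵢ)∂_p; (2) [Z₁,A] = 0 and [Z₂,A] = 0 (Z₁, Z₂ are generalized symmetries of the ODE); (3) [Z₁,Z₂] = 0. -/
/- Work on an open set Ω ⊆ ℝ³ with coordinates (x,u,p) (indices 0,1,2).  Vector fields
are smooth maps V : Ω → ℝ³; the Lie bracket is [V,W](q) = DW(q)(V(q)) − DV(q)(W(q)),
and V acts on f by V(f)(q) = ∇f(q)·V(q).  The vector field of the ODE u'' = φ(x,u,u')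
is A(q) = (1, p, φ(q)).  A vector field Z is a generalized symmetry when [Z,A] = 0. -/

noncomputable section

lemma hasFDerivAt_vec3 {a b c : (Fin 3 → ℝ) → ℝ} {a' b' c' : (Fin 3 → ℝ) →L[ℝ] ℝ} {q}
    (ha : HasFDerivAt a a' q) (hb : HasFDerivAt b b' q) (hc : HasFDerivAt c c' q) :
    HasFDerivAt (fun q => ![a q, b q, c q]) (ContinuousLinearMap.pi ![a', b', c']) q := by
  rw [hasFDerivAt_pi']
  intro i
  fin_cases i <;> simp [ContinuousLinearMap.proj_pi]
  exacts [ha, hb, hc]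

lemma fderiv_vec3_apply {a b c : (Fin 3 → ℝ) → ℝ} {q}
    (ha : DifferentiableAt ℝ a q) (hb : DifferentiableAt ℝ b q) (hc : DifferentiableAt ℝ c q)
    (v : Fin 3 → ℝ) :
    fderiv ℝ (fun q => ![a q, b q, c q]) q v
      = ![fderiv ℝ a q v, fderiv ℝ b q v, fderiv ℝ c q v] := by
  rw [(hasFDerivAt_vec3 ha.hasFDerivAt hb.hasFDerivAt hc.hasFDerivAt).fderiv]
  funext i
  fin_cases i <;> simp [ContinuousLinearMap.pi_apply]

lemma fderiv_proj2 (q : Fin 3 → ℝ) :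
    fderiv ℝ (fun q : Fin 3 → ℝ => q 2) q = ContinuousLinearMap.proj 2 :=
  (ContinuousLinearMap.proj (R := ℝ) (φ := fun _ : Fin 3 => ℝ) 2).fderiv

lemma clm_smul_vec (F : (Fin 3 → ℝ) →L[ℝ] ℝ) (t l : ℝ) :
    F ![0, t, t * l] = t * F ![0, 1, l] := by
  have h : (![0, t, t * l] : Fin 3 → ℝ) = t • ![0, 1, l] := by
    funext i; fin_cases i <;> simp
  rw [h, map_smul, smul_eq_mul]

lemma fderiv_mul_apply' {f g : (Fin 3 → ℝ) → ℝ} {q} (hf : DifferentiableAt ℝ f q)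
    (hg : DifferentiableAt ℝ g q) (v : Fin 3 → ℝ) :
    fderiv ℝ (fun q => f q * g q) q v = f q * fderiv ℝ g q v + g q * fderiv ℝ f q v := by
  rw [fderiv_fun_mul hf hg]
  simp

/-- Theorem 2: from two non-equivalent λ-symmetries `(∂_u,λ₁)`, `(∂_u,λ₂)`
and functions `f₁,f₂,g₁,g₂` as indicated, the vector fields `Zᵢ = hᵢXᵢ` with `hᵢ = fᵢgᵢ`
satisfy `A(hᵢ) = λᵢhᵢ` (so `Zᵢ = hᵢ∂_u + A(hᵢ)∂_p`), `[Zᵢ,A] = 0` and `[Z₁,Z₂] = 0`. -/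
theorem statement6 (Ω : Set (Fin 3 → ℝ)) (hΩ : IsOpen Ω)
    (φ lam₁ lam₂ : (Fin 3 → ℝ) → ℝ)
    (hφ : ContDiffOn ℝ (⊤ : ℕ∞) φ Ω) (hlam₁ : ContDiffOn ℝ (⊤ : ℕ∞) lam₁ Ω)
    (hlam₂ : ContDiffOn ℝ (⊤ : ℕ∞) lam₂ Ω)
    (hne : ∀ q ∈ Ω, lam₁ q ≠ lam₂ q)
    (A X₁ X₂ : (Fin 3 → ℝ) → (Fin 3 → ℝ))
    (hA : A = fun q => ![1, q 2, φ q])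
    (hX₁ : X₁ = fun q => ![0, 1, lam₁ q])
    (hX₂ : X₂ = fun q => ![0, 1, lam₂ q])
    (hsym₁ : ∀ q ∈ Ω, lieB X₁ A q = lam₁ q • X₁ q)
    (hsym₂ : ∀ q ∈ Ω, lieB X₂ A q = lam₂ q • X₂ q)
    (ρ : (Fin 3 → ℝ) → ℝ)
    (hρ : ρ = fun q => (vact X₁ lam₂ q - vact X₂ lam₁ q) / (lam₁ q - lam₂ q))
    (f₁ f₂ : (Fin 3 → ℝ) → ℝ)
    (hf₁ : ContDiffOn ℝ (⊤ : ℕ∞) f₁ Ω) (hf₂ : ContDiffOn ℝ (⊤ : ℕ∞) f₂ Ω)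
    (hf₁0 : ∀ q ∈ Ω, f₁ q ≠ 0) (hf₂0 : ∀ q ∈ Ω, f₂ q ≠ 0)
    (hf₂ρ : ∀ q ∈ Ω, vact X₁ f₂ q = ρ q * f₂ q)
    (hf₁ρ : ∀ q ∈ Ω, vact X₂ f₁ q = ρ q * f₁ q)
    (ρ₁ ρ₂ : (Fin 3 → ℝ) → ℝ)
    (hρ₁ : ρ₁ = fun q => lam₁ q - vact A f₁ q / f₁ q)
    (hρ₂ : ρ₂ = fun q => lam₂ q - vact A f₂ q / f₂ q)
    (g₁ g₂ : (Fin 3 → ℝ) → ℝ)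
    (hg₁ : ContDiffOn ℝ (⊤ : ℕ∞) g₁ Ω) (hg₂ : ContDiffOn ℝ (⊤ : ℕ∞) g₂ Ω)
    (hg₁0 : ∀ q ∈ Ω, g₁ q ≠ 0) (hg₂0 : ∀ q ∈ Ω, g₂ q ≠ 0)
    (hAg₁ : ∀ q ∈ Ω, vact A g₁ q = ρ₁ q * g₁ q)
    (hX₂g₁ : ∀ q ∈ Ω, vact X₂ g₁ q = 0)
    (hAg₂ : ∀ q ∈ Ω, vact A g₂ q = ρ₂ q * g₂ q)
    (hX₁g₂ : ∀ q ∈ Ω, vact X₁ g₂ q = 0)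
    (h₁ h₂ : (Fin 3 → ℝ) → ℝ)
    (hh₁ : h₁ = fun q => f₁ q * g₁ q) (hh₂ : h₂ = fun q => f₂ q * g₂ q)
    (Z₁ Z₂ : (Fin 3 → ℝ) → (Fin 3 → ℝ))
    (hZ₁ : Z₁ = fun q => h₁ q • X₁ q) (hZ₂ : Z₂ = fun q => h₂ q • X₂ q) :
    (∀ q ∈ Ω, vact A h₁ q = lam₁ q * h₁ q ∧ vact A h₂ q = lam₂ q * h₂ q ∧
      Z₁ q = ![0, h₁ q, vact A h₁ q] ∧ Z₂ q = ![0, h₂ q, vact A h₂ q]) ∧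
    (∀ q ∈ Ω, lieB Z₁ A q = 0 ∧ lieB Z₂ A q = 0) ∧
    (∀ q ∈ Ω, lieB Z₁ Z₂ q = 0) := by
  have hdiff : ∀ (f : (Fin 3 → ℝ) → ℝ), ContDiffOn ℝ (⊤ : ℕ∞) f Ω → ∀ q ∈ Ω, DifferentiableAt ℝ f q :=
    fun f hf q hq => (hf.contDiffAt (hΩ.mem_nhds hq)).differentiableAt (by simp)
  have dφ := hdiff φ hφ
  have dl₁ := hdiff lam₁ hlam₁
  have dl₂ := hdiff lam₂ hlam₂
  have df₁ := hdiff f₁ hf₁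
  have df₂ := hdiff f₂ hf₂
  have dg₁ := hdiff g₁ hg₁
  have dg₂ := hdiff g₂ hg₂
  have dh₁ : ∀ q ∈ Ω, DifferentiableAt ℝ h₁ q := fun q hq =>
    hh₁ ▸ (df₁ q hq).mul (dg₁ q hq)
  have dh₂ : ∀ q ∈ Ω, DifferentiableAt ℝ h₂ q := fun q hq =>
    hh₂ ▸ (df₂ q hq).mul (dg₂ q hq)
  have fdA : ∀ q ∈ Ω, ∀ v, fderiv ℝ A q v = ![0, v 2, fderiv ℝ φ q v] := by
    intro q hq v
    rw [hA, fderiv_vec3_apply (b := fun q => q 2) (differentiableAt_const 1)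
      (by exact (ContinuousLinearMap.proj (R := ℝ) (φ := fun _ : Fin 3 => ℝ)
        2).differentiableAt) (dφ q hq) v]
    simp [fderiv_proj2]
  have fdX₁ : ∀ q ∈ Ω, ∀ v, fderiv ℝ X₁ q v = ![0, 0, fderiv ℝ lam₁ q v] := by
    intro q hq v
    rw [hX₁, fderiv_vec3_apply (differentiableAt_const 0) (differentiableAt_const 1)
      (dl₁ q hq) v]
    simp
  have fdX₂ : ∀ q ∈ Ω, ∀ v, fderiv ℝ X₂ q v = ![0, 0, fderiv ℝ lam₂ q v] := by
    intro q hq v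
    rw [hX₂, fderiv_vec3_apply (differentiableAt_const 0) (differentiableAt_const 1)
      (dl₂ q hq) v]
    simp
  have hZ₁eq : ∀ q, Z₁ q = h₁ q • ![0, 1, lam₁ q] := by
    intro q; rw [hZ₁, hX₁]
  have hZ₂eq : ∀ q, Z₂ q = h₂ q • ![0, 1, lam₂ q] := by
    intro q; rw [hZ₂, hX₂]
  have hZ₁' : Z₁ = fun q => ![0, h₁ q, h₁ q * lam₁ q] := by
    funext q
    rw [hZ₁eq q]
    funext i
    fin_cases i <;> simp
  have hZ₂' : Z₂ = fun q => ![0, h₂ q, h₂ q * lam₂ q] := by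
    funext q
    rw [hZ₂eq q]
    funext i
    fin_cases i <;> simp
  have fdZ₁ : ∀ q ∈ Ω, ∀ v, fderiv ℝ Z₁ q v
      = ![0, fderiv ℝ h₁ q v, fderiv ℝ (fun q => h₁ q * lam₁ q) q v] := by
    intro q hq v
    rw [hZ₁', fderiv_vec3_apply (c := fun q => h₁ q * lam₁ q) (differentiableAt_const 0) (dh₁ q hq)
      ((dh₁ q hq).mul (dl₁ q hq)) v]
    simp
  have fdZ₂ : ∀ q ∈ Ω, ∀ v, fderiv ℝ Z₂ q v
      = ![0, fderiv ℝ h₂ q v, fderiv ℝ (fun q => h₂ q * lam₂ q) q v] := by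
    intro q hq v
    rw [hZ₂', fderiv_vec3_apply (c := fun q => h₂ q * lam₂ q) (differentiableAt_const 0) (dh₂ q hq)
      ((dh₂ q hq).mul (dl₂ q hq)) v]
    simp
  -- A(hᵢ) = λᵢ hᵢ
  have Ah₁ : ∀ q ∈ Ω, fderiv ℝ h₁ q (A q) = lam₁ q * h₁ q := by
    intro q hq
    have e := hAg₁ q hq
    simp only [hρ₁, vact] at e
    rw [hh₁]
    rw [fderiv_mul_apply' (df₁ q hq) (dg₁ q hq), e]
    have h0 := hf₁0 q hq
    field_simp
    ring
  have Ah₂ : ∀ q ∈ Ω, fderiv ℝ h₂ q (A q) = lam₂ q * h₂ q := by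
    intro q hq
    have e := hAg₂ q hq
    simp only [hρ₂, vact] at e
    rw [hh₂]
    rw [fderiv_mul_apply' (df₂ q hq) (dg₂ q hq), e]
    have h0 := hf₂0 q hq
    field_simp
    ring
  -- Xᵢ(hⱼ) = ρ hⱼ
  have X1h₂ : ∀ q ∈ Ω, fderiv ℝ h₂ q ![0, 1, lam₁ q] = ρ q * h₂ q := by
    intro q hq
    have e1 := hf₂ρ q hq
    have e2 := hX₁g₂ q hq
    simp only [vact, hX₁] at e1 e2
    rw [hh₂, fderiv_mul_apply' (df₂ q hq) (dg₂ q hq), e1, e2]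
    ring
  have X2h₁ : ∀ q ∈ Ω, fderiv ℝ h₁ q ![0, 1, lam₂ q] = ρ q * h₁ q := by
    intro q hq
    have e1 := hf₁ρ q hq
    have e2 := hX₂g₁ q hq
    simp only [vact, hX₂] at e1 e2
    rw [hh₁, fderiv_mul_apply' (df₁ q hq) (dg₁ q hq), e2, e1]
    ring
  -- symmetry conditions, component 2
  have sym₁ : ∀ q ∈ Ω,
      fderiv ℝ φ q ![0, 1, lam₁ q] = lam₁ q * lam₁ q + fderiv ℝ lam₁ q (A q) := by
    intro q hq
    have e := congrFun (hsym₁ q hq) 2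
    rw [lieB, Pi.sub_apply, fdA q hq, fdX₁ q hq, hX₁] at e
    simp at e
    linarith [e]
  have sym₂ : ∀ q ∈ Ω,
      fderiv ℝ φ q ![0, 1, lam₂ q] = lam₂ q * lam₂ q + fderiv ℝ lam₂ q (A q) := by
    intro q hq
    have e := congrFun (hsym₂ q hq) 2
    rw [lieB, Pi.sub_apply, fdA q hq, fdX₂ q hq, hX₂] at e
    simp at e
    linarith [e]
  -- ρ relation
  have rel : ∀ q ∈ Ω,
      fderiv ℝ lam₂ q ![0, 1, lam₁ q] - fderiv ℝ lam₁ q ![0, 1, lam₂ q]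
        = ρ q * (lam₁ q - lam₂ q) := by
    intro q hq
    rw [hρ]
    simp only [vact, hX₁, hX₂]
    rw [div_mul_cancel₀ _ (sub_ne_zero.mpr (hne q hq))]
  refine ⟨fun q hq => ?_, fun q hq => ?_, fun q hq => ?_⟩
  · refine ⟨Ah₁ q hq, Ah₂ q hq, ?_, ?_⟩
    · rw [hZ₁']
      simp only [vact, Ah₁ q hq]
      funext i
      fin_cases i <;> simp [mul_comm]
    · rw [hZ₂']
      simp only [vact, Ah₂ q hq]
      funext i
      fin_cases i <;> simp [mul_comm]
  · constructor
    · funext i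
      simp only [lieB, Pi.sub_apply, fdA q hq, fdZ₁ q hq, Pi.zero_apply]
      rw [fderiv_mul_apply' (dh₁ q hq) (dl₁ q hq), hZ₁eq q, map_smul]
      fin_cases i
      · simp
      · simp [Ah₁ q hq]
        ring
      · simp [sym₁ q hq, Ah₁ q hq]
        ring
    · funext i
      simp only [lieB, Pi.sub_apply, fdA q hq, fdZ₂ q hq, Pi.zero_apply]
      rw [fderiv_mul_apply' (dh₂ q hq) (dl₂ q hq), hZ₂eq q, map_smul]
      fin_cases i
      · simp
      · simp [Ah₂ q hq]
        ring
      · simp [sym₂ q hq, Ah₂ q hq]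
        ring
  · funext i
    simp only [lieB, Pi.sub_apply, fdZ₁ q hq, fdZ₂ q hq, Pi.zero_apply]
    rw [fderiv_mul_apply' (dh₂ q hq) (dl₂ q hq),
      fderiv_mul_apply' (dh₁ q hq) (dl₁ q hq), hZ₁eq q, hZ₂eq q]
    fin_cases i
    · simp
    · simp [Matrix.smul_cons]
      simp only [clm_smul_vec, X1h₂ q hq, X2h₁ q hq]
      ring
    · simp [Matrix.smul_cons]
      simp only [clm_smul_vec, X1h₂ q hq, X2h₁ q hq]
      linear_combination h₁ q * h₂ q * rel q hq
end
end

section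
/- Under the hypotheses of Theorem 2 (φ, λ₁, λ₂ smooth with λ₁ ≠ λ₂ pointwise, [Xᵢ,A] = λᵢ·Xᵢ for Xᵢ = ∂_u + λᵢ∂_p, f₁,f₂,g₁,g₂ smooth nowhere vanishing with X₁(f₂) = ρ·f₂, X₂(f₁) = ρ·f₁ for ρ = (X₁(λ₂) − X₂(λ₁))/(λ₁ − λ₂), A(gᵢ) = ρᵢ·gᵢ for ρᵢ = λᵢ − A(fᵢ)/fᵢ, X₂(g₁) = 0, X₁(g₂) = 0, and hᵢ = fᵢgᵢ), set μ₁ = 1/(h₂·(λ₂ − λ₁)). Then the ℝ³-valued map G = ( (λ₁p − φ)·μ₁, −λ₁·μ₁, μ₁ ) is a closed 1-form on Ω, i.e. its Jacobian matrix is symmetric at every point: ∂_u G₁ = ∂_x G₂, ∂_p G₁ = ∂_x G₃ and ∂_p G₂ = ∂_u G₃. Consequently a function I₁ with ∇I₁ = G exists locally and can be found by quadratures. -/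
/- Work on an open set Ω ⊆ ℝ³ with coordinates (x,u,p) (indices 0,1,2).  Vector fields
are smooth maps V : Ω → ℝ³; the Lie bracket is [V,W](q) = DW(q)(V(q)) − DV(q)(W(q)),
and V acts on f by V(f)(q) = ∇f(q)·V(q).  The vector field of the ODE u'' = φ(x,u,u')
is A(q) = (1, p, φ(q)). -/

open Topology Metric MeasureTheory intervalIntegral

noncomputable section

lemma fderiv_mul_apply {E : Type*} [NormedAddCommGroup E] [NormedSpace ℝ E]
    {c d : E → ℝ} {q : E} (hc : DifferentiableAt ℝ c q)
    (hd : DifferentiableAt ℝ d q) (v : E) :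
    fderiv ℝ (fun y => c y * d y) q v = c q * fderiv ℝ d q v + d q * fderiv ℝ c q v := by
  rw [fderiv_fun_mul hc hd]; simp [mul_comm]

lemma fderiv_inv_apply {E : Type*} [NormedAddCommGroup E] [NormedSpace ℝ E]
    {c : E → ℝ} {q : E} (hc : DifferentiableAt ℝ c q)
    (h0 : c q ≠ 0) (v : E) :
    fderiv ℝ (fun y => (c y)⁻¹) q v = -(fderiv ℝ c q v) / (c q)^2 := by
  have h := ((hasFDerivAt_inv' (𝕜 := ℝ) h0).comp q hc.hasFDerivAt).fderiv
  rw [show (fun y => (c y)⁻¹) = Inv.inv ∘ c from rfl, h]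
  simp [ContinuousLinearMap.comp_apply, ContinuousLinearMap.mulLeftRight_apply]
  field_simp

lemma fderiv_sub_apply' {E : Type*} [NormedAddCommGroup E] [NormedSpace ℝ E]
    {c d : E → ℝ} {q : E} (hc : DifferentiableAt ℝ c q)
    (hd : DifferentiableAt ℝ d q) (v : E) :
    fderiv ℝ (fun y => c y - d y) q v = fderiv ℝ c q v - fderiv ℝ d q v := by
  rw [fderiv_fun_sub hc hd]; simp

lemma fderiv_coord_apply (i : Fin 3) (q v : Fin 3 → ℝ) :
    fderiv ℝ (fun y : Fin 3 → ℝ => y i) q v = v i := by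
  have : fderiv ℝ (fun y : Fin 3 → ℝ => y i) q = ContinuousLinearMap.proj i :=
    (hasFDerivAt_apply i q).fderiv
  rw [this]; rfl

lemma clm_decomp (L : (Fin 3 → ℝ) →L[ℝ] ℝ) (w : Fin 3 → ℝ) :
    L w = w 0 * L (Pi.single 0 1) + w 1 * L (Pi.single 1 1) + w 2 * L (Pi.single 2 1) := by
  have hw : w = w 0 • (Pi.single 0 1 : Fin 3 → ℝ) + w 1 • (Pi.single 1 1 : Fin 3 → ℝ)
      + w 2 • (Pi.single 2 1 : Fin 3 → ℝ) := by
    funext j; fin_cases j <;> simp [Pi.single_apply]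
  conv_lhs => rw [hw]
  simp [L.map_add, L.map_smul, smul_eq_mul]

lemma fderiv_vec3_apply2 {c₀ c₁ c₂ : (Fin 3 → ℝ) → ℝ} {q : Fin 3 → ℝ}
    (h₀ : DifferentiableAt ℝ c₀ q) (h₁ : DifferentiableAt ℝ c₁ q)
    (h₂ : DifferentiableAt ℝ c₂ q) (w : Fin 3 → ℝ) :
    fderiv ℝ (fun y => (![c₀ y, c₁ y, c₂ y] : Fin 3 → ℝ)) q w 2 = fderiv ℝ c₂ q w := by
  have key : (fun y => (![c₀ y, c₁ y, c₂ y] : Fin 3 → ℝ))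
      = (fun y j => (![c₀, c₁, c₂] : Fin 3 → ((Fin 3 → ℝ) → ℝ)) j y) := by
    funext y j; fin_cases j <;> rfl
  have hd : ∀ j, DifferentiableAt ℝ ((![c₀, c₁, c₂] : Fin 3 → ((Fin 3 → ℝ) → ℝ)) j) q := by
    intro j; fin_cases j <;> simpa
  rw [key, fderiv_pi hd]
  rfl


def projR (j : Fin 3) : (Fin 3 → ℝ) →L[ℝ] ℝ := ContinuousLinearMap.proj j

lemma projR_apply (j : Fin 3) (w : Fin 3 → ℝ) : projR j w = w j := rfl

lemma norm_projR_le_one (j : Fin 3) : ‖projR j‖ ≤ 1 := by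
  refine ContinuousLinearMap.opNorm_le_bound _ zero_le_one (fun w => ?_)
  rw [one_mul, projR_apply]
  exact norm_le_pi_norm w j

lemma term_bound (j : Fin 3) {c d t M R : ℝ} {L : (Fin 3 → ℝ) →L[ℝ] ℝ}
    (hc : |c| ≤ M) (hL : ‖L‖ ≤ M) (ht : |t| ≤ 1) (hd : |d| ≤ R)
    (hM : 0 ≤ M) (hR : 0 ≤ R) :
    ‖c • projR j + d • (t • L)‖ ≤ M + R * M := by
  have h1 : ‖c • projR j‖ ≤ M := by
    calc ‖c • projR j‖ = ‖c‖ * ‖projR j‖ := norm_smul c (projR j)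
      _ = |c| * ‖projR j‖ := by rw [Real.norm_eq_abs]
      _ ≤ M * 1 := mul_le_mul hc (norm_projR_le_one j) (norm_nonneg _) hM
      _ = M := mul_one M
  have h2 : ‖d • (t • L)‖ ≤ R * M := by
    calc ‖d • (t • L)‖ = ‖d‖ * ‖t • L‖ := norm_smul d (t • L)
      _ = ‖d‖ * (‖t‖ * ‖L‖) := by rw [norm_smul t L]
      _ = |d| * (|t| * ‖L‖) := by rw [Real.norm_eq_abs, Real.norm_eq_abs]
      _ ≤ R * (1 * M) := by
          apply mul_le_mul hd _ (by positivity) hR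
          exact mul_le_mul ht hL (norm_nonneg _) zero_le_one
      _ = R * M := by ring
  exact (norm_add_le _ _).trans (add_le_add h1 h2)

lemma F'_bound {G0 G1 G2 d0 d1 d2 t M R : ℝ} {L0 L1 L2 : (Fin 3 → ℝ) →L[ℝ] ℝ}
    (h0 : |G0| ≤ M) (h1 : |G1| ≤ M) (h2 : |G2| ≤ M)
    (hL0 : ‖L0‖ ≤ M) (hL1 : ‖L1‖ ≤ M) (hL2 : ‖L2‖ ≤ M)
    (ht : |t| ≤ 1) (hd0 : |d0| ≤ R) (hd1 : |d1| ≤ R) (hd2 : |d2| ≤ R)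
    (hM : 0 ≤ M) (hR : 0 ≤ R) :
    ‖(G0 • projR 0 + d0 • (t • L0)) + (G1 • projR 1 + d1 • (t • L1))
      + (G2 • projR 2 + d2 • (t • L2))‖ ≤ 3 * (M + R * M) := by
  have e0 := term_bound 0 h0 hL0 ht hd0 hM hR
  have e1 := term_bound 1 h1 hL1 ht hd1 hM hR
  have e2 := term_bound 2 h2 hL2 ht hd2 hM hR
  have := (norm_add_le _ _).trans (add_le_add ((norm_add_le _ _).trans
    (add_le_add e0 e1)) e2)
  linarith

lemma poincare_local {Ω : Set (Fin 3 → ℝ)} (hΩ : IsOpen Ω)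
    (G : Fin 3 → (Fin 3 → ℝ) → ℝ)
    (hG : ∀ j, ContDiffOn ℝ 1 (G j) Ω)
    (hsym : ∀ i j : Fin 3, ∀ q ∈ Ω, pd i (G j) q = pd j (G i) q)
    {q₀ : Fin 3 → ℝ} (hq₀ : q₀ ∈ Ω) :
    ∃ U : Set (Fin 3 → ℝ), IsOpen U ∧ q₀ ∈ U ∧ U ⊆ Ω ∧
      ∃ I₁ : (Fin 3 → ℝ) → ℝ, ∀ q ∈ U, ∀ i, pd i I₁ q = G i q := by
  obtain ⟨r0, hr0, hball⟩ := Metric.isOpen_iff.1 hΩ q₀ hq₀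
  set r : ℝ := r0 / 2 with hrdef
  have hr : 0 < r := by positivity
  have hKΩ : closedBall q₀ r ⊆ Ω :=
    (closedBall_subset_ball (by rw [hrdef]; linarith)).trans hball
  have hUK : ball q₀ r ⊆ closedBall q₀ r := ball_subset_closedBall
  have hUΩ : ball q₀ r ⊆ Ω := hUK.trans hKΩ
  have hK : IsCompact (closedBall q₀ r) := isCompact_closedBall q₀ r
  have hGc : ∀ j, ContinuousOn (G j) Ω := fun j => (hG j).continuousOn
  have hGdAt : ∀ j, ∀ y ∈ Ω, DifferentiableAt ℝ (G j) y := fun j y hy =>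
    ((hG j).differentiableOn one_ne_zero).differentiableAt (hΩ.mem_nhds hy)
  have hG' : ∀ j, ContinuousOn (fun y => fderiv ℝ (G j) y) Ω := fun j =>
    (hG j).continuousOn_fderiv_of_isOpen hΩ le_rfl
  -- a uniform bound on the closed ball
  obtain ⟨M, hM0, hM⟩ : ∃ M : ℝ, 0 ≤ M ∧ ∀ j, ∀ y ∈ closedBall q₀ r,
      ‖fderiv ℝ (G j) y‖ ≤ M ∧ |G j y| ≤ M := by
    have hj : ∀ j : Fin 3, ContinuousOn (fun y => ‖fderiv ℝ (G j) y‖ + |G j y|)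
        (closedBall q₀ r) := fun j =>
      (((hG' j).mono hKΩ).norm).add (((hGc j).mono hKΩ).abs)
    have hScont : ContinuousOn (fun y => ∑ j : Fin 3, (‖fderiv ℝ (G j) y‖ + |G j y|))
        (closedBall q₀ r) := continuousOn_finset_sum _ (fun j _ => hj j)
    obtain ⟨C, hC⟩ := hK.exists_bound_of_continuousOn hScont
    have hterm : ∀ j, ∀ y ∈ closedBall q₀ r,
        ‖fderiv ℝ (G j) y‖ + |G j y| ≤ ∑ k : Fin 3, (‖fderiv ℝ (G k) y‖ + |G k y|) := by
      intro j y _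
      apply Finset.single_le_sum (f := fun k => ‖fderiv ℝ (G k) y‖ + |G k y|)
      · intro k _; positivity
      · exact Finset.mem_univ j
    refine ⟨C, ?_, ?_⟩
    · have h1 := hterm 0 q₀ (mem_closedBall_self hr.le)
      have h2 := hC q₀ (mem_closedBall_self hr.le)
      have h3 : (0:ℝ) ≤ ‖fderiv ℝ (G 0) q₀‖ + |G 0 q₀| := by positivity
      calc (0:ℝ) ≤ _ := h3
        _ ≤ _ := h1
        _ ≤ ‖∑ k : Fin 3, (‖fderiv ℝ (G k) q₀‖ + |G k q₀|)‖ := le_abs_self _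
        _ ≤ C := h2
    · intro j y hy
      have h1 := hterm j y hy
      have h2 := (le_abs_self _).trans (hC y hy)
      have h3 : ‖fderiv ℝ (G j) y‖ + |G j y| ≤ C := h1.trans h2
      constructor
      · have : (0:ℝ) ≤ |G j y| := abs_nonneg _
        linarith
      · have : (0:ℝ) ≤ ‖fderiv ℝ (G j) y‖ := norm_nonneg _
        linarith
  set γ : (Fin 3 → ℝ) → ℝ → (Fin 3 → ℝ) := fun x t => q₀ + t • (x - q₀) with hγdef
  have hγball : ∀ x ∈ ball q₀ r, ∀ t ∈ Set.Icc (0:ℝ) 1, γ x t ∈ ball q₀ r := by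
    intro x hx t ht
    have : dist (γ x t) q₀ = |t| * ‖x - q₀‖ := by
      rw [hγdef]
      simp [dist_eq_norm, add_sub_cancel_left, norm_smul, Real.norm_eq_abs]
    rw [mem_ball, this]
    have h1 : |t| ≤ 1 := abs_le.2 ⟨by linarith [ht.1], ht.2⟩
    have h2 : ‖x - q₀‖ < r := by rw [← dist_eq_norm]; exact mem_ball.1 hx
    calc |t| * ‖x - q₀‖ ≤ 1 * ‖x - q₀‖ :=
          mul_le_mul_of_nonneg_right h1 (norm_nonneg _)
      _ < r := by linarith
  have hγΩ : ∀ x ∈ ball q₀ r, ∀ t ∈ Set.Icc (0:ℝ) 1, γ x t ∈ Ω := fun x hx t ht =>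
    hUΩ (hγball x hx t ht)
  have hγcont : ∀ x, Continuous (fun t => γ x t) := by
    intro x
    rw [hγdef]
    exact continuous_const.add ((continuous_id.smul continuous_const))
  set F : (Fin 3 → ℝ) → ℝ → ℝ := fun x t =>
    G 0 (γ x t) * (x 0 - q₀ 0) + G 1 (γ x t) * (x 1 - q₀ 1) + G 2 (γ x t) * (x 2 - q₀ 2)
    with hFdef
  set F' : (Fin 3 → ℝ) → ℝ → ((Fin 3 → ℝ) →L[ℝ] ℝ) := fun x t =>
    (G 0 (γ x t) • projR 0
        + (x 0 - q₀ 0) • (t • fderiv ℝ (G 0) (γ x t)))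
      + (G 1 (γ x t) • projR 1
        + (x 1 - q₀ 1) • (t • fderiv ℝ (G 1) (γ x t)))
      + (G 2 (γ x t) • projR 2
        + (x 2 - q₀ 2) • (t • fderiv ℝ (G 2) (γ x t))) with hF'def
  have hGγcont : ∀ j, ∀ x ∈ ball q₀ r, ContinuousOn (fun t => G j (γ x t)) (Set.Icc 0 1) :=
    fun j x hx => (hGc j).comp (hγcont x).continuousOn (fun t ht => hγΩ x hx t ht)
  have hFcont : ∀ x ∈ ball q₀ r, ContinuousOn (fun t => F x t) (Set.Icc 0 1) := by
    intro x hx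
    rw [hFdef]
    exact (((hGγcont 0 x hx).mul continuousOn_const).add
      ((hGγcont 1 x hx).mul continuousOn_const)).add
      ((hGγcont 2 x hx).mul continuousOn_const)
  have hF'cont : ∀ x ∈ ball q₀ r, ContinuousOn (fun t => F' x t) (Set.Icc 0 1) := by
    intro x hx
    rw [hF'def]
    have hD : ∀ j : Fin 3, ContinuousOn (fun t => t • fderiv ℝ (G j) (γ x t))
        (Set.Icc (0:ℝ) 1) := by
      intro j
      exact (continuousOn_id).smul (((hG' j).comp (hγcont x).continuousOn
        (fun t ht => hγΩ x hx t ht)))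
    have T : ∀ j : Fin 3, ContinuousOn (fun t =>
        G j (γ x t) • projR j
          + (x j - q₀ j) • (t • fderiv ℝ (G j) (γ x t))) (Set.Icc (0:ℝ) 1) := fun j =>
      ((hGγcont j x hx).smul continuousOn_const).add ((hD j).const_smul (x j - q₀ j))
    exact ((T 0).add (T 1)).add (T 2)
  -- differentiability of each term in x
  have hγx : ∀ (t : ℝ) (x : Fin 3 → ℝ), HasFDerivAt (fun y => γ y t)
      (t • ContinuousLinearMap.id ℝ (Fin 3 → ℝ)) x := by
    intro t x
    rw [hγdef]
    exact (((hasFDerivAt_id x).sub_const q₀).const_smul t).const_add q₀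
  have hcomp_eq : ∀ (t : ℝ) (y : Fin 3 → ℝ) (L : (Fin 3 → ℝ) →L[ℝ] ℝ),
      L.comp (t • ContinuousLinearMap.id ℝ (Fin 3 → ℝ)) = t • L := by
    intro t y L
    ext w
    simp
  have hdiffF : ∀ t ∈ Set.Icc (0:ℝ) 1, ∀ x ∈ ball q₀ r,
      HasFDerivAt (fun y => F y t) (F' x t) x := by
    intro t ht x hx
    have hterm : ∀ j : Fin 3, HasFDerivAt (fun y => G j (γ y t) * (y j - q₀ j))
        (G j (γ x t) • projR j
          + (x j - q₀ j) • (t • fderiv ℝ (G j) (γ x t))) x := by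
      intro j
      have hc : HasFDerivAt (fun y => G j (γ y t)) (t • fderiv ℝ (G j) (γ x t)) x := by
        have := ((hGdAt j (γ x t) (hγΩ x hx t ht)).hasFDerivAt).comp x (hγx t x)
        rwa [hcomp_eq t x] at this
      have hd : HasFDerivAt (fun y : Fin 3 → ℝ => y j - q₀ j)
          (projR j) x :=
        (hasFDerivAt_apply j x).sub_const (q₀ j)
      exact hc.mul hd
    exact ((hterm 0).add (hterm 1)).add (hterm 2)
  -- the potential
  set I₁ : (Fin 3 → ℝ) → ℝ := fun x => ∫ t in (0:ℝ)..1, F x t with hI₁def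
  refine ⟨ball q₀ r, isOpen_ball, mem_ball_self hr, hUΩ, I₁, ?_⟩
  intro q hqU i
  -- the derivative of I₁ at q
  set ε : ℝ := (r - dist q q₀) / 2 with hεdef
  have hd0 : dist q q₀ < r := mem_ball.1 hqU
  have hε : 0 < ε := by rw [hεdef]; linarith
  have hsubU : ball q ε ⊆ ball q₀ r := by
    intro x hx
    have h1 : dist x q < ε := mem_ball.1 hx
    have h2 : dist x q₀ ≤ dist x q + dist q q₀ := dist_triangle x q q₀
    rw [mem_ball]
    rw [hεdef] at h1
    linarith
  have uIoc01 : Set.uIoc (0:ℝ) 1 = Set.Ioc 0 1 := Set.uIoc_of_le zero_le_one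
  have uIcc01 : Set.uIcc (0:ℝ) 1 = Set.Icc 0 1 := Set.uIcc_of_le zero_le_one
  have IocIcc : Set.Ioc (0:ℝ) 1 ⊆ Set.Icc 0 1 := Set.Ioc_subset_Icc_self
  have hFint : ∀ x ∈ ball q₀ r, IntervalIntegrable (F x) MeasureTheory.volume 0 1 := by
    intro x hx
    apply ContinuousOn.intervalIntegrable
    rw [uIcc01]
    exact hFcont x hx
  have hmain := intervalIntegral.hasFDerivAt_integral_of_dominated_of_fderiv_le
    (𝕜 := ℝ) (μ := MeasureTheory.volume) (F := F) (F' := F') (x₀ := q)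
    (a := 0) (b := 1) (bound := fun _ => 3 * (M + r * M)) (ball_mem_nhds q hε)
    ?meas ?int ?meas' ?bound ?bint ?diff
  case meas =>
    filter_upwards [isOpen_ball.mem_nhds (mem_ball_self hε)] with x hx
    apply ContinuousOn.aestronglyMeasurable ?_ measurableSet_uIoc
    rw [uIoc01]
    exact (hFcont x (hsubU hx)).mono IocIcc
  case int => exact hFint q hqU
  case meas' =>
    apply ContinuousOn.aestronglyMeasurable ?_ measurableSet_uIoc
    rw [uIoc01]
    exact (hF'cont q hqU).mono IocIcc
  case bint => exact intervalIntegrable_const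
  case bound =>
    apply MeasureTheory.ae_of_all
    intro t ht x hx
    rw [uIoc01] at ht
    have htI : t ∈ Set.Icc (0:ℝ) 1 := IocIcc ht
    have hxU : x ∈ ball q₀ r := hsubU hx
    have hγK : γ x t ∈ closedBall q₀ r := hUK (hγball x hxU t htI)
    have habs : |t| ≤ 1 := abs_le.2 ⟨by linarith [htI.1], htI.2⟩
    have hxj : ∀ j : Fin 3, |x j - q₀ j| ≤ r := by
      intro j
      have h1 : ‖(x - q₀) j‖ ≤ ‖x - q₀‖ := norm_le_pi_norm (x - q₀) j
      have h2 : ‖x - q₀‖ ≤ r := by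
        rw [← dist_eq_norm]
        exact (mem_ball.1 hxU).le
      simp only [Pi.sub_apply, Real.norm_eq_abs] at h1
      linarith
    simp only [hF'def]
    exact F'_bound ((hM 0 _ hγK).2) ((hM 1 _ hγK).2) ((hM 2 _ hγK).2)
      ((hM 0 _ hγK).1) ((hM 1 _ hγK).1) ((hM 2 _ hγK).1)
      habs (hxj 0) (hxj 1) (hxj 2) hM0 hr.le
  case diff =>
    apply MeasureTheory.ae_of_all
    intro t ht x hx
    rw [uIoc01] at ht
    exact hdiffF t (IocIcc ht) x (hsubU hx)
  have hI : HasFDerivAt I₁ (∫ t in (0:ℝ)..1, F' q t) q := hmain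
  have hF'int : IntervalIntegrable (F' q) MeasureTheory.volume 0 1 := by
    apply ContinuousOn.intervalIntegrable
    rw [uIcc01]
    exact hF'cont q hqU
  have happ : pd i I₁ q = ∫ t in (0:ℝ)..1, (F' q t) (Pi.single i 1) := by
    show fderiv ℝ I₁ q (Pi.single i 1) = _
    rw [hI.fderiv]
    exact ContinuousLinearMap.intervalIntegral_apply hF'int (Pi.single i 1)
  have hγq : ∀ t : ℝ, HasDerivAt (fun s => γ q s) (q - q₀) t := by
    intro t
    rw [hγdef]
    have h1 : HasDerivAt (fun s : ℝ => s • (q - q₀)) ((1:ℝ) • (q - q₀)) t :=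
      (hasDerivAt_id t).smul_const (q - q₀)
    rw [one_smul] at h1
    exact h1.const_add q₀
  have hGcomp : ∀ t ∈ Set.Icc (0:ℝ) 1, HasDerivAt (fun s => G i (γ q s))
      (fderiv ℝ (G i) (γ q t) (q - q₀)) t := by
    intro t ht
    exact (hGdAt i _ (hγΩ q hqU t ht)).hasFDerivAt.comp_hasDerivAt t (hγq t)
  have hder : ∀ t ∈ Set.uIcc (0:ℝ) 1, HasDerivAt (fun s => s * G i (γ q s))
      (G i (γ q t) + t * fderiv ℝ (G i) (γ q t) (q - q₀)) t := by
    intro t ht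
    rw [uIcc01] at ht
    have := (hasDerivAt_id' t).fun_mul (hGcomp t ht)
    simpa [add_comm] using this
  have hcontder : ContinuousOn
      (fun t => G i (γ q t) + t * fderiv ℝ (G i) (γ q t) (q - q₀)) (Set.Icc (0:ℝ) 1) := by
    apply (hGγcont i q hqU).add
    apply continuousOn_id.mul
    exact (((hG' i).comp (hγcont q).continuousOn
      (fun t ht => hγΩ q hqU t ht)).clm_apply continuousOn_const)
  have hint2 : IntervalIntegrable
      (fun t => G i (γ q t) + t * fderiv ℝ (G i) (γ q t) (q - q₀))
      MeasureTheory.volume 0 1 := by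
    apply ContinuousOn.intervalIntegrable
    rw [uIcc01]
    exact hcontder
  have hγ1 : γ q 1 = q := by rw [hγdef]; simp
  have hγ0 : γ q 0 = q₀ := by rw [hγdef]; simp
  have hFTC : (∫ t in (0:ℝ)..1, (G i (γ q t) + t * fderiv ℝ (G i) (γ q t) (q - q₀)))
      = G i q := by
    rw [intervalIntegral.integral_eq_sub_of_hasDerivAt hder hint2]
    rw [hγ1]
    ring
  have heq : Set.EqOn (fun t => (F' q t) (Pi.single i 1))
      (fun t => G i (γ q t) + t * fderiv ℝ (G i) (γ q t) (q - q₀)) (Set.uIcc (0:ℝ) 1) := by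
    intro t ht
    rw [uIcc01] at ht
    have hmem : γ q t ∈ Ω := hγΩ q hqU t ht
    have hs : ∀ j : Fin 3, fderiv ℝ (G i) (γ q t) (Pi.single j 1)
        = fderiv ℝ (G j) (γ q t) (Pi.single i 1) := fun j => hsym j i (γ q t) hmem
    simp only [hF'def]
    rw [clm_decomp (fderiv ℝ (G i) (γ q t)) (q - q₀)]
    simp only [ContinuousLinearMap.add_apply, ContinuousLinearMap.smul_apply,
      projR_apply, smul_eq_mul, Pi.sub_apply]
    rw [hs 0, hs 1, hs 2]
    fin_cases i <;> simp [Pi.single_apply] <;> ring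
  calc pd i I₁ q = ∫ t in (0:ℝ)..1, (F' q t) (Pi.single i 1) := happ
    _ = ∫ t in (0:ℝ)..1, (G i (γ q t) + t * fderiv ℝ (G i) (γ q t) (q - q₀)) :=
        intervalIntegral.integral_congr heq
    _ = G i q := hFTC

/-- under the hypotheses of Theorem 2, with `μ₁ = 1/(h₂(λ₂ − λ₁))`, the map
`G = ((λ₁p − φ)μ₁, −λ₁μ₁, μ₁)` is a closed 1-form on `Ω`: `∂_u G₁ = ∂_x G₂`,
`∂_p G₁ = ∂_x G₃`, `∂_p G₂ = ∂_u G₃`; consequently a potential `I₁` with `∇I₁ = G`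
exists locally. -/
theorem statement7 (Ω : Set (Fin 3 → ℝ)) (hΩ : IsOpen Ω)
    (φ lam₁ lam₂ : (Fin 3 → ℝ) → ℝ)
    (hφ : ContDiffOn ℝ (⊤ : ℕ∞) φ Ω) (hlam₁ : ContDiffOn ℝ (⊤ : ℕ∞) lam₁ Ω)
    (hlam₂ : ContDiffOn ℝ (⊤ : ℕ∞) lam₂ Ω)
    (hne : ∀ q ∈ Ω, lam₁ q ≠ lam₂ q)
    (A X₁ X₂ : (Fin 3 → ℝ) → (Fin 3 → ℝ))
    (hA : A = fun q => ![1, q 2, φ q])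
    (hX₁ : X₁ = fun q => ![0, 1, lam₁ q])
    (hX₂ : X₂ = fun q => ![0, 1, lam₂ q])
    (hsym₁ : ∀ q ∈ Ω, lieB X₁ A q = lam₁ q • X₁ q)
    (hsym₂ : ∀ q ∈ Ω, lieB X₂ A q = lam₂ q • X₂ q)
    (ρ : (Fin 3 → ℝ) → ℝ)
    (hρ : ρ = fun q => (vact X₁ lam₂ q - vact X₂ lam₁ q) / (lam₁ q - lam₂ q))
    (f₁ f₂ : (Fin 3 → ℝ) → ℝ)
    (hf₁ : ContDiffOn ℝ (⊤ : ℕ∞) f₁ Ω) (hf₂ : ContDiffOn ℝ (⊤ : ℕ∞) f₂ Ω)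
    (hf₁0 : ∀ q ∈ Ω, f₁ q ≠ 0) (hf₂0 : ∀ q ∈ Ω, f₂ q ≠ 0)
    (hf₂ρ : ∀ q ∈ Ω, vact X₁ f₂ q = ρ q * f₂ q)
    (hf₁ρ : ∀ q ∈ Ω, vact X₂ f₁ q = ρ q * f₁ q)
    (ρ₁ ρ₂ : (Fin 3 → ℝ) → ℝ)
    (hρ₁ : ρ₁ = fun q => lam₁ q - vact A f₁ q / f₁ q)
    (hρ₂ : ρ₂ = fun q => lam₂ q - vact A f₂ q / f₂ q)
    (g₁ g₂ : (Fin 3 → ℝ) → ℝ)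
    (hg₁ : ContDiffOn ℝ (⊤ : ℕ∞) g₁ Ω) (hg₂ : ContDiffOn ℝ (⊤ : ℕ∞) g₂ Ω)
    (hg₁0 : ∀ q ∈ Ω, g₁ q ≠ 0) (hg₂0 : ∀ q ∈ Ω, g₂ q ≠ 0)
    (hAg₁ : ∀ q ∈ Ω, vact A g₁ q = ρ₁ q * g₁ q)
    (hX₂g₁ : ∀ q ∈ Ω, vact X₂ g₁ q = 0)
    (hAg₂ : ∀ q ∈ Ω, vact A g₂ q = ρ₂ q * g₂ q)
    (hX₁g₂ : ∀ q ∈ Ω, vact X₁ g₂ q = 0)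
    (h₁ h₂ : (Fin 3 → ℝ) → ℝ)
    (hh₁ : h₁ = fun q => f₁ q * g₁ q) (hh₂ : h₂ = fun q => f₂ q * g₂ q)
    (μ₁ : (Fin 3 → ℝ) → ℝ)
    (hμ₁ : μ₁ = fun q => 1 / (h₂ q * (lam₂ q - lam₁ q)))
    (G₁ G₂ G₃ : (Fin 3 → ℝ) → ℝ)
    (hG₁ : G₁ = fun q => (lam₁ q * q 2 - φ q) * μ₁ q)
    (hG₂ : G₂ = fun q => -lam₁ q * μ₁ q)
    (hG₃ : G₃ = μ₁) :
    (∀ q ∈ Ω, pd 1 G₁ q = pd 0 G₂ q ∧ pd 2 G₁ q = pd 0 G₃ q ∧ pd 2 G₂ q = pd 1 G₃ q) ∧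
    (∀ q₀ ∈ Ω, ∃ U : Set (Fin 3 → ℝ), IsOpen U ∧ q₀ ∈ U ∧ U ⊆ Ω ∧
      ∃ I₁ : (Fin 3 → ℝ) → ℝ, ∀ q ∈ U,
        pd 0 I₁ q = G₁ q ∧ pd 1 I₁ q = G₂ q ∧ pd 2 I₁ q = G₃ q) := by
  have key : ∀ q ∈ Ω, pd 1 G₁ q = pd 0 G₂ q ∧ pd 2 G₁ q = pd 0 G₃ q ∧ pd 2 G₂ q = pd 1 G₃ q := by
    intro q hq
    have hqn : Ω ∈ 𝓝 q := hΩ.mem_nhds hq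
    have dφ : DifferentiableAt ℝ φ q := (hφ.differentiableOn (by simp)).differentiableAt hqn
    have dl1 : DifferentiableAt ℝ lam₁ q := (hlam₁.differentiableOn (by simp)).differentiableAt hqn
    have dl2 : DifferentiableAt ℝ lam₂ q := (hlam₂.differentiableOn (by simp)).differentiableAt hqn
    have df2 : DifferentiableAt ℝ f₂ q := (hf₂.differentiableOn (by simp)).differentiableAt hqn
    have dg2 : DifferentiableAt ℝ g₂ q := (hg₂.differentiableOn (by simp)).differentiableAt hqn
    have dh2 : DifferentiableAt ℝ h₂ q := by rw [hh₂]; exact df2.mul dg2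
    have hf2q : f₂ q ≠ 0 := hf₂0 q hq
    have hg2q : g₂ q ≠ 0 := hg₂0 q hq
    have hH2val : h₂ q = f₂ q * g₂ q := by rw [hh₂]
    have hHne : h₂ q ≠ 0 := by rw [hH2val]; exact mul_ne_zero hf2q hg2q
    have hD : lam₂ q - lam₁ q ≠ 0 := sub_ne_zero.2 (Ne.symm (hne q hq))
    have hab : lam₁ q - lam₂ q ≠ 0 := sub_ne_zero.2 (hne q hq)
    have hden : h₂ q * (lam₂ q - lam₁ q) ≠ 0 := mul_ne_zero hHne hD
    have dden : DifferentiableAt ℝ (fun y => h₂ y * (lam₂ y - lam₁ y)) q :=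
      dh2.mul (dl2.sub dl1)
    have dμ : DifferentiableAt ℝ μ₁ q := by
      rw [hμ₁]; simp only [one_div]; exact dden.inv hden
    have hm : μ₁ q * (h₂ q * (lam₂ q - lam₁ q)) = 1 := by
      rw [hμ₁]; field_simp
    have hdμ : ∀ v, fderiv ℝ μ₁ q v = -((μ₁ q)^2) *
        ((lam₂ q - lam₁ q) * fderiv ℝ h₂ q v + h₂ q * (fderiv ℝ lam₂ q v - fderiv ℝ lam₁ q v)) := by
      intro v
      rw [hμ₁]
      simp only [one_div]
      rw [fderiv_inv_apply dden hden v, fderiv_mul_apply (d := fun y => lam₂ y - lam₁ y) dh2 (dl2.sub dl1) v,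
        fderiv_sub_apply' dl2 dl1 v]
      field_simp
      ring
    have dcoord2 : DifferentiableAt ℝ (fun y : Fin 3 → ℝ => y 2) q :=
      (hasFDerivAt_apply 2 q).differentiableAt
    have dG1a : DifferentiableAt ℝ (fun y => lam₁ y * y 2 - φ y) q := (dl1.mul dcoord2).sub dφ
    have hdG1 : ∀ v, fderiv ℝ G₁ q v =
        (q 2 * fderiv ℝ lam₁ q v + lam₁ q * v 2 - fderiv ℝ φ q v) * μ₁ q
          + (lam₁ q * q 2 - φ q) * fderiv ℝ μ₁ q v := by
      intro v
      conv_lhs => rw [hG₁]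
      rw [fderiv_mul_apply dG1a dμ v, fderiv_sub_apply' (c := fun y => lam₁ y * y 2) (dl1.mul dcoord2) dφ v,
        fderiv_mul_apply dl1 dcoord2 v, fderiv_coord_apply]
      ring
    have hdG2 : ∀ v, fderiv ℝ G₂ q v =
        -(μ₁ q * fderiv ℝ lam₁ q v) - lam₁ q * fderiv ℝ μ₁ q v := by
      intro v
      conv_lhs => rw [hG₂]
      rw [fderiv_mul_apply (c := fun y => -lam₁ y) dl1.neg dμ v, fderiv_fun_neg]
      simp only [ContinuousLinearMap.neg_apply]
      ring
    -- component-2 extraction for the vector fields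
    have compA2 : ∀ w, fderiv ℝ A q w 2 = fderiv ℝ φ q w := by
      intro w; rw [hA]
      exact fderiv_vec3_apply2 (differentiableAt_const _) dcoord2 dφ w
    have compX₁2 : ∀ w, fderiv ℝ X₁ q w 2 = fderiv ℝ lam₁ q w := by
      intro w; rw [hX₁]
      exact fderiv_vec3_apply2 (differentiableAt_const _) (differentiableAt_const _) dl1 w
    have compX₂2 : ∀ w, fderiv ℝ X₂ q w 2 = fderiv ℝ lam₂ q w := by
      intro w; rw [hX₂]
      exact fderiv_vec3_apply2 (differentiableAt_const _) (differentiableAt_const _) dl2 w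
    -- decompositions of directional derivatives in coordinates
    have decA : ∀ f : (Fin 3 → ℝ) → ℝ, fderiv ℝ f q (A q) = fderiv ℝ f q (Pi.single 0 1)
        + q 2 * fderiv ℝ f q (Pi.single 1 1) + φ q * fderiv ℝ f q (Pi.single 2 1) := by
      intro f
      rw [clm_decomp (fderiv ℝ f q) (A q), hA]
      norm_num
      left; rfl
    have decX₁ : ∀ f : (Fin 3 → ℝ) → ℝ, fderiv ℝ f q (X₁ q) = fderiv ℝ f q (Pi.single 1 1)
        + lam₁ q * fderiv ℝ f q (Pi.single 2 1) := by
      intro f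
      rw [clm_decomp (fderiv ℝ f q) (X₁ q), hX₁]
      norm_num
      left; rfl
    have decX₂ : ∀ f : (Fin 3 → ℝ) → ℝ, fderiv ℝ f q (X₂ q) = fderiv ℝ f q (Pi.single 1 1)
        + lam₂ q * fderiv ℝ f q (Pi.single 2 1) := by
      intro f
      rw [clm_decomp (fderiv ℝ f q) (X₂ q), hX₂]
      norm_num
      left; rfl
    have hX₁2 : X₁ q 2 = lam₁ q := by rw [hX₁]; rfl
    have hX₂2 : X₂ q 2 = lam₂ q := by rw [hX₂]; rfl
    -- the five scalar relations
    have hR1 : fderiv ℝ φ q (Pi.single 1 1) + lam₁ q * fderiv ℝ φ q (Pi.single 2 1)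
        = (fderiv ℝ lam₁ q (Pi.single 0 1) + q 2 * fderiv ℝ lam₁ q (Pi.single 1 1)
          + φ q * fderiv ℝ lam₁ q (Pi.single 2 1)) + lam₁ q * lam₁ q := by
      have h1 := congrFun (hsym₁ q hq) 2
      simp only [lieB, Pi.sub_apply, Pi.smul_apply, smul_eq_mul] at h1
      rw [compA2 (X₁ q), compX₁2 (A q), decX₁ φ, decA lam₁, hX₁2] at h1
      linarith [h1]
    have hR2 : fderiv ℝ φ q (Pi.single 1 1) + lam₂ q * fderiv ℝ φ q (Pi.single 2 1)
        = (fderiv ℝ lam₂ q (Pi.single 0 1) + q 2 * fderiv ℝ lam₂ q (Pi.single 1 1)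
          + φ q * fderiv ℝ lam₂ q (Pi.single 2 1)) + lam₂ q * lam₂ q := by
      have h1 := congrFun (hsym₂ q hq) 2
      simp only [lieB, Pi.sub_apply, Pi.smul_apply, smul_eq_mul] at h1
      rw [compA2 (X₂ q), compX₂2 (A q), decX₂ φ, decA lam₂, hX₂2] at h1
      linarith [h1]
    have hdh2 : ∀ v, fderiv ℝ h₂ q v = f₂ q * fderiv ℝ g₂ q v + g₂ q * fderiv ℝ f₂ q v := by
      intro v
      conv_lhs => rw [hh₂]
      exact fderiv_mul_apply df2 dg2 v
    have hR3 : fderiv ℝ h₂ q (Pi.single 0 1) + q 2 * fderiv ℝ h₂ q (Pi.single 1 1)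
        + φ q * fderiv ℝ h₂ q (Pi.single 2 1) = lam₂ q * h₂ q := by
      have h3 := hAg₂ q hq
      simp only [vact] at h3
      have h4 : fderiv ℝ h₂ q (A q) = lam₂ q * h₂ q := by
        rw [hdh2 (A q), h3, hρ₂, hH2val]
        simp only [vact]
        field_simp
        ring
      rw [decA h₂] at h4
      exact h4
    have hR4 : fderiv ℝ h₂ q (Pi.single 1 1) + lam₁ q * fderiv ℝ h₂ q (Pi.single 2 1)
        = ρ q * h₂ q := by
      have h3 := hX₁g₂ q hq
      have h5 := hf₂ρ q hq
      simp only [vact] at h3 h5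
      have h4 : fderiv ℝ h₂ q (X₁ q) = ρ q * h₂ q := by
        rw [hdh2 (X₁ q), h3, h5, hH2val]
        ring
      rw [decX₁ h₂] at h4
      exact h4
    have hR5 : ρ q * (lam₁ q - lam₂ q)
        = (fderiv ℝ lam₂ q (Pi.single 1 1) + lam₁ q * fderiv ℝ lam₂ q (Pi.single 2 1))
          - (fderiv ℝ lam₁ q (Pi.single 1 1) + lam₂ q * fderiv ℝ lam₁ q (Pi.single 2 1)) := by
      have h5 : ρ q = (fderiv ℝ lam₂ q (X₁ q) - fderiv ℝ lam₁ q (X₂ q)) / (lam₁ q - lam₂ q) := by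
        rw [hρ]; simp only [vact]
      rw [decX₁ lam₂, decX₂ lam₁] at h5
      rw [h5]
      field_simp
    -- scalar forms of the three goals
    have Sγ : -(μ₁ q * fderiv ℝ lam₁ q (Pi.single 2 1)) - lam₁ q * (-((μ₁ q)^2) *
          ((lam₂ q - lam₁ q) * fderiv ℝ h₂ q (Pi.single 2 1)
            + h₂ q * (fderiv ℝ lam₂ q (Pi.single 2 1) - fderiv ℝ lam₁ q (Pi.single 2 1))))
        = -((μ₁ q)^2) * ((lam₂ q - lam₁ q) * fderiv ℝ h₂ q (Pi.single 1 1)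
            + h₂ q * (fderiv ℝ lam₂ q (Pi.single 1 1) - fderiv ℝ lam₁ q (Pi.single 1 1))) := by
      linear_combination ((μ₁ q)^2 * (lam₂ q - lam₁ q)) * hR4 - ((μ₁ q)^2 * h₂ q) * hR5
        + (fderiv ℝ lam₁ q (Pi.single 2 1) * μ₁ q) * hm
    have Sβ : (q 2 * fderiv ℝ lam₁ q (Pi.single 2 1) + lam₁ q - fderiv ℝ φ q (Pi.single 2 1)) * μ₁ q
          + (lam₁ q * q 2 - φ q) * (-((μ₁ q)^2) *
          ((lam₂ q - lam₁ q) * fderiv ℝ h₂ q (Pi.single 2 1)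
            + h₂ q * (fderiv ℝ lam₂ q (Pi.single 2 1) - fderiv ℝ lam₁ q (Pi.single 2 1))))
        = -((μ₁ q)^2) * ((lam₂ q - lam₁ q) * fderiv ℝ h₂ q (Pi.single 0 1)
            + h₂ q * (fderiv ℝ lam₂ q (Pi.single 0 1) - fderiv ℝ lam₁ q (Pi.single 0 1))) := by
      have h' : (lam₂ q - lam₁ q) * ((q 2 * fderiv ℝ lam₁ q (Pi.single 2 1) + lam₁ q
            - fderiv ℝ φ q (Pi.single 2 1)) * μ₁ q
          + (lam₁ q * q 2 - φ q) * (-((μ₁ q)^2) *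
          ((lam₂ q - lam₁ q) * fderiv ℝ h₂ q (Pi.single 2 1)
            + h₂ q * (fderiv ℝ lam₂ q (Pi.single 2 1) - fderiv ℝ lam₁ q (Pi.single 2 1)))))
          = (lam₂ q - lam₁ q) * (-((μ₁ q)^2) * ((lam₂ q - lam₁ q) * fderiv ℝ h₂ q (Pi.single 0 1)
            + h₂ q * (fderiv ℝ lam₂ q (Pi.single 0 1) - fderiv ℝ lam₁ q (Pi.single 0 1)))) := by
        linear_combination (μ₁ q) * hR1 - (μ₁ q) * hR2
          + ((μ₁ q)^2 * (lam₂ q - lam₁ q)^2) * hR3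
          - (μ₁ q * ((fderiv ℝ lam₁ q (Pi.single 0 1) + q 2 * fderiv ℝ lam₁ q (Pi.single 1 1)
              + φ q * fderiv ℝ lam₁ q (Pi.single 2 1))
            - (fderiv ℝ lam₂ q (Pi.single 0 1) + q 2 * fderiv ℝ lam₂ q (Pi.single 1 1)
              + φ q * fderiv ℝ lam₂ q (Pi.single 2 1))
            - lam₂ q * (lam₂ q - lam₁ q))) * hm
          - ((lam₂ q - lam₁ q) * q 2) * Sγ
      exact mul_left_cancel₀ hD h'
    have Sα : (q 2 * fderiv ℝ lam₁ q (Pi.single 1 1) - fderiv ℝ φ q (Pi.single 1 1)) * μ₁ q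
          + (lam₁ q * q 2 - φ q) * (-((μ₁ q)^2) *
          ((lam₂ q - lam₁ q) * fderiv ℝ h₂ q (Pi.single 1 1)
            + h₂ q * (fderiv ℝ lam₂ q (Pi.single 1 1) - fderiv ℝ lam₁ q (Pi.single 1 1))))
        = -(μ₁ q * fderiv ℝ lam₁ q (Pi.single 0 1)) - lam₁ q * (-((μ₁ q)^2) *
          ((lam₂ q - lam₁ q) * fderiv ℝ h₂ q (Pi.single 0 1)
            + h₂ q * (fderiv ℝ lam₂ q (Pi.single 0 1) - fderiv ℝ lam₁ q (Pi.single 0 1)))) := by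
      linear_combination (-(μ₁ q)) * hR1 - lam₁ q * Sβ - (q 2 * lam₁ q - φ q) * Sγ
    have e02 : (Pi.single 0 1 : Fin 3 → ℝ) 2 = 0 := by simp
    have e12 : (Pi.single 1 1 : Fin 3 → ℝ) 2 = 0 := by simp
    have e22 : (Pi.single 2 1 : Fin 3 → ℝ) 2 = 1 := by simp
    refine ⟨?_, ?_, ?_⟩
    · show fderiv ℝ G₁ q (Pi.single 1 1) = fderiv ℝ G₂ q (Pi.single 0 1)
      rw [hdG1 (Pi.single 1 1), hdG2 (Pi.single 0 1), hdμ (Pi.single 1 1),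
        hdμ (Pi.single 0 1), e12]
      linear_combination Sα
    · show fderiv ℝ G₁ q (Pi.single 2 1) = fderiv ℝ G₃ q (Pi.single 0 1)
      rw [hG₃, hdG1 (Pi.single 2 1), hdμ (Pi.single 2 1), hdμ (Pi.single 0 1), e22]
      linear_combination Sβ
    · show fderiv ℝ G₂ q (Pi.single 2 1) = fderiv ℝ G₃ q (Pi.single 1 1)
      rw [hG₃, hdG2 (Pi.single 2 1), hdμ (Pi.single 2 1), hdμ (Pi.single 1 1)]
      linear_combination Sγ
  refine ⟨key, ?_⟩
  intro q₀ hq₀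
  have hh₂c : ContDiffOn ℝ (⊤ : ℕ∞) h₂ Ω := by
    rw [hh₂]; exact hf₂.mul hg₂
  have hμc : ContDiffOn ℝ (⊤ : ℕ∞) μ₁ Ω := by
    rw [hμ₁]
    apply ContDiffOn.div contDiffOn_const (hh₂c.mul (hlam₂.sub hlam₁))
    intro x hx
    refine mul_ne_zero ?_ (sub_ne_zero.2 (Ne.symm (hne x hx)))
    rw [hh₂]
    exact mul_ne_zero (hf₂0 x hx) (hg₂0 x hx)
  have hco : ContDiffOn ℝ (⊤ : ℕ∞) (fun q : Fin 3 → ℝ => q 2) Ω :=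
    (ContinuousLinearMap.contDiff (projR 2)).contDiffOn
  have hG1c : ContDiffOn ℝ 1 G₁ Ω := by
    rw [hG₁]; exact (((hlam₁.mul hco).sub hφ).mul hμc).of_le (by simp)
  have hG2c : ContDiffOn ℝ 1 G₂ Ω := by
    rw [hG₂]; exact ((hlam₁.neg).mul hμc).of_le (by simp)
  have hG3c : ContDiffOn ℝ 1 G₃ Ω := by
    rw [hG₃]; exact hμc.of_le (by simp)
  set Gv : Fin 3 → (Fin 3 → ℝ) → ℝ := ![G₁, G₂, G₃] with hGv
  have hGvc : ∀ j, ContDiffOn ℝ 1 (Gv j) Ω := by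
    intro j
    fin_cases j <;> simpa [hGv]
  have hGsym : ∀ i j : Fin 3, ∀ q ∈ Ω, pd i (Gv j) q = pd j (Gv i) q := by
    intro i j q hq
    obtain ⟨k1, k2, k3⟩ := key q hq
    fin_cases i <;> fin_cases j <;>
      simp only [hGv, Matrix.cons_val_zero, Matrix.cons_val_one, Matrix.head_cons,
        Matrix.cons_val_two, Matrix.tail_cons] <;>
      first
        | rfl
        | exact k1 | exact k1.symm
        | exact k2 | exact k2.symm
        | exact k3 | exact k3.symm
  obtain ⟨U, hUo, hq₀U, hUΩ, I₁, hI₁⟩ := poincare_local hΩ Gv hGvc hGsym hq₀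
  refine ⟨U, hUo, hq₀U, hUΩ, I₁, ?_⟩
  intro q hqU
  have h0 := hI₁ q hqU 0
  have h1 := hI₁ q hqU 1
  have h2 := hI₁ q hqU 2
  simp only [hGv, Matrix.cons_val_zero, Matrix.cons_val_one, Matrix.head_cons,
    Matrix.cons_val_two, Matrix.tail_cons] at h0 h1 h2
  exact ⟨h0, h1, h2⟩
end
end

section
/- (Theorem 3) Let φ, λ₁, λ₂ : Ω → ℝ be smooth with λ₁(q) ≠ λ₂(q) for all q, and h₁, h₂ : Ω → ℝ smooth and nowhere vanishing. Suppose I₁ : Ω → ℝ is differentiable with ∂_x I₁ = (λ₁p − φ)/(h₂(λ₂ − λ₁)), ∂_u I₁ = −λ₁/(h₂(λ₂ − λ₁)), ∂_p I₁ = 1/(h₂(λ₂ − λ₁)), and I₂ : Ω → ℝ is differentiable with ∂_x I₂ = (λ₂p − φ)/(h₁(λ₁ − λ₂)), ∂_u I₂ = −λ₂/(h₁(λ₁ − λ₂)), ∂_p I₂ = 1/(h₁(λ₁ − λ₂)). Then A(I₁) = 0, X₁(I₁) = 0, A(I₂) = 0, X₂(I₂) = 0 (so Iᵢ is a first integral of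 A associated to (∂_u, λᵢ)), and the gradients ∇I₁(q) and ∇I₂(q) are linearly independent at every q ∈ Ω, so I₁ and I₂ are functionally independent first integrals. -/
/- Work on an open set Ω ⊆ ℝ³ with coordinates (x,u,p) (indices 0,1,2).  For smooth φ,
the vector field of the ODE u'' = φ(x,u,u') is A(q) = (1, p, φ(q)); for smooth λ,
X_λ(q) = (0, 1, λ(q)).  A vector field V acts on a differentiable f by
V(f)(q) = ∇f(q)·V(q).  A first integral of A associated to (∂_u, λ) is a function I
with A(I) = 0 and X_λ(I) = 0. -/

noncomputable section

lemma vec3_decomp (v : Fin 3 → ℝ) :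
    v = v 0 • (Pi.single 0 1 : Fin 3 → ℝ) + v 1 • (Pi.single 1 1 : Fin 3 → ℝ)
      + v 2 • (Pi.single 2 1 : Fin 3 → ℝ) := by
  funext i
  fin_cases i <;> simp

lemma clm_apply3 (L : (Fin 3 → ℝ) →L[ℝ] ℝ) (v : Fin 3 → ℝ) :
    L v = v 0 * L (Pi.single 0 1) + v 1 * L (Pi.single 1 1) + v 2 * L (Pi.single 2 1) := by
  conv_lhs => rw [vec3_decomp v]
  simp [smul_eq_mul]

/-- Theorem 3: if `I₁`, `I₂` have the indicated partial derivatives, then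
`A(I₁) = X₁(I₁) = 0`, `A(I₂) = X₂(I₂) = 0`, and `∇I₁(q)`, `∇I₂(q)` are linearly
independent at every `q ∈ Ω`: `I₁` and `I₂` are functionally independent first
integrals of `A` associated to `(∂_u,λ₁)` and `(∂_u,λ₂)`. -/
theorem statement8 (Ω : Set (Fin 3 → ℝ)) (hΩ : IsOpen Ω)
    (φ lam₁ lam₂ : (Fin 3 → ℝ) → ℝ)
    (hφ : ContDiffOn ℝ (⊤ : ℕ∞) φ Ω) (hlam₁ : ContDiffOn ℝ (⊤ : ℕ∞) lam₁ Ω)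
    (hlam₂ : ContDiffOn ℝ (⊤ : ℕ∞) lam₂ Ω)
    (hne : ∀ q ∈ Ω, lam₁ q ≠ lam₂ q)
    (h₁ h₂ : (Fin 3 → ℝ) → ℝ)
    (hh₁ : ContDiffOn ℝ (⊤ : ℕ∞) h₁ Ω) (hh₂ : ContDiffOn ℝ (⊤ : ℕ∞) h₂ Ω)
    (hh₁0 : ∀ q ∈ Ω, h₁ q ≠ 0) (hh₂0 : ∀ q ∈ Ω, h₂ q ≠ 0)
    (A X₁ X₂ : (Fin 3 → ℝ) → (Fin 3 → ℝ))
    (hA : A = fun q => ![1, q 2, φ q])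
    (hX₁ : X₁ = fun q => ![0, 1, lam₁ q])
    (hX₂ : X₂ = fun q => ![0, 1, lam₂ q])
    (I₁ I₂ : (Fin 3 → ℝ) → ℝ)
    (hI₁d : ∀ q ∈ Ω, DifferentiableAt ℝ I₁ q)
    (hI₂d : ∀ q ∈ Ω, DifferentiableAt ℝ I₂ q)
    (hI₁x : ∀ q ∈ Ω, pd 0 I₁ q = (lam₁ q * q 2 - φ q) / (h₂ q * (lam₂ q - lam₁ q)))
    (hI₁u : ∀ q ∈ Ω, pd 1 I₁ q = -lam₁ q / (h₂ q * (lam₂ q - lam₁ q)))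
    (hI₁p : ∀ q ∈ Ω, pd 2 I₁ q = 1 / (h₂ q * (lam₂ q - lam₁ q)))
    (hI₂x : ∀ q ∈ Ω, pd 0 I₂ q = (lam₂ q * q 2 - φ q) / (h₁ q * (lam₁ q - lam₂ q)))
    (hI₂u : ∀ q ∈ Ω, pd 1 I₂ q = -lam₂ q / (h₁ q * (lam₁ q - lam₂ q)))
    (hI₂p : ∀ q ∈ Ω, pd 2 I₂ q = 1 / (h₁ q * (lam₁ q - lam₂ q))) :
    (∀ q ∈ Ω, vact A I₁ q = 0 ∧ vact X₁ I₁ q = 0 ∧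
      vact A I₂ q = 0 ∧ vact X₂ I₂ q = 0) ∧
    (∀ q ∈ Ω, LinearIndependent ℝ ![fderiv ℝ I₁ q, fderiv ℝ I₂ q]) := by
  constructor
  · intro q hq
    have hD : lam₂ q - lam₁ q ≠ 0 := sub_ne_zero.2 (Ne.symm (hne q hq))
    have hD' : lam₁ q - lam₂ q ≠ 0 := sub_ne_zero.2 (hne q hq)
    have h2 := hh₂0 q hq
    have h1 := hh₁0 q hq
    have e1x := hI₁x q hq; have e1u := hI₁u q hq; have e1p := hI₁p q hq
    have e2x := hI₂x q hq; have e2u := hI₂u q hq; have e2p := hI₂p q hq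
    simp only [pd] at e1x e1u e1p e2x e2u e2p
    refine ⟨?_, ?_, ?_, ?_⟩ <;>
      · simp only [vact, hA, hX₁, hX₂]
        rw [clm_apply3]
        simp only [Matrix.cons_val_zero, Matrix.cons_val_one, Matrix.head_cons,
          Matrix.cons_val_two, Matrix.tail_cons, e1x, e1u, e1p, e2x, e2u, e2p]
        field_simp
        try ring
  · intro q hq
    have hD : lam₂ q - lam₁ q ≠ 0 := sub_ne_zero.2 (Ne.symm (hne q hq))
    have hD' : lam₁ q - lam₂ q ≠ 0 := sub_ne_zero.2 (hne q hq)
    have h2 := hh₂0 q hq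
    have h1 := hh₁0 q hq
    have e1u := hI₁u q hq; have e1p := hI₁p q hq
    have e2u := hI₂u q hq; have e2p := hI₂p q hq
    simp only [pd] at e1u e1p e2u e2p
    rw [LinearIndependent.pair_iff]
    intro s t hst
    have hu : s * (fderiv ℝ I₁ q (Pi.single 1 1)) + t * (fderiv ℝ I₂ q (Pi.single 1 1)) = 0 := by
      have := congrArg (fun L : (Fin 3 → ℝ) →L[ℝ] ℝ => L (Pi.single 1 1)) hst
      simpa [smul_eq_mul] using this
    have hp : s * (fderiv ℝ I₁ q (Pi.single 2 1)) + t * (fderiv ℝ I₂ q (Pi.single 2 1)) = 0 := by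
      have := congrArg (fun L : (Fin 3 → ℝ) →L[ℝ] ℝ => L (Pi.single 2 1)) hst
      simpa [smul_eq_mul] using this
    rw [e1u, e2u] at hu
    rw [e1p, e2p] at hp
    have hXne : (1 : ℝ) / (h₂ q * (lam₂ q - lam₁ q)) ≠ 0 :=
      one_div_ne_zero (mul_ne_zero h2 hD)
    have hYne : (1 : ℝ) / (h₁ q * (lam₁ q - lam₂ q)) ≠ 0 :=
      one_div_ne_zero (mul_ne_zero h1 hD')
    have hsa : (lam₂ q - lam₁ q) * (s * (1 / (h₂ q * (lam₂ q - lam₁ q)))) = 0 := by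
      linear_combination hu + lam₂ q * hp
    have hs0 : s = 0 := by
      rcases mul_eq_zero.1 ((mul_eq_zero.1 hsa).resolve_left hD) with h | h
      · exact h
      · exact absurd h hXne
    have ht0 : t = 0 := by
      rw [hs0, zero_mul, zero_add] at hp
      rcases mul_eq_zero.1 hp with h | h
      · exact h
      · exact absurd h hYne
    exact ⟨hs0, ht0⟩
end
end

section
/- (Theorem 4, part 2: Jacobi last multiplier) Let φ, λ₁, λ₂ : Ω → ℝ be smooth with λ₁(q) ≠ λ₂(q) for all q, A = ∂_x + p∂_u + φ∂_p, Xᵢ = ∂_u + λᵢ∂_p, and assume [X₁,A] = λ₁·X₁ and [X₂,A] = λ₂·X₂. Let h₁, h₂ : Ω → ℝ be smooth, nowhere vanishing, with A(h₁) = λ₁·h₁ and A(h₂) = λ₂·h₂. Then M = 1/( h₁·h₂·(λ₂ − λ₁) ) satisfies the Jacobi last multiplier equation A(M) + M·∂_pφ = 0 on Ω. -/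
/- Work on an open set Ω ⊆ ℝ³ with coordinates (x,u,p) (indices 0,1,2).  Vector fields
are smooth maps V : Ω → ℝ³; the Lie bracket is [V,W](q) = DW(q)(V(q)) − DV(q)(W(q)),
and V acts on f by V(f)(q) = ∇f(q)·V(q).  The vector field of the ODE u'' = φ(x,u,u')
is A(q) = (1, p, φ(q)).  A Jacobi last multiplier of u'' = φ is a function M with
A(M) + M·∂_pφ = 0. -/

noncomputable section

lemma vec_decomp (c : ℝ) :
    (![0, 1, c] : Fin 3 → ℝ)
      = (Pi.single 1 1 : Fin 3 → ℝ) + c • (Pi.single 2 1 : Fin 3 → ℝ) := by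
  funext i
  fin_cases i <;> simp [Pi.single_apply]

/-- From the symmetry/bracket condition, compute `A(λ)`. -/
lemma bracket_deriv (Ω : Set (Fin 3 → ℝ)) (hΩ : IsOpen Ω)
    (φ lam : (Fin 3 → ℝ) → ℝ)
    (hφ : ContDiffOn ℝ (⊤ : ℕ∞) φ Ω) (hlam : ContDiffOn ℝ (⊤ : ℕ∞) lam Ω)
    (q : Fin 3 → ℝ) (hq : q ∈ Ω)
    (hb : lieB (fun x => ![0, 1, lam x]) (fun x => ![1, x 2, φ x]) q
          = lam q • ![0, 1, lam q]) :
    fderiv ℝ lam q (![1, q 2, φ q] : Fin 3 → ℝ)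
      = pd 1 φ q + lam q * pd 2 φ q - lam q * lam q := by
  have hmem := hΩ.mem_nhds hq
  have dφ : DifferentiableAt ℝ φ q := (hφ.contDiffAt hmem).differentiableAt (by simp)
  have dlam : DifferentiableAt ℝ lam q := (hlam.contDiffAt hmem).differentiableAt (by simp)
  have hA2 : (fun x : Fin 3 → ℝ => (![1, x 2, φ x] : Fin 3 → ℝ) 2) = φ := by
    funext x; simp
  have hXp2 : (fun x : Fin 3 → ℝ => (![0, 1, lam x] : Fin 3 → ℝ) 2) = lam := by
    funext x; simp
  have dA0 : DifferentiableAt ℝ (fun x : Fin 3 → ℝ => (![1, x 2, φ x] : Fin 3 → ℝ) 0) q := by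
    have : (fun x : Fin 3 → ℝ => (![1, x 2, φ x] : Fin 3 → ℝ) 0) = fun _ => (1 : ℝ) := by
      funext x; simp
    rw [this]; exact differentiableAt_const _
  have dA1 : DifferentiableAt ℝ (fun x : Fin 3 → ℝ => (![1, x 2, φ x] : Fin 3 → ℝ) 1) q := by
    have : (fun x : Fin 3 → ℝ => (![1, x 2, φ x] : Fin 3 → ℝ) 1) = fun x => x 2 := by
      funext x; simp
    rw [this]
    exact (ContinuousLinearMap.proj (R := ℝ) (φ := fun _ : Fin 3 => ℝ) 2).differentiableAt
  have dA2 : DifferentiableAt ℝ (fun x : Fin 3 → ℝ => (![1, x 2, φ x] : Fin 3 → ℝ) 2) q := by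
    rw [hA2]; exact dφ
  have dX0 : DifferentiableAt ℝ (fun x : Fin 3 → ℝ => (![0, 1, lam x] : Fin 3 → ℝ) 0) q := by
    have : (fun x : Fin 3 → ℝ => (![0, 1, lam x] : Fin 3 → ℝ) 0) = fun _ => (0 : ℝ) := by
      funext x; simp
    rw [this]; exact differentiableAt_const _
  have dX1 : DifferentiableAt ℝ (fun x : Fin 3 → ℝ => (![0, 1, lam x] : Fin 3 → ℝ) 1) q := by
    have : (fun x : Fin 3 → ℝ => (![0, 1, lam x] : Fin 3 → ℝ) 1) = fun _ => (1 : ℝ) := by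
      funext x; simp
    rw [this]; exact differentiableAt_const _
  have dX2 : DifferentiableAt ℝ (fun x : Fin 3 → ℝ => (![0, 1, lam x] : Fin 3 → ℝ) 2) q := by
    rw [hXp2]; exact dlam
  have dAA : ∀ i, DifferentiableAt ℝ
      (fun x : Fin 3 → ℝ => (![1, x 2, φ x] : Fin 3 → ℝ) i) q := by
    intro i; fin_cases i
    · exact dA0
    · exact dA1
    · exact dA2
  have dXX : ∀ i, DifferentiableAt ℝ
      (fun x : Fin 3 → ℝ => (![0, 1, lam x] : Fin 3 → ℝ) i) q := by
    intro i; fin_cases i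
    · exact dX0
    · exact dX1
    · exact dX2
  have hfA : fderiv ℝ (fun x : Fin 3 → ℝ => (![1, x 2, φ x] : Fin 3 → ℝ)) q
      = ContinuousLinearMap.pi
          (fun i => fderiv ℝ (fun x : Fin 3 → ℝ => (![1, x 2, φ x] : Fin 3 → ℝ) i) q) :=
    fderiv_pi dAA
  have hfX : fderiv ℝ (fun x : Fin 3 → ℝ => (![0, 1, lam x] : Fin 3 → ℝ)) q
      = ContinuousLinearMap.pi
          (fun i => fderiv ℝ (fun x : Fin 3 → ℝ => (![0, 1, lam x] : Fin 3 → ℝ) i) q) :=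
    fderiv_pi dXX
  have hb2 := congrFun hb 2
  simp only [lieB, Pi.sub_apply, hfA, hfX, ContinuousLinearMap.pi_apply, hA2, hXp2,
    Pi.smul_apply, smul_eq_mul] at hb2
  have hXXq : (![0, 1, lam q] : Fin 3 → ℝ)
      = (Pi.single 1 1 : Fin 3 → ℝ) + lam q • (Pi.single 2 1 : Fin 3 → ℝ) :=
    vec_decomp (lam q)
  rw [hXXq, map_add, map_smul, smul_eq_mul] at hb2
  have e1 : (fderiv ℝ φ q) ((Pi.single 1 1 : Fin 3 → ℝ)) = pd 1 φ q := rfl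
  have e2 : (fderiv ℝ φ q) ((Pi.single 2 1 : Fin 3 → ℝ)) = pd 2 φ q := rfl
  rw [e1, e2] at hb2
  simp only [Pi.add_apply, Pi.smul_apply, smul_eq_mul] at hb2
  rw [show (Pi.single 1 1 : Fin 3 → ℝ) 2 = 0 by simp [Pi.single_apply],
      show (Pi.single 2 1 : Fin 3 → ℝ) 2 = 1 by simp [Pi.single_apply]] at hb2
  nlinarith [hb2]

/-- Theorem 4, part 2: if `[Xᵢ,A] = λᵢXᵢ`, `A(hᵢ) = λᵢhᵢ` with `hᵢ`
nowhere vanishing and `λ₁ ≠ λ₂` pointwise, then `M = 1/(h₁h₂(λ₂ − λ₁))` satisfies the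
Jacobi last multiplier equation `A(M) + M·∂_pφ = 0` on `Ω`. -/
theorem statement10 (Ω : Set (Fin 3 → ℝ)) (hΩ : IsOpen Ω)
    (φ lam₁ lam₂ : (Fin 3 → ℝ) → ℝ)
    (hφ : ContDiffOn ℝ (⊤ : ℕ∞) φ Ω) (hlam₁ : ContDiffOn ℝ (⊤ : ℕ∞) lam₁ Ω)
    (hlam₂ : ContDiffOn ℝ (⊤ : ℕ∞) lam₂ Ω)
    (hne : ∀ q ∈ Ω, lam₁ q ≠ lam₂ q)
    (A X₁ X₂ : (Fin 3 → ℝ) → (Fin 3 → ℝ))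
    (hA : A = fun q => ![1, q 2, φ q])
    (hX₁ : X₁ = fun q => ![0, 1, lam₁ q])
    (hX₂ : X₂ = fun q => ![0, 1, lam₂ q])
    (hsym₁ : ∀ q ∈ Ω, lieB X₁ A q = lam₁ q • X₁ q)
    (hsym₂ : ∀ q ∈ Ω, lieB X₂ A q = lam₂ q • X₂ q)
    (h₁ h₂ : (Fin 3 → ℝ) → ℝ)
    (hh₁ : ContDiffOn ℝ (⊤ : ℕ∞) h₁ Ω) (hh₂ : ContDiffOn ℝ (⊤ : ℕ∞) h₂ Ω)
    (hh₁0 : ∀ q ∈ Ω, h₁ q ≠ 0) (hh₂0 : ∀ q ∈ Ω, h₂ q ≠ 0)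
    (hAh₁ : ∀ q ∈ Ω, vact A h₁ q = lam₁ q * h₁ q)
    (hAh₂ : ∀ q ∈ Ω, vact A h₂ q = lam₂ q * h₂ q)
    (M : (Fin 3 → ℝ) → ℝ)
    (hM : M = fun q => 1 / (h₁ q * h₂ q * (lam₂ q - lam₁ q))) :
    ∀ q ∈ Ω, vact A M q + M q * pd 2 φ q = 0 := by
  intro q hq
  have hmem := hΩ.mem_nhds hq
  have dh1 : DifferentiableAt ℝ h₁ q := (hh₁.contDiffAt hmem).differentiableAt (by simp)
  have dh2 : DifferentiableAt ℝ h₂ q := (hh₂.contDiffAt hmem).differentiableAt (by simp)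
  have dl1 : DifferentiableAt ℝ lam₁ q := (hlam₁.contDiffAt hmem).differentiableAt (by simp)
  have dl2 : DifferentiableAt ℝ lam₂ q := (hlam₂.contDiffAt hmem).differentiableAt (by simp)
  have hAq : A q = (![1, q 2, φ q] : Fin 3 → ℝ) := by rw [hA]
  -- eigenvalue derivatives along A from the bracket conditions
  have hb1 : fderiv ℝ lam₁ q (A q)
      = pd 1 φ q + lam₁ q * pd 2 φ q - lam₁ q * lam₁ q := by
    rw [hAq]
    refine bracket_deriv Ω hΩ φ lam₁ hφ hlam₁ q hq ?_
    have := hsym₁ q hq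
    rw [hX₁, hA] at this
    simpa using this
  have hb2 : fderiv ℝ lam₂ q (A q)
      = pd 1 φ q + lam₂ q * pd 2 φ q - lam₂ q * lam₂ q := by
    rw [hAq]
    refine bracket_deriv Ω hΩ φ lam₂ hφ hlam₂ q hq ?_
    have := hsym₂ q hq
    rw [hX₂, hA] at this
    simpa using this
  have ha1 : fderiv ℝ h₁ q (A q) = lam₁ q * h₁ q := hAh₁ q hq
  have ha2 : fderiv ℝ h₂ q (A q) = lam₂ q * h₂ q := hAh₂ q hq
  -- nonvanishing of G
  have hGne : h₁ q * h₂ q * (lam₂ q - lam₁ q) ≠ 0 :=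
    mul_ne_zero (mul_ne_zero (hh₁0 q hq) (hh₂0 q hq))
      (sub_ne_zero.mpr (Ne.symm (hne q hq)))
  -- differentiability of M
  have dG : DifferentiableAt ℝ (fun x => h₁ x * h₂ x * (lam₂ x - lam₁ x)) q :=
    ((dh1.mul dh2).mul (dl2.sub dl1))
  have dM : DifferentiableAt ℝ M q := by
    rw [hM]
    simp only [one_div]
    exact dG.inv hGne
  -- M * G = 1 near q
  have hMG : (fun x => M x * (h₁ x * h₂ x * (lam₂ x - lam₁ x)))
      =ᶠ[nhds q] fun _ => (1 : ℝ) := by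
    filter_upwards [hmem] with x hx
    have hx0 : h₁ x * h₂ x * (lam₂ x - lam₁ x) ≠ 0 :=
      mul_ne_zero (mul_ne_zero (hh₁0 x hx) (hh₂0 x hx))
        (sub_ne_zero.mpr (Ne.symm (hne x hx)))
    rw [hM]
    field_simp
    exact div_self hx0
  have h0 : fderiv ℝ (fun x => M x * (h₁ x * h₂ x * (lam₂ x - lam₁ x))) q = 0 := by
    rw [Filter.EventuallyEq.fderiv_eq hMG]
    exact fderiv_const_apply 1
  have hprod : fderiv ℝ (fun x => M x * (h₁ x * h₂ x * (lam₂ x - lam₁ x))) q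
      = M q • fderiv ℝ (fun x => h₁ x * h₂ x * (lam₂ x - lam₁ x)) q
        + (h₁ q * h₂ q * (lam₂ q - lam₁ q)) • fderiv ℝ M q :=
    fderiv_mul dM dG
  -- expand fderiv of G
  have hGder : fderiv ℝ (fun x => h₁ x * h₂ x * (lam₂ x - lam₁ x)) q (A q)
      = (h₁ q * h₂ q) * (fderiv ℝ lam₂ q (A q) - fderiv ℝ lam₁ q (A q))
        + (lam₂ q - lam₁ q) * (h₁ q * fderiv ℝ h₂ q (A q)
            + h₂ q * fderiv ℝ h₁ q (A q)) := by
    rw [fderiv_fun_mul (c := fun x => h₁ x * h₂ x) (d := fun x => lam₂ x - lam₁ x)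
      (dh1.mul dh2) (dl2.sub dl1), fderiv_fun_sub dl2 dl1,
      fderiv_fun_mul dh1 dh2]
    simp [smul_eq_mul]
    ring
  -- combine
  have key := congrArg (fun (L : (Fin 3 → ℝ) →L[ℝ] ℝ) => L (A q)) (h0 ▸ hprod)
  simp only [ContinuousLinearMap.add_apply, ContinuousLinearMap.coe_smul',
    Pi.smul_apply, smul_eq_mul, ContinuousLinearMap.zero_apply] at key
  -- key : 0 = M q * (fderiv G q (A q)) + G q * (fderiv M q (A q))
  have hGAval : fderiv ℝ (fun x => h₁ x * h₂ x * (lam₂ x - lam₁ x)) q (A q)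
      = h₁ q * h₂ q * (lam₂ q - lam₁ q) * pd 2 φ q := by
    rw [hGder, hb1, hb2, ha1, ha2]
    ring
  rw [hGAval] at key
  have hMq : M q = (h₁ q * h₂ q * (lam₂ q - lam₁ q))⁻¹ := by rw [hM]; simp [one_div]
  have hvact : vact A M q = fderiv ℝ M q (A q) := rfl
  rw [hvact]
  rw [hMq] at key ⊢
  have hGQ : (h₁ q * h₂ q * (lam₂ q - lam₁ q))⁻¹
      * (h₁ q * h₂ q * (lam₂ q - lam₁ q) * pd 2 φ q) = pd 2 φ q := by
    field_simp
    exact mul_div_cancel_left₀ _ hGne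
  rw [hGQ] at key
  have hV : (fderiv ℝ M q) (A q)
      = -(pd 2 φ q) / (h₁ q * h₂ q * (lam₂ q - lam₁ q)) := by
    rw [eq_div_iff hGne]
    linear_combination -key
  rw [hV]
  field_simp
  ring
end
end

section
/- (Theorem 6) Let φ, λ₁, λ₂ : Ω → ℝ be smooth with λ₁(q) ≠ λ₂(q) for all q, A = ∂_x + p∂_u + φ∂_p, and h₁, h₂ : Ω → ℝ smooth, nowhere vanishing, with A(h₁) = λ₁·h₁. Let I₁ : Ω → ℝ be differentiable with ∂_x I₁ = (λ₁p − φ)/(h₂(λ₂ − λ₁)), ∂_u I₁ = −λ₁/(h₂(λ₂ − λ₁)), ∂_p I₁ = 1/(h₂(λ₂ − λ₁)), and let H : Ω' → ℝ (Ω' ⊆ ℝ² open) be differentiable with (x,u,H(x,u)) ∈ Ω and I₁(x, u, H(x,u)) = C for some constant C ∈ ℝ. Then ν̃(x,u) = 1/ h₁(x, u, H(x,u)) satisfies ∂_x ν̃ + ∂_u( H·ν̃ ) = 0 on Ω', i.e. ν̃ is an integrating factor of the auxiliary first-order equation u' = H(x,u). -/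
/- Work on an open set Ω ⊆ ℝ³ with coordinates (x,u,p) (indices 0,1,2).  For smooth φ,
the vector field of the ODE u'' = φ(x,u,u') acts by A(f) = ∂_x f + p∂_u f + φ∂_p f.
An integrating factor of a first-order ODE u' = H(x,u) is a function ν(x,u) with
∂_x ν + ∂_u(H·ν) = 0.  Here Ω' ⊆ ℝ² carries coordinates (x,u). -/

noncomputable section

/-- Partial derivative with respect to the second variable (u) on ℝ². -/
def pdu (f : ℝ × ℝ → ℝ) (z : ℝ × ℝ) : ℝ := fderiv ℝ f z (0, 1)

lemma apply3 (L : (Fin 3 → ℝ) →L[ℝ] ℝ) (a b c : ℝ) :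
    L ![a, b, c] = a * L (Pi.single 0 1) + b * L (Pi.single 1 1) + c * L (Pi.single 2 1) := by
  have h : (![a, b, c] : Fin 3 → ℝ)
      = a • (Pi.single 0 1 : Fin 3 → ℝ) + b • (Pi.single 1 1 : Fin 3 → ℝ)
        + c • (Pi.single 2 1 : Fin 3 → ℝ) := by
    funext i
    fin_cases i <;> simp [Pi.single_apply]
  rw [h]
  simp [smul_eq_mul]

set_option maxHeartbeats 1000000

/-- Theorem 6: if `A(h₁) = λ₁h₁`, `I₁` has the indicated partial
derivatives, and `I₁(x,u,H(x,u)) = C` on `Ω'`, then `ν̃(x,u) = 1/h₁(x,u,H(x,u))` is an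
integrating factor of the auxiliary equation `u' = H(x,u)`:
`∂_x ν̃ + ∂_u(H·ν̃) = 0` on `Ω'`. -/
theorem statement12 (Ω : Set (Fin 3 → ℝ)) (hΩ : IsOpen Ω)
    (Ω' : Set (ℝ × ℝ)) (hΩ' : IsOpen Ω')
    (φ lam₁ lam₂ : (Fin 3 → ℝ) → ℝ)
    (hφ : ContDiffOn ℝ (⊤ : ℕ∞) φ Ω) (hlam₁ : ContDiffOn ℝ (⊤ : ℕ∞) lam₁ Ω)
    (hlam₂ : ContDiffOn ℝ (⊤ : ℕ∞) lam₂ Ω)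
    (hne : ∀ q ∈ Ω, lam₁ q ≠ lam₂ q)
    (h₁ h₂ : (Fin 3 → ℝ) → ℝ)
    (hh₁ : ContDiffOn ℝ (⊤ : ℕ∞) h₁ Ω) (hh₂ : ContDiffOn ℝ (⊤ : ℕ∞) h₂ Ω)
    (hh₁0 : ∀ q ∈ Ω, h₁ q ≠ 0) (hh₂0 : ∀ q ∈ Ω, h₂ q ≠ 0)
    (hAh₁ : ∀ q ∈ Ω,
      pd 0 h₁ q + q 2 * pd 1 h₁ q + φ q * pd 2 h₁ q = lam₁ q * h₁ q)
    (I₁ : (Fin 3 → ℝ) → ℝ)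
    (hI₁d : ∀ q ∈ Ω, DifferentiableAt ℝ I₁ q)
    (hI₁x : ∀ q ∈ Ω, pd 0 I₁ q = (lam₁ q * q 2 - φ q) / (h₂ q * (lam₂ q - lam₁ q)))
    (hI₁u : ∀ q ∈ Ω, pd 1 I₁ q = -lam₁ q / (h₂ q * (lam₂ q - lam₁ q)))
    (hI₁p : ∀ q ∈ Ω, pd 2 I₁ q = 1 / (h₂ q * (lam₂ q - lam₁ q)))
    (H : ℝ × ℝ → ℝ) (hH : ∀ z ∈ Ω', DifferentiableAt ℝ H z)
    (hmem : ∀ z ∈ Ω', (![z.1, z.2, H z] : Fin 3 → ℝ) ∈ Ω)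
    (C : ℝ)
    (hlevel : ∀ z ∈ Ω', I₁ ![z.1, z.2, H z] = C) :
    ∀ z ∈ Ω',
      pdx (fun z' => 1 / h₁ ![z'.1, z'.2, H z']) z +
        pdu (fun z' => H z' * (1 / h₁ ![z'.1, z'.2, H z'])) z = 0 := by
  intro z hz
  have hqΩ : (![z.1, z.2, H z] : Fin 3 → ℝ) ∈ Ω := hmem z hz
  set q : Fin 3 → ℝ := ![z.1, z.2, H z] with hq
  have hq2 : q 2 = H z := by simp [hq]
  have hHd : HasFDerivAt H (fderiv ℝ H z) z := (hH z hz).hasFDerivAt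
  set DH := fderiv ℝ H z with hDHdef
  set Hx := DH (1, 0) with hHx
  set Hu := DH (0, 1) with hHu
  -- the map G and its derivative
  set DG : (ℝ × ℝ) →L[ℝ] (Fin 3 → ℝ) :=
    ContinuousLinearMap.pi ![ContinuousLinearMap.fst ℝ ℝ ℝ, ContinuousLinearMap.snd ℝ ℝ ℝ, DH]
    with hDGdef
  have hG : HasFDerivAt (fun z' : ℝ × ℝ => (![z'.1, z'.2, H z'] : Fin 3 → ℝ)) DG z := by
    apply hasFDerivAt_pi''
    intro i
    fin_cases i <;>
      simp [hDGdef]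
    · exact hasFDerivAt_fst
    · exact hasFDerivAt_snd
    · exact hHd
  have hDGx : DG (1, 0) = ![1, 0, Hx] := by
    funext i
    fin_cases i <;>
      simp [hDGdef, ContinuousLinearMap.pi_apply, hHx]
  have hDGu : DG (0, 1) = ![0, 1, Hu] := by
    funext i
    fin_cases i <;>
      simp [hDGdef, ContinuousLinearMap.pi_apply, hHu]
  -- differentiate the level identity
  have hI₁q : DifferentiableAt ℝ I₁ q := hI₁d q hqΩ
  have hcomp : HasFDerivAt (fun z' : ℝ × ℝ => I₁ ![z'.1, z'.2, H z'])
      ((fderiv ℝ I₁ q).comp DG) z := hI₁q.hasFDerivAt.comp z hG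
  have hconst : fderiv ℝ (fun z' : ℝ × ℝ => I₁ ![z'.1, z'.2, H z']) z = 0 := by
    have heq : (fun z' : ℝ × ℝ => I₁ ![z'.1, z'.2, H z']) =ᶠ[nhds z] fun _ => C :=
      Filter.eventuallyEq_of_mem (hΩ'.mem_nhds hz) hlevel
    rw [heq.fderiv_eq, fderiv_fun_const]
    rfl
  have hzero : (fderiv ℝ I₁ q).comp DG = 0 := by
    rw [← hcomp.fderiv, hconst]
  set D := h₂ q * (lam₂ q - lam₁ q) with hD
  have hDne : D ≠ 0 :=
    mul_ne_zero (hh₂0 q hqΩ) (sub_ne_zero.2 (Ne.symm (hne q hqΩ)))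
  have ex : fderiv ℝ I₁ q ![(1:ℝ), 0, Hx] = 0 := by
    have := congrArg (fun L : (ℝ × ℝ) →L[ℝ] ℝ => L (1, 0)) hzero
    simpa [hDGx] using this
  have eu : fderiv ℝ I₁ q ![(0:ℝ), 1, Hu] = 0 := by
    have := congrArg (fun L : (ℝ × ℝ) →L[ℝ] ℝ => L (0, 1)) hzero
    simpa [hDGu] using this
  rw [apply3] at ex eu
  have px := hI₁x q hqΩ; have pu := hI₁u q hqΩ; have pp := hI₁p q hqΩ
  rw [hq2] at px
  simp only [pd] at px pu pp
  rw [px, pp] at ex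
  rw [pu, pp] at eu
  rw [← hD] at ex eu
  have hHxval : Hx = φ q - lam₁ q * H z := by
    field_simp at ex
    linarith
  have hHuval : Hu = lam₁ q := by
    field_simp at eu
    rcases mul_eq_zero.1 (show (Hu - lam₁ q) * D = 0 by linear_combination D * eu) with h | h
    · linarith
    · exact absurd h hDne
  -- derivative of g = h₁ ∘ G
  have hh₁q : DifferentiableAt ℝ h₁ q :=
    (hh₁.differentiableOn (by simp)).differentiableAt (hΩ.mem_nhds hqΩ)
  set Dg := (fderiv ℝ h₁ q).comp DG with hDgdef
  have hgd : HasFDerivAt (fun z' : ℝ × ℝ => h₁ ![z'.1, z'.2, H z']) Dg z :=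
    hh₁q.hasFDerivAt.comp z hG
  have hgz : h₁ q ≠ 0 := hh₁0 q hqΩ
  set gx := Dg (1, 0) with hgxdef
  set gu := Dg (0, 1) with hgudef
  have hgxval : gx = pd 0 h₁ q + Hx * pd 2 h₁ q := by
    rw [hgxdef, hDgdef]
    simp only [ContinuousLinearMap.comp_apply, hDGx]
    rw [apply3]
    simp [pd]
  have hguval : gu = pd 1 h₁ q + Hu * pd 2 h₁ q := by
    rw [hgudef, hDgdef]
    simp only [ContinuousLinearMap.comp_apply, hDGu]
    rw [apply3]
    simp [pd]
  -- derivative of the inverse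
  have hinv : HasFDerivAt (fun z' : ℝ × ℝ => (h₁ ![z'.1, z'.2, H z'])⁻¹)
      ((ContinuousLinearMap.smulRight (1 : ℝ →L[ℝ] ℝ) (-((h₁ q) ^ 2)⁻¹)).comp Dg) z := by
    exact (hasFDerivAt_inv hgz).comp z hgd
  have hmul : HasFDerivAt (fun z' : ℝ × ℝ => H z' * (h₁ ![z'.1, z'.2, H z'])⁻¹)
      (H z • ((ContinuousLinearMap.smulRight (1 : ℝ →L[ℝ] ℝ) (-((h₁ q) ^ 2)⁻¹)).comp Dg)
        + (h₁ q)⁻¹ • DH) z := by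
    exact hHd.mul hinv
  have hA := hAh₁ q hqΩ
  rw [hq2] at hA
  simp only [one_div, pdx, pdu]
  rw [hinv.fderiv, hmul.fderiv]
  simp only [ContinuousLinearMap.add_apply, ContinuousLinearMap.smul_apply,
    ContinuousLinearMap.comp_apply, ContinuousLinearMap.smulRight_apply,
    ContinuousLinearMap.one_apply, smul_eq_mul, ← hgxdef, ← hgudef, ← hHx, ← hHu]
  rw [hgxval, hguval, hHxval, hHuval]
  field_simp
  linear_combination (-1) * hA
end
end

section
/- Let F : ℝ → ℝ be smooth and, on Ω = {(x,u,p) ∈ ℝ³ : u ≠ 0}, let φ(x,u,p) = p²/(2u) − 2up − u³/2 + F(x)·u − 1/(2u) (the right-hand side of the Painlevé–Gambier XXVII equation u'' = u'²/(2u) − 2uu' − u³/2 + F(x)u − 1/(2u)). Then λ₁ = p/u − u + 1/u and λ₂ = p/u − u − 1/u both satisfy the λ-symmetry determining equation ∂_xλ + p·∂_uλ + φ·∂_pλ + λ² = ∂_uφ + λ·∂_pφ on Ω; equivalently, (∂_u, λ₁) and (∂_u, λ₂) are λ-symmetries of the equation. -/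
/- Coordinates on ℝ³ are (x,u,p) with indices 0,1,2; p plays the role of u'.
For φ(x,u,p) defining u'' = φ(x,u,u'), a function λ(x,u,p) makes (∂_u, λ) a λ-symmetry
exactly when ∂_xλ + p∂_uλ + φ∂_pλ + λ² = ∂_uφ + λ∂_pφ (the determining equation). -/

noncomputable section

/-- for the Painlevé–Gambier XXVII equation
`u'' = u'²/(2u) − 2uu' − u³/2 + F(x)u − 1/(2u)`, the functions
`λ₁ = p/u − u + 1/u` and `λ₂ = p/u − u − 1/u` satisfy the λ-symmetry determining
equation on `{u ≠ 0}`, i.e. `(∂_u,λ₁)` and `(∂_u,λ₂)` are λ-symmetries. -/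
theorem statement13 (F : ℝ → ℝ) (hF : ContDiff ℝ (⊤ : ℕ∞) F)
    (φ lam₁ lam₂ : (Fin 3 → ℝ) → ℝ)
    (hφ : φ = fun q =>
      (q 2) ^ 2 / (2 * q 1) - 2 * q 1 * q 2 - (q 1) ^ 3 / 2 + F (q 0) * q 1
        - 1 / (2 * q 1))
    (hlam₁ : lam₁ = fun q => q 2 / q 1 - q 1 + 1 / q 1)
    (hlam₂ : lam₂ = fun q => q 2 / q 1 - q 1 - 1 / q 1) :
    ∀ q : Fin 3 → ℝ, q 1 ≠ 0 →
      (pd 0 lam₁ q + q 2 * pd 1 lam₁ q + φ q * pd 2 lam₁ q + (lam₁ q) ^ 2 =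
        pd 1 φ q + lam₁ q * pd 2 φ q) ∧
      (pd 0 lam₂ q + q 2 * pd 1 lam₂ q + φ q * pd 2 lam₂ q + (lam₂ q) ^ 2 =
        pd 1 φ q + lam₂ q * pd 2 φ q) := by
  have hfφ : φ = fun q =>
      q 2 * q 2 * (q 1)⁻¹ * (2:ℝ)⁻¹ - 2 * q 1 * q 2 - q 1 * q 1 * q 1 * (2:ℝ)⁻¹ + F (q 0) * q 1
        - (q 1)⁻¹ * (2:ℝ)⁻¹ := by
    rw [hφ]; funext r; simp only [div_eq_mul_inv, mul_inv, one_mul]; ring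
  have hf₁ : lam₁ = fun q => q 2 * (q 1)⁻¹ - q 1 + (q 1)⁻¹ := by
    rw [hlam₁]; funext r; simp only [div_eq_mul_inv, one_mul]
  have hf₂ : lam₂ = fun q => q 2 * (q 1)⁻¹ - q 1 - (q 1)⁻¹ := by
    rw [hlam₂]; funext r; simp only [div_eq_mul_inv, one_mul]
  rw [hfφ, hf₁, hf₂]
  intro q hq
  have hp : ∀ i : Fin 3, HasFDerivAt (fun q : Fin 3 → ℝ => q i)
      (ContinuousLinearMap.proj (R := ℝ) (φ := fun _ : Fin 3 => ℝ) i) q :=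
    fun i => hasFDerivAt_apply i q
  have hinv : HasFDerivAt (fun q : Fin 3 → ℝ => (q 1)⁻¹)
      ((-(q 1 ^ 2)⁻¹) • ContinuousLinearMap.proj (R := ℝ) (φ := fun _ : Fin 3 => ℝ) 1) q :=
    (hasDerivAt_inv hq).comp_hasFDerivAt q (hp 1)
  have hFd : HasFDerivAt (fun q : Fin 3 → ℝ => F (q 0))
      ((deriv F (q 0)) • ContinuousLinearMap.proj (R := ℝ) (φ := fun _ : Fin 3 => ℝ) 0) q :=
    ((hF.differentiable (by simp) (q 0)).hasDerivAt).comp_hasFDerivAt q (hp 0)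
  have hφd := (((((((hp 2).mul (hp 2)).mul hinv).mul_const (2:ℝ)⁻¹).sub
      (((hasFDerivAt_const (2:ℝ) q).mul (hp 1)).mul (hp 2))).sub
      ((((hp 1).mul (hp 1)).mul (hp 1)).mul_const (2:ℝ)⁻¹)).add (hFd.mul (hp 1))).sub
      (hinv.mul_const (2:ℝ)⁻¹)
  have hl1d := (((hp 2).mul hinv).sub (hp 1)).add hinv
  have hl2d := (((hp 2).mul hinv).sub (hp 1)).sub hinv
  have e : ∀ (i : Fin 3) (f : (Fin 3 → ℝ) → ℝ) (f' : (Fin 3 → ℝ) →L[ℝ] ℝ), HasFDerivAt f f' q → pd i f q = f' (Pi.single i 1) := by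
    intro i f f' h; rw [pd, h.fderiv]
  erw [e 0 _ _ hl1d, e 1 _ _ hl1d, e 2 _ _ hl1d, e 0 _ _ hl2d, e 1 _ _ hl2d,
    e 2 _ _ hl2d, e 1 _ _ hφd, e 2 _ _ hφd]
  simp only [ContinuousLinearMap.sub_apply, ContinuousLinearMap.add_apply,
    ContinuousLinearMap.smul_apply, ContinuousLinearMap.coe_smul', Pi.smul_apply,
    ContinuousLinearMap.proj_apply, ContinuousLinearMap.coe_sub', Pi.sub_apply,
    Pi.single_eq_same, ne_eq, Fin.ext_iff, ContinuousLinearMap.coe_mk',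
    smul_eq_mul, Pi.mul_apply, ContinuousLinearMap.zero_apply]
  have s01 : Pi.single (M := fun _ : Fin 3 => ℝ) (1 : Fin 3) (1:ℝ) 0 = 0 := Pi.single_eq_of_ne (by decide : (0:Fin 3) ≠ 1) 1
  have s21 : Pi.single (M := fun _ : Fin 3 => ℝ) (1 : Fin 3) (1:ℝ) 2 = 0 := Pi.single_eq_of_ne (by decide : (2:Fin 3) ≠ 1) 1
  have s02 : Pi.single (M := fun _ : Fin 3 => ℝ) (2 : Fin 3) (1:ℝ) 0 = 0 := Pi.single_eq_of_ne (by decide : (0:Fin 3) ≠ 2) 1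
  have s12 : Pi.single (M := fun _ : Fin 3 => ℝ) (2 : Fin 3) (1:ℝ) 1 = 0 := Pi.single_eq_of_ne (by decide : (1:Fin 3) ≠ 2) 1
  have s10 : Pi.single (M := fun _ : Fin 3 => ℝ) (0 : Fin 3) (1:ℝ) 1 = 0 := Pi.single_eq_of_ne (by decide : (1:Fin 3) ≠ 0) 1
  have s20 : Pi.single (M := fun _ : Fin 3 => ℝ) (0 : Fin 3) (1:ℝ) 2 = 0 := Pi.single_eq_of_ne (by decide : (2:Fin 3) ≠ 0) 1
  rw [s01, s21, s02, s12, s10, s20]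
  constructor <;> field_simp <;> ring
end
end

section
/- Let F : J → ℝ be continuous on an interval J, let ψ₁, ψ₂ : J → ℝ be twice differentiable solutions of ψ'' = (1/2)(F(x)+1)·ψ, let θ₁, θ₂ : J → ℝ be twice differentiable solutions of θ'' = (1/2)(F(x)−1)·θ, and let C₁, C₂ ∈ ℝ. Suppose J₀ ⊆ J is an interval on which C₁ψ₂ − ψ₁ ≠ 0, C₂θ₂ − θ₁ ≠ 0, and D(x) := (C₁ψ₂'(x) − ψ₁'(x))/(C₁ψ₂(x) − ψ₁(x)) − (C₂θ₂'(x) − θ₁'(x))/(C₂θ₂(x) − θ₁(x)) ≠ 0. Then u(x) := 1/D(x) is twice differentiable on J₀, never zero, and solves the Painlevé–Gambier XXVII equation u'' − u'²/(2u) + 2uu' + u³/2 − F(x)·u + 1/(2u) = 0 on J₀. -/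
/-! The logarithmic derivatives `p = P'/P` and `q = Q'/Q` of solutions of `P'' = a P` and
`Q'' = b Q` satisfy the Riccati equations `p' = a - p²` and `q' = b - q²`. When `a - b = 1`
the reciprocal `u = 1/(p - q)` satisfies `u' = (p + q) u - u²`, and with `a + b = F` a second
differentiation shows that `u` solves Painlevé–Gambier XXVII: the defect of the equation is a
polynomial in `p, q, u, F` that vanishes modulo `u (p - q) = 1`. -/

theorem HasDerivAt.const_mul_sub_of_linear {ψ₁ ψ₂ dψ₁ dψ₂ : ℝ → ℝ} {a x : ℝ} (C : ℝ)
    (h₁ : HasDerivAt dψ₁ (a * ψ₁ x) x) (h₂ : HasDerivAt dψ₂ (a * ψ₂ x) x) :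
    HasDerivAt (fun y => C * dψ₂ y - dψ₁ y) (a * (C * ψ₂ x - ψ₁ x)) x :=
  ((h₂.const_mul C).fun_sub h₁).congr_deriv (by ring)

theorem HasDerivAt.div_riccati_of_linear {ψ dψ : ℝ → ℝ} {a x : ℝ}
    (hψ : HasDerivAt ψ (dψ x) x) (hdψ : HasDerivAt dψ (a * ψ x) x) (h0 : ψ x ≠ 0) :
    HasDerivAt (fun y => dψ y / ψ y) (a - (dψ x / ψ x) ^ 2) x :=
  (hdψ.div hψ h0).congr_deriv (by field_simp)

section RiccatiPair

variable {p q u : ℝ → ℝ} {a b x : ℝ}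

theorem hasDerivAt_one_div_sub_of_riccati (hp : HasDerivAt p (a - p x ^ 2) x)
    (hq : HasDerivAt q (b - q x ^ 2) x) (hab : a - b = 1) (hpq : p x - q x ≠ 0)
    (hu : u = fun y => 1 / (p y - q y)) :
    HasDerivAt u ((p x + q x) * u x - u x ^ 2) x := by
  subst hu
  refine ((hasDerivAt_const x (1 : ℝ)).div (hp.fun_sub hq) hpq).congr_deriv ?_
  rw [← hab]
  field_simp
  ring

theorem hasDerivAt_deriv_one_div_sub_of_riccati (hp : HasDerivAt p (a - p x ^ 2) x)
    (hq : HasDerivAt q (b - q x ^ 2) x) (hab : a - b = 1) (hpq : p x - q x ≠ 0)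
    (hu : u = fun y => 1 / (p y - q y)) :
    HasDerivAt (fun y => (p y + q y) * u y - u y ^ 2)
      ((a + b - p x ^ 2 - q x ^ 2) * u x + (p x + q x - 2 * u x) * ((p x + q x) * u x - u x ^ 2))
      x := by
  have hu' := hasDerivAt_one_div_sub_of_riccati hp hq hab hpq hu
  exact (((hp.fun_add hq).fun_mul hu').fun_sub (hu'.fun_pow 2)).congr_deriv (by ring)

end RiccatiPair

theorem painleveGambier27_of_mul_sub_eq_one {p q u u' u'' f : ℝ} (hu : u * (p - q) = 1)
    (hu' : u' = (p + q) * u - u ^ 2)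
    (hu'' : u'' = (f - p ^ 2 - q ^ 2) * u + (p + q - 2 * u) * u') :
    u'' - u' ^ 2 / (2 * u) + 2 * u * u' + u ^ 3 / 2 - f * u + 1 / (2 * u) = 0 := by
  have hu0 : u ≠ 0 := left_ne_zero_of_mul_eq_one hu
  obtain rfl : q = p - u⁻¹ := by field_simp; linear_combination -hu
  subst hu' hu''
  field_simp
  ring

theorem statement14_general (J J₀ : Set ℝ) (hJ₀ : J₀ ⊆ J)
    (F : ℝ → ℝ)
    (ψ₁ ψ₂ θ₁ θ₂ dψ₁ dψ₂ dθ₁ dθ₂ : ℝ → ℝ)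
    (hψ₁ : ∀ x ∈ J, HasDerivAt ψ₁ (dψ₁ x) x)
    (hψ₁'' : ∀ x ∈ J, HasDerivAt dψ₁ ((1 / 2) * (F x + 1) * ψ₁ x) x)
    (hψ₂ : ∀ x ∈ J, HasDerivAt ψ₂ (dψ₂ x) x)
    (hψ₂'' : ∀ x ∈ J, HasDerivAt dψ₂ ((1 / 2) * (F x + 1) * ψ₂ x) x)
    (hθ₁ : ∀ x ∈ J, HasDerivAt θ₁ (dθ₁ x) x)
    (hθ₁'' : ∀ x ∈ J, HasDerivAt dθ₁ ((1 / 2) * (F x - 1) * θ₁ x) x)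
    (hθ₂ : ∀ x ∈ J, HasDerivAt θ₂ (dθ₂ x) x)
    (hθ₂'' : ∀ x ∈ J, HasDerivAt dθ₂ ((1 / 2) * (F x - 1) * θ₂ x) x)
    (C₁ C₂ : ℝ)
    (hψden : ∀ x ∈ J₀, C₁ * ψ₂ x - ψ₁ x ≠ 0)
    (hθden : ∀ x ∈ J₀, C₂ * θ₂ x - θ₁ x ≠ 0)
    (D : ℝ → ℝ)
    (hD : D = fun x =>
      (C₁ * dψ₂ x - dψ₁ x) / (C₁ * ψ₂ x - ψ₁ x) -
        (C₂ * dθ₂ x - dθ₁ x) / (C₂ * θ₂ x - θ₁ x))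
    (hD0 : ∀ x ∈ J₀, D x ≠ 0)
    (u : ℝ → ℝ) (hu : u = fun x => 1 / D x) :
    ∃ u' u'' : ℝ → ℝ, ∀ x ∈ J₀,
      HasDerivAt u (u' x) x ∧ HasDerivAt u' (u'' x) x ∧ u x ≠ 0 ∧
      u'' x - (u' x) ^ 2 / (2 * u x) + 2 * u x * u' x + (u x) ^ 3 / 2
        - F x * u x + 1 / (2 * u x) = 0 := by
  set p : ℝ → ℝ := fun y => (C₁ * dψ₂ y - dψ₁ y) / (C₁ * ψ₂ y - ψ₁ y)
  set q : ℝ → ℝ := fun y => (C₂ * dθ₂ y - dθ₁ y) / (C₂ * θ₂ y - θ₁ y)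
  have hu_pq : u = fun y => 1 / (p y - q y) := by subst hu hD; rfl
  refine ⟨fun y => (p y + q y) * u y - u y ^ 2,
    fun y => (F y - p y ^ 2 - q y ^ 2) * u y + (p y + q y - 2 * u y) * ((p y + q y) * u y - u y ^ 2),
    fun x hx => ?_⟩
  have hxJ := hJ₀ hx
  have hpq : p x - q x ≠ 0 := by simpa [hD] using hD0 x hx
  have hp : HasDerivAt p (1 / 2 * (F x + 1) - p x ^ 2) x :=
    (((hψ₂ x hxJ).const_mul C₁).fun_sub (hψ₁ x hxJ)).div_riccati_of_linear
      ((hψ₁'' x hxJ).const_mul_sub_of_linear C₁ (hψ₂'' x hxJ)) (hψden x hx)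
  have hq : HasDerivAt q (1 / 2 * (F x - 1) - q x ^ 2) x :=
    (((hθ₂ x hxJ).const_mul C₂).fun_sub (hθ₁ x hxJ)).div_riccati_of_linear
      ((hθ₁'' x hxJ).const_mul_sub_of_linear C₂ (hθ₂'' x hxJ)) (hθden x hx)
  have hab : 1 / 2 * (F x + 1) - 1 / 2 * (F x - 1) = 1 := by ring
  refine ⟨hasDerivAt_one_div_sub_of_riccati hp hq hab hpq hu_pq,
    (hasDerivAt_deriv_one_div_sub_of_riccati hp hq hab hpq hu_pq).congr_deriv (by ring),
    by simpa [hu_pq] using hpq, ?_⟩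
  exact painleveGambier27_of_mul_sub_eq_one (by simp [hu_pq, hpq]) rfl rfl

/-- if `ψ₁, ψ₂` solve `ψ'' = (1/2)(F+1)ψ`, `θ₁, θ₂` solve
`θ'' = (1/2)(F−1)θ`, and on `J₀ ⊆ J` the quantities `C₁ψ₂ − ψ₁`, `C₂θ₂ − θ₁` and
`D = (C₁ψ₂' − ψ₁')/(C₁ψ₂ − ψ₁) − (C₂θ₂' − θ₁')/(C₂θ₂ − θ₁)` never vanish, then
`u = 1/D` is twice differentiable, nowhere zero on `J₀`, and solves the
Painlevé–Gambier XXVII equation there. -/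
theorem statement14 (J J₀ : Set ℝ) (hJ₀ : J₀ ⊆ J)
    (F : ℝ → ℝ) (hF : ContinuousOn F J)
    (ψ₁ ψ₂ θ₁ θ₂ dψ₁ dψ₂ dθ₁ dθ₂ : ℝ → ℝ)
    (hψ₁ : ∀ x ∈ J, HasDerivAt ψ₁ (dψ₁ x) x)
    (hψ₁'' : ∀ x ∈ J, HasDerivAt dψ₁ ((1 / 2) * (F x + 1) * ψ₁ x) x)
    (hψ₂ : ∀ x ∈ J, HasDerivAt ψ₂ (dψ₂ x) x)
    (hψ₂'' : ∀ x ∈ J, HasDerivAt dψ₂ ((1 / 2) * (F x + 1) * ψ₂ x) x)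
    (hθ₁ : ∀ x ∈ J, HasDerivAt θ₁ (dθ₁ x) x)
    (hθ₁'' : ∀ x ∈ J, HasDerivAt dθ₁ ((1 / 2) * (F x - 1) * θ₁ x) x)
    (hθ₂ : ∀ x ∈ J, HasDerivAt θ₂ (dθ₂ x) x)
    (hθ₂'' : ∀ x ∈ J, HasDerivAt dθ₂ ((1 / 2) * (F x - 1) * θ₂ x) x)
    (C₁ C₂ : ℝ)
    (hψden : ∀ x ∈ J₀, C₁ * ψ₂ x - ψ₁ x ≠ 0)
    (hθden : ∀ x ∈ J₀, C₂ * θ₂ x - θ₁ x ≠ 0)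
    (D : ℝ → ℝ)
    (hD : D = fun x =>
      (C₁ * dψ₂ x - dψ₁ x) / (C₁ * ψ₂ x - ψ₁ x) -
        (C₂ * dθ₂ x - dθ₁ x) / (C₂ * θ₂ x - θ₁ x))
    (hD0 : ∀ x ∈ J₀, D x ≠ 0)
    (u : ℝ → ℝ) (hu : u = fun x => 1 / D x) :
    ∃ u' u'' : ℝ → ℝ, ∀ x ∈ J₀,
      HasDerivAt u (u' x) x ∧ HasDerivAt u' (u'' x) x ∧ u x ≠ 0 ∧
      u'' x - (u' x) ^ 2 / (2 * u x) + 2 * u x * u' x + (u x) ^ 3 / 2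
        - F x * u x + 1 / (2 * u x) = 0 :=
  statement14_general J J₀ hJ₀ F ψ₁ ψ₂ θ₁ θ₂ dψ₁ dψ₂ dθ₁ dθ₂ hψ₁ hψ₁'' hψ₂ hψ₂'' hθ₁ hθ₁'' hθ₂ hθ₂''
    C₁ C₂ hψden hθden D hD hD0 u hu
end

section
/- Let F : J → ℝ be continuous on an interval J, let u : J → ℝ be a twice differentiable, nowhere-vanishing solution of u'' − u'²/(2u) + 2uu' + u³/2 − F(x)·u + 1/(2u) = 0, and let ψ₁, ψ₂ : J → ℝ be twice differentiable solutions of ψ'' = (1/2)(F(x)+1)·ψ. Then on every subinterval where (u² + u' + 1)·ψ₂ − 2u·ψ₂' ≠ 0, the function I₁(x) = ( (u(x)² + u'(x) + 1)·ψ₁(x) − 2u(x)·ψ₁'(x) ) / ( (u(x)² + u'(x) + 1)·ψ₂(x) − 2u(x)·ψ₂'(x) ) has zero derivative, i.e. I₁ is a first integral of the equation. -/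
/-! For a solution `ψ` of `ψ'' = ½(F + 1)ψ`, the combination `N = (u² + u' + 1)ψ − 2uψ'` satisfies
the first-order linear equation `N' = λN` with `λ = (u' − u² − 1)/(2u)`, independent of `ψ`: comparing
the coefficients of `ψ` in `N'` and `λN` gives exactly `2u` times the Painlevé–Gambier XXVII equation. Two solutions of the same equation
`N' = λN` have a constant ratio, so `I₁ = N₁/N₂` is a first integral. -/

theorem HasDerivAt.div_eq_zero_of_logDeriv_eq {𝕜 : Type*} [NontriviallyNormedField 𝕜]
    {f g : 𝕜 → 𝕜} {x c : 𝕜} (hf : HasDerivAt f (c * f x) x) (hg : HasDerivAt g (c * g x) x)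
    (hgx : g x ≠ 0) : HasDerivAt (fun t => f t / g t) 0 x :=
  (hf.div hg hgx).congr_deriv (by ring)

namespace PainleveGambierXXVII

def pairing (u u' ψ dψ : ℝ → ℝ) (t : ℝ) : ℝ :=
  (u t ^ 2 + u' t + 1) * ψ t - 2 * u t * dψ t

theorem hasDerivAt_pairing {u u' ψ dψ : ℝ → ℝ} {x u'' f : ℝ}
    (hu : HasDerivAt u (u' x) x) (hu' : HasDerivAt u' u'' x)
    (hψ : HasDerivAt ψ (dψ x) x) (hdψ : HasDerivAt dψ (1 / 2 * (f + 1) * ψ x) x)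
    (hu0 : u x ≠ 0)
    (hode : u'' - u' x ^ 2 / (2 * u x) + 2 * u x * u' x + u x ^ 3 / 2
      - f * u x + 1 / (2 * u x) = 0) :
    HasDerivAt (pairing u u' ψ dψ) ((u' x - u x ^ 2 - 1) / (2 * u x) * pairing u u' ψ dψ x) x := by
  have hN := ((((hu.pow 2).add hu').add_const 1).mul hψ).sub ((hu.const_mul 2).mul hdψ)
  refine hN.congr_deriv ?_
  have hcleared : 2 * u x * u'' - u' x ^ 2 + 4 * u x ^ 2 * u' x + u x ^ 4 - 2 * f * u x ^ 2 + 1 = 0 := by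
    field_simp at hode
    linear_combination hode
  simp only [pairing, Pi.add_apply, Pi.pow_apply]
  field_simp
  linear_combination ψ x * hcleared

end PainleveGambierXXVII

open PainleveGambierXXVII in
theorem statement15_general (J : Set ℝ)
    (F : ℝ → ℝ)
    (u u' u'' : ℝ → ℝ)
    (hu : ∀ x ∈ J, HasDerivAt u (u' x) x)
    (hu' : ∀ x ∈ J, HasDerivAt u' (u'' x) x)
    (hu0 : ∀ x ∈ J, u x ≠ 0)
    (hode : ∀ x ∈ J,
      u'' x - (u' x) ^ 2 / (2 * u x) + 2 * u x * u' x + (u x) ^ 3 / 2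
        - F x * u x + 1 / (2 * u x) = 0)
    (ψ₁ ψ₂ dψ₁ dψ₂ : ℝ → ℝ)
    (hψ₁ : ∀ x ∈ J, HasDerivAt ψ₁ (dψ₁ x) x)
    (hψ₁'' : ∀ x ∈ J, HasDerivAt dψ₁ ((1 / 2) * (F x + 1) * ψ₁ x) x)
    (hψ₂ : ∀ x ∈ J, HasDerivAt ψ₂ (dψ₂ x) x)
    (hψ₂'' : ∀ x ∈ J, HasDerivAt dψ₂ ((1 / 2) * (F x + 1) * ψ₂ x) x) :
    ∀ x ∈ J, ((u x) ^ 2 + u' x + 1) * ψ₂ x - 2 * u x * dψ₂ x ≠ 0 →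
      HasDerivAt (fun t =>
        (((u t) ^ 2 + u' t + 1) * ψ₁ t - 2 * u t * dψ₁ t) /
          (((u t) ^ 2 + u' t + 1) * ψ₂ t - 2 * u t * dψ₂ t)) 0 x := by
  intro x hx hN₂
  exact HasDerivAt.div_eq_zero_of_logDeriv_eq
    (hasDerivAt_pairing (hu x hx) (hu' x hx) (hψ₁ x hx) (hψ₁'' x hx) (hu0 x hx) (hode x hx))
    (hasDerivAt_pairing (hu x hx) (hu' x hx) (hψ₂ x hx) (hψ₂'' x hx) (hu0 x hx) (hode x hx)) hN₂

/-- if `u` is a nowhere-vanishing solution of the Painlevé–Gambier XXVII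
equation and `ψ₁, ψ₂` solve `ψ'' = (1/2)(F+1)ψ`, then wherever
`(u² + u' + 1)ψ₂ − 2uψ₂' ≠ 0` the function
`I₁ = ((u² + u' + 1)ψ₁ − 2uψ₁')/((u² + u' + 1)ψ₂ − 2uψ₂')` has zero derivative,
i.e. `I₁` is a first integral of the equation. -/
theorem statement15 (J : Set ℝ)
    (F : ℝ → ℝ) (hF : ContinuousOn F J)
    (u u' u'' : ℝ → ℝ)
    (hu : ∀ x ∈ J, HasDerivAt u (u' x) x)
    (hu' : ∀ x ∈ J, HasDerivAt u' (u'' x) x)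
    (hu0 : ∀ x ∈ J, u x ≠ 0)
    (hode : ∀ x ∈ J,
      u'' x - (u' x) ^ 2 / (2 * u x) + 2 * u x * u' x + (u x) ^ 3 / 2
        - F x * u x + 1 / (2 * u x) = 0)
    (ψ₁ ψ₂ dψ₁ dψ₂ : ℝ → ℝ)
    (hψ₁ : ∀ x ∈ J, HasDerivAt ψ₁ (dψ₁ x) x)
    (hψ₁'' : ∀ x ∈ J, HasDerivAt dψ₁ ((1 / 2) * (F x + 1) * ψ₁ x) x)
    (hψ₂ : ∀ x ∈ J, HasDerivAt ψ₂ (dψ₂ x) x)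
    (hψ₂'' : ∀ x ∈ J, HasDerivAt dψ₂ ((1 / 2) * (F x + 1) * ψ₂ x) x) :
    ∀ x ∈ J, ((u x) ^ 2 + u' x + 1) * ψ₂ x - 2 * u x * dψ₂ x ≠ 0 →
      HasDerivAt (fun t =>
        (((u t) ^ 2 + u' t + 1) * ψ₁ t - 2 * u t * dψ₁ t) /
          (((u t) ^ 2 + u' t + 1) * ψ₂ t - 2 * u t * dψ₂ t)) 0 x :=
  statement15_general J F u u' u'' hu hu' hu0 hode ψ₁ ψ₂ dψ₁ dψ₂ hψ₁ hψ₁'' hψ₂ hψ₂''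
end

section
/- For any C₁, C₂ ∈ ℝ, the function u(x) = √2 / ( tanh( (√2/2)(x + 2C₁) ) − tan( (√2/2)(−x + 2C₂) ) ) is twice differentiable and satisfies u'' − u'²/(2u) + 2uu' + u³/2 + 1/(2u) = 0 on every interval where (√2/2)(−x + 2C₂) avoids the poles of the tangent (i.e. is not of the form π/2 + kπ) and the denominator tanh((√2/2)(x+2C₁)) − tan((√2/2)(−x+2C₂)) is nonzero. -/
/-!
With `k = √2/2`, the functions `T z = tanh (k (z + 2C₁))` and `S z = tan (k (-z + 2C₂))` solve
the Riccati equations `T' = k (1 - T²)` and `S' = -k (1 + S²)`. Hence for `u = 2k / (T - S)`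
both `u'` and `u''` are rational functions of `T` and `S`, and substituting them into the
equation leaves a rational expression in `T`, `S` that vanishes identically once `2k² = 1`.
-/

open Real Filter Topology

lemma Real.hasDerivAt_tanh (x : ℝ) : HasDerivAt tanh (1 - tanh x ^ 2) x := by
  have h := (hasDerivAt_sinh x).div (hasDerivAt_cosh x) (cosh_pos x).ne'
  rw [show tanh = fun y => sinh y / cosh y from funext tanh_eq_sinh_div_cosh]
  refine h.congr_deriv ?_
  rw [div_pow]
  field_simp [(cosh_pos x).ne']

lemma hasDerivAt_tanh_mul_add (k c y : ℝ) :
    HasDerivAt (fun z => tanh (k * (z + c))) (k * (1 - tanh (k * (y + c)) ^ 2)) y :=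
  ((hasDerivAt_tanh _).comp y (((hasDerivAt_id y).add_const c).const_mul k)).congr_deriv
    (by simp only [id, mul_one]; ring)

lemma hasDerivAt_tan_mul_neg_add {k c y : ℝ} (h : cos (k * (-y + c)) ≠ 0) :
    HasDerivAt (fun z => tan (k * (-z + c))) (-(k * (1 + tan (k * (-y + c)) ^ 2))) y := by
  have := (hasDerivAt_tan h).comp y (((hasDerivAt_neg y).add_const c).const_mul k)
  rw [one_div, ← inv_one_add_tan_sq h, inv_inv] at this
  exact this.congr_deriv (by ring)

lemma eventually_hasDerivAt_tan_mul_neg_add {k c x : ℝ} (h : cos (k * (-x + c)) ≠ 0) :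
    ∀ᶠ z in 𝓝 x,
      HasDerivAt (fun z => tan (k * (-z + c))) (-(k * (1 + tan (k * (-z + c)) ^ 2))) z := by
  have hcont : ContinuousAt (fun z => cos (k * (-z + c))) x := by fun_prop
  filter_upwards [hcont.eventually_ne h] with z hz
  exact hasDerivAt_tan_mul_neg_add hz

noncomputable def painleveGambierXXVIIResidual (u u' u'' : ℝ) : ℝ :=
  u'' - u' ^ 2 / (2 * u) + 2 * u * u' + u ^ 3 / 2 + 1 / (2 * u)

/- Cleared of denominators, the residual is `(1 - 4 k⁴) (t - s)⁴`. -/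
lemma painleveGambierXXVIIResidual_two_mul_div_sub {k t s : ℝ} (hk : 2 * k ^ 2 = 1)
    (hts : t - s ≠ 0) :
    painleveGambierXXVIIResidual (2 * k / (t - s))
      (-(2 * k ^ 2) * (2 - t ^ 2 + s ^ 2) / (t - s) ^ 2)
      (4 * k ^ 3 * ((t - t ^ 3 + s + s ^ 3) * (t - s) + (2 - t ^ 2 + s ^ 2) ^ 2) / (t - s) ^ 3)
      = 0 := by
  have hk0 : k ≠ 0 := by rintro rfl; norm_num at hk
  unfold painleveGambierXXVIIResidual
  field_simp
  linear_combination (-(2 * k ^ 2 + 1) * (t - s) ^ 4) * hk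

section Riccati

variable {T S : ℝ → ℝ} {k y : ℝ}

lemma hasDerivAt_two_mul_div_sub (hT : HasDerivAt T (k * (1 - T y ^ 2)) y)
    (hS : HasDerivAt S (-(k * (1 + S y ^ 2))) y) (hTS : T y - S y ≠ 0) :
    HasDerivAt (fun z => 2 * k / (T z - S z))
      (-(2 * k ^ 2) * (2 - T y ^ 2 + S y ^ 2) / (T y - S y) ^ 2) y :=
  ((hasDerivAt_const y (2 * k)).div (hT.fun_sub hS) hTS).congr_deriv (by ring)

lemma hasDerivAt_deriv_two_mul_div_sub (hT : HasDerivAt T (k * (1 - T y ^ 2)) y)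
    (hS : HasDerivAt S (-(k * (1 + S y ^ 2))) y) (hTS : T y - S y ≠ 0) :
    HasDerivAt (fun z => -(2 * k ^ 2) * (2 - T z ^ 2 + S z ^ 2) / (T z - S z) ^ 2)
      (4 * k ^ 3 * ((T y - T y ^ 3 + S y + S y ^ 3) * (T y - S y)
        + (2 - T y ^ 2 + S y ^ 2) ^ 2) / (T y - S y) ^ 3) y := by
  have hN := (((hasDerivAt_const y 2).fun_sub (hT.fun_pow 2)).fun_add (hS.fun_pow 2)).const_mul
    (-(2 * k ^ 2))
  refine (hN.div ((hT.fun_sub hS).fun_pow 2) (pow_ne_zero 2 hTS)).congr_deriv ?_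
  field_simp
  ring

theorem painleveGambierXXVII_two_mul_div_sub {x : ℝ} (hk : 2 * k ^ 2 = 1)
    (hT : ∀ᶠ z in 𝓝 x, HasDerivAt T (k * (1 - T z ^ 2)) z)
    (hS : ∀ᶠ z in 𝓝 x, HasDerivAt S (-(k * (1 + S z ^ 2))) z) (hTS : T x - S x ≠ 0) :
    let u := fun z => 2 * k / (T z - S z)
    DifferentiableAt ℝ u x ∧ DifferentiableAt ℝ (deriv u) x ∧
      painleveGambierXXVIIResidual (u x) (deriv u x) (deriv (deriv u) x) = 0 := by
  intro u
  have hTS' : ∀ᶠ z in 𝓝 x, T z - S z ≠ 0 :=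
    (hT.self_of_nhds.continuousAt.sub hS.self_of_nhds.continuousAt).eventually_ne hTS
  have hu' : deriv u =ᶠ[𝓝 x]
      fun z => -(2 * k ^ 2) * (2 - T z ^ 2 + S z ^ 2) / (T z - S z) ^ 2 := by
    filter_upwards [hT, hS, hTS'] with z hTz hSz hTSz
    exact (hasDerivAt_two_mul_div_sub hTz hSz hTSz).deriv
  have hu := hasDerivAt_two_mul_div_sub hT.self_of_nhds hS.self_of_nhds hTS
  have hu'' := (hasDerivAt_deriv_two_mul_div_sub hT.self_of_nhds hS.self_of_nhds hTS
    ).congr_of_eventuallyEq hu'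
  refine ⟨hu.differentiableAt, hu''.differentiableAt, ?_⟩
  rw [hu''.deriv, hu.deriv]
  exact painleveGambierXXVIIResidual_two_mul_div_sub hk hTS

end Riccati

/-- for any `C₁, C₂ ∈ ℝ`, the function
`u(x) = √2/(tanh((√2/2)(x + 2C₁)) − tan((√2/2)(−x + 2C₂)))` is twice differentiable and
satisfies `u'' − u'²/(2u) + 2uu' + u³/2 + 1/(2u) = 0` at every point where
`(√2/2)(−x + 2C₂)` is not a pole of the tangent (not of the form `π/2 + kπ`) and the
denominator is nonzero. -/
theorem statement16 (C₁ C₂ : ℝ) (u : ℝ → ℝ)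
    (hu : u = fun x =>
      Real.sqrt 2 /
        (Real.tanh (Real.sqrt 2 / 2 * (x + 2 * C₁)) -
          Real.tan (Real.sqrt 2 / 2 * (-x + 2 * C₂)))) :
    ∀ x : ℝ,
      (∀ k : ℤ, Real.sqrt 2 / 2 * (-x + 2 * C₂) ≠ π / 2 + k * π) →
      Real.tanh (Real.sqrt 2 / 2 * (x + 2 * C₁)) -
        Real.tan (Real.sqrt 2 / 2 * (-x + 2 * C₂)) ≠ 0 →
      DifferentiableAt ℝ u x ∧ DifferentiableAt ℝ (deriv u) x ∧
      deriv (deriv u) x - (deriv u x) ^ 2 / (2 * u x) + 2 * u x * deriv u x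
        + (u x) ^ 3 / 2 + 1 / (2 * u x) = 0 := by
  intro x hpole hTS
  set k := Real.sqrt 2 / 2
  have hk : 2 * k ^ 2 = 1 := by
    rw [div_pow, sq_sqrt zero_le_two]; norm_num
  have hcos : cos (k * (-x + 2 * C₂)) ≠ 0 :=
    cos_ne_zero_iff.mpr fun n hn => hpole n (by rw [hn]; ring)
  have hu' : u = fun z => 2 * k / (tanh (k * (z + 2 * C₁)) - tan (k * (-z + 2 * C₂))) := by
    rw [hu, mul_div_cancel₀ _ two_ne_zero]
  rw [hu']
  exact painleveGambierXXVII_two_mul_div_sub hk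
    (Eventually.of_forall fun z => hasDerivAt_tanh_mul_add k (2 * C₁) z)
    (eventually_hasDerivAt_tan_mul_neg_add hcos) hTS
end

section
/- Let φ(x,u,p) = −( p/u + 1/u + u ), the right-hand side of the equation u'' + u'/u + 1/u + u = 0. Then: (a) λ₂ = (p + 1)/u satisfies the λ-symmetry determining equation ∂_xλ + p·∂_uλ + φ·∂_pλ + λ² = ∂_uφ + λ·∂_pφ on the open set {(x,u,p) : u ≠ 0}; (b) λ₁ = −( 1/u + (u² + 1)/(p·u) ) satisfies the same determining equation on the open set {(x,u,p) : u ≠ 0, p ≠ 0}. Hence (∂_u, λ₁) and (∂_u, λ₂) are λ-symmetries of the equation. -/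
/-! None of φ, λ₁, λ₂ depends on x, so ∂_xλ = 0 and the determining equation only involves
the u- and p-derivatives. Once these are computed, the equation becomes an identity between
rational functions of u and p, which holds after clearing the denominators u and p. -/

noncomputable section

open ContinuousLinearMap

local notation "du" => (proj 1 : (Fin 3 → ℝ) →L[ℝ] ℝ)
local notation "dp" => (proj 2 : (Fin 3 → ℝ) →L[ℝ] ℝ)

theorem pd_eq_of_hasFDerivAt {f : (Fin 3 → ℝ) → ℝ} {f' : (Fin 3 → ℝ) →L[ℝ] ℝ}
    {q : Fin 3 → ℝ} (h : HasFDerivAt f f' q) (i : Fin 3) : pd i f q = f' (Pi.single i 1) := by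
  rw [pd, h.fderiv]

theorem determiningEq_of_hasFDerivAt {φ lam : (Fin 3 → ℝ) → ℝ} {q : Fin 3 → ℝ}
    {φu φp lu lp : ℝ} (hφ : HasFDerivAt φ (φu • du + φp • dp) q)
    (hlam : HasFDerivAt lam (lu • du + lp • dp) q)
    (h : q 2 * lu + φ q * lp + lam q ^ 2 = φu + lam q * φp) :
    pd 0 lam q + q 2 * pd 1 lam q + φ q * pd 2 lam q + lam q ^ 2 =
      pd 1 φ q + lam q * pd 2 φ q := by
  simp only [pd_eq_of_hasFDerivAt hφ, pd_eq_of_hasFDerivAt hlam]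
  simpa using h

theorem hasFDerivAt_inv_apply {ι : Type*} [Fintype ι] {q : ι → ℝ} {i : ι} (hq : q i ≠ 0) :
    HasFDerivAt (fun q : ι → ℝ => (q i)⁻¹) (-(q i ^ 2)⁻¹ • (proj i : (ι → ℝ) →L[ℝ] ℝ)) q :=
  (hasDerivAt_inv hq).comp_hasFDerivAt q (hasFDerivAt_apply i q)

section

variable {q : Fin 3 → ℝ}

theorem hasFDerivAt_rhs (hu : q 1 ≠ 0) :
    HasFDerivAt (fun q : Fin 3 → ℝ => -(q 2 / q 1 + 1 / q 1 + q 1))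
      (((q 2 + 1) / q 1 ^ 2 - 1) • du + (-1 / q 1) • dp) q := by
  simp only [div_eq_mul_inv, one_mul]
  refine ((((hasFDerivAt_apply 2 q).fun_mul (hasFDerivAt_inv_apply hu)).fun_add
    (hasFDerivAt_inv_apply hu)).fun_add (hasFDerivAt_apply 1 q)).fun_neg.congr_fderiv ?_
  ext v
  simp only [add_apply, neg_apply, smul_apply, proj_apply, smul_eq_mul]
  ring

theorem hasFDerivAt_lam₂ (hu : q 1 ≠ 0) :
    HasFDerivAt (fun q : Fin 3 → ℝ => (q 2 + 1) / q 1)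
      ((-(q 2 + 1) / q 1 ^ 2) • du + (1 / q 1) • dp) q := by
  simp only [div_eq_mul_inv]
  refine (((hasFDerivAt_apply 2 q).add_const 1).fun_mul
    (hasFDerivAt_inv_apply hu)).congr_fderiv ?_
  ext v
  simp only [add_apply, smul_apply, proj_apply, smul_eq_mul]
  ring

theorem hasFDerivAt_lam₁ (hu : q 1 ≠ 0) (hp : q 2 ≠ 0) :
    HasFDerivAt (fun q : Fin 3 → ℝ => -(1 / q 1 + ((q 1) ^ 2 + 1) / (q 2 * q 1)))
      ((1 / q 1 ^ 2 - (1 - 1 / q 1 ^ 2) / q 2) • du +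
        ((q 1 ^ 2 + 1) / (q 2 ^ 2 * q 1)) • dp) q := by
  have hpu : HasFDerivAt (fun q : Fin 3 → ℝ => (q 2 * q 1)⁻¹)
      (-((q 2 * q 1) ^ 2)⁻¹ • (q 2 • du + q 1 • dp)) q :=
    (hasDerivAt_inv (mul_ne_zero hp hu)).comp_hasFDerivAt q
      ((hasFDerivAt_apply 2 q).fun_mul (hasFDerivAt_apply 1 q))
  simp only [div_eq_mul_inv, one_mul]
  refine ((hasFDerivAt_inv_apply hu).fun_add
    ((((hasFDerivAt_apply 1 q).pow 2).add_const 1).fun_mul hpu)).fun_neg.congr_fderiv ?_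
  ext v
  simp only [add_apply, neg_apply, smul_apply, proj_apply, smul_eq_mul, nsmul_eq_mul]
  field_simp
  ring

end

/-- for `φ = −(p/u + 1/u + u)` (the equation `u'' + u'/u + 1/u + u = 0`):
(a) `λ₂ = (p + 1)/u` satisfies the determining equation on `{u ≠ 0}`;
(b) `λ₁ = −(1/u + (u² + 1)/(pu))` satisfies it on `{u ≠ 0, p ≠ 0}`.
Hence `(∂_u,λ₁)` and `(∂_u,λ₂)` are λ-symmetries of the equation. -/
theorem statement19 (φ lam₁ lam₂ : (Fin 3 → ℝ) → ℝ)
    (hφ : φ = fun q => -(q 2 / q 1 + 1 / q 1 + q 1))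
    (hlam₂ : lam₂ = fun q => (q 2 + 1) / q 1)
    (hlam₁ : lam₁ = fun q => -(1 / q 1 + ((q 1) ^ 2 + 1) / (q 2 * q 1))) :
    (∀ q : Fin 3 → ℝ, q 1 ≠ 0 →
      pd 0 lam₂ q + q 2 * pd 1 lam₂ q + φ q * pd 2 lam₂ q + (lam₂ q) ^ 2 =
        pd 1 φ q + lam₂ q * pd 2 φ q) ∧
    (∀ q : Fin 3 → ℝ, q 1 ≠ 0 → q 2 ≠ 0 →
      pd 0 lam₁ q + q 2 * pd 1 lam₁ q + φ q * pd 2 lam₁ q + (lam₁ q) ^ 2 =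
        pd 1 φ q + lam₁ q * pd 2 φ q) := by
  subst hφ hlam₂ hlam₁
  refine ⟨fun q hu => determiningEq_of_hasFDerivAt (hasFDerivAt_rhs hu) (hasFDerivAt_lam₂ hu) ?_,
    fun q hu hp => determiningEq_of_hasFDerivAt (hasFDerivAt_rhs hu) (hasFDerivAt_lam₁ hu hp) ?_⟩
  · field_simp
    ring
  · field_simp
    ring
end
end
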